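/- arXiv:1801.00413 — 4 statements merged into one kernel-verified Lean document; each statement's English description precedes it below -/
import Mathlib

section
/- Kemeny's constant of an ergodic Markov chain equals 1 + σ_{n-2}/σ_{n-1}, where σ_k is the total weight of in-forests with k arcs in the weighted digraph corresponding to the chain; equivalently, Σ_j π_j·m_ij = 1 + σ_{n-2}/σ_{n-1} independently of i (where m_jj is the mean return time). -/
open Finset Relation Matrix
open scoped Classical

/-- `T` is a (row-)stochastic matrix. -/
def IsStochastic {n : ℕ} (T : Matrix (Fin n) (Fin n) ℝ) : Prop :=
  (∀ i j, 0 ≤ T i j) ∧ ∀ i, ∑ j, T i j = 1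

/-- Irreducibility of a Markov chain: every state leads to every state. -/
def IsIrreducibleMC {n : ℕ} (T : Matrix (Fin n) (Fin n) ℝ) : Prop :=
  ∀ i j, Relation.TransGen (fun a b => 0 < T a b) i j

/-- `pi` is the stationary distribution of `T`. -/
def IsStationaryDist {n : ℕ} (T : Matrix (Fin n) (Fin n) ℝ) (pi : Fin n → ℝ) : Prop :=
  (∀ i, 0 ≤ pi i) ∧ (∑ i, pi i) = 1 ∧ ∀ j, ∑ i, pi i * T i j = pi j

/-- The step relation of a set `A` of arcs. -/
def arcStep {n : ℕ} (A : Finset (Fin n × Fin n)) (x y : Fin n) : Prop := (x, y) ∈ A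

/-- `A` is an in-forest: no loops, out-degree at most one, and no directed cycles;
equivalently, every weak component is a converging tree. -/
def IsInForest {n : ℕ} (A : Finset (Fin n × Fin n)) : Prop :=
  (∀ a ∈ A, a.1 ≠ a.2) ∧
  (∀ v : Fin n, (A.filter fun a => a.1 = v).card ≤ 1) ∧
  ∀ v : Fin n, ¬ Relation.TransGen (arcStep A) v v

/-- `j` is a root (no outgoing arc) of the arc set `A`. -/
def IsRootOf {n : ℕ} (A : Finset (Fin n × Fin n)) (j : Fin n) : Prop := ∀ a ∈ A, a.1 ≠ j

/-- In the in-forest `A`, vertex `i` belongs to the tree converging to the root `j`. -/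
def InTreeOf {n : ℕ} (A : Finset (Fin n × Fin n)) (i j : Fin n) : Prop :=
  IsRootOf A j ∧ Relation.ReflTransGen (arcStep A) i j

/-- The weight of an arc set: the product of its arc weights. -/
noncomputable def digraphWeight {n : ℕ} (W : Matrix (Fin n) (Fin n) ℝ)
    (A : Finset (Fin n × Fin n)) : ℝ :=
  ∏ a ∈ A, W a.1 a.2

/-- Total weight of the in-forests satisfying the predicate `P`. -/
noncomputable def forestWeight {n : ℕ} (W : Matrix (Fin n) (Fin n) ℝ)
    (P : Finset (Fin n × Fin n) → Prop) : ℝ :=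
  ∑ A : Finset (Fin n × Fin n), if IsInForest A ∧ P A then digraphWeight W A else 0

/-- `σ_k`: total weight of in-forests with `k` arcs. -/
noncomputable def sigmaF {n : ℕ} (W : Matrix (Fin n) (Fin n) ℝ) (k : ℕ) : ℝ :=
  forestWeight W fun A => A.card = k

/-- `q^(k)_{ij}`: total weight of in-forests with `k` arcs in which vertex `i`
belongs to the tree converging to `j`. -/
noncomputable def qF {n : ℕ} (W : Matrix (Fin n) (Fin n) ℝ) (k : ℕ) (i j : Fin n) : ℝ :=
  forestWeight W fun A => A.card = k ∧ InTreeOf A i j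

/-- `q_j`: total weight of spanning trees converging to `j`. -/
noncomputable def treeW {n : ℕ} (W : Matrix (Fin n) (Fin n) ℝ) (j : Fin n) : ℝ :=
  qF W (n - 1) j j

/-- `f_{ij}`: total weight of 2-tree in-forests having one tree containing `i`
and the other tree converging to `j`. -/
noncomputable def fF {n : ℕ} (W : Matrix (Fin n) (Fin n) ℝ) (i j : Fin n) : ℝ :=
  forestWeight W fun A =>
    A.card = n - 2 ∧ IsRootOf A j ∧ ¬ Relation.ReflTransGen (arcStep A) i j

/-- `X` is the group inverse of `L`. -/
def IsGroupInverse {n : ℕ} (L X : Matrix (Fin n) (Fin n) ℝ) : Prop :=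
  L * X * L = L ∧ X * L * X = X ∧ L * X = X * L

/-- `M` is the matrix of mean first passage times (with `M j j` the mean return time):
the standard first-step equations. -/
def IsMFPTMatrix {n : ℕ} (T M : Matrix (Fin n) (Fin n) ℝ) : Prop :=
  ∀ i j, M i j = 1 + ∑ k ∈ Finset.univ.filter (fun k => k ≠ j), T i k * M k j

/-- `m` is the hitting-time function with `m i i = 0`. -/
def IsHittingTime {n : ℕ} (T : Matrix (Fin n) (Fin n) ℝ) (m : Fin n → Fin n → ℝ) : Prop :=
  (∀ i, m i i = 0) ∧ ∀ i j, i ≠ j → m i j = 1 + ∑ k, T i k * m k j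

/-- The Laplacian matrix of the weight matrix `W`. -/
noncomputable def lap {n : ℕ} (W : Matrix (Fin n) (Fin n) ℝ) : Matrix (Fin n) (Fin n) ℝ :=
  Matrix.diagonal (fun i => ∑ j, W i j) - W

namespace Stmt5Aux

variable {n : ℕ}

lemma transGen_of_chain {α : Type*} (R : α → α → Prop) (g : ℕ → α)
    (h : ∀ m, R (g m) (g (m + 1))) (a t : ℕ) : TransGen R (g a) (g (a + t + 1)) := by
  induction t with
  | zero => exact TransGen.single (h a)
  | succ t ih => exact TransGen.tail ih (h (a + t + 1))

lemma exists_cycle {α : Type*} [Fintype α] (R : α → α → Prop)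
    (f : α → α) (S : Finset α) (hmap : ∀ i ∈ S, f i ∈ S) (hR : ∀ i ∈ S, R i (f i))
    (a₀ : α) (ha₀ : a₀ ∈ S) : ∃ v, TransGen R v v := by
  have hgS : ∀ m, f^[m] a₀ ∈ S := by
    intro m; induction m with
    | zero => exact ha₀
    | succ m ih => rw [Function.iterate_succ_apply']; exact hmap _ ih
  have hstep : ∀ m, R (f^[m] a₀) (f^[m + 1] a₀) := by
    intro m; rw [Function.iterate_succ_apply']; exact hR _ (hgS m)
  obtain ⟨a, b, hab, heq⟩ := Finite.exists_ne_map_eq_of_infinite (fun m => f^[m] a₀)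
  rcases Nat.lt_or_gt_of_ne hab with h | h
  · obtain ⟨t, rfl⟩ : ∃ t, b = a + t + 1 := ⟨b - a - 1, by omega⟩
    have := transGen_of_chain R (fun m => f^[m] a₀) hstep a t
    rw [← heq] at this; exact ⟨_, this⟩
  · obtain ⟨t, rfl⟩ : ∃ t, a = b + t + 1 := ⟨a - b - 1, by omega⟩
    have := transGen_of_chain R (fun m => f^[m] a₀) hstep b t
    rw [heq] at this; exact ⟨_, this⟩

/-- step relation of a partial function -/
def pstep (p : Fin n → Option (Fin n)) (a b : Fin n) : Prop := p a = some b

/-- the 0-1 matrix with rows `e_i - e_{p i}` -/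
noncomputable def Emat (p : Fin n → Option (Fin n)) : Matrix (Fin n) (Fin n) ℝ :=
  Matrix.of fun i j => (if i = j then (1 : ℝ) else 0) - (if p i = some j then (1 : ℝ) else 0)

lemma det_Emat_of_cycle (p : Fin n → Option (Fin n)) (v : Fin n)
    (hv : TransGen (pstep p) v v) : (Emat p).det = 0 := by
  classical
  apply Matrix.exists_vecMul_eq_zero_iff.mp
  set C : Finset (Fin n) :=
    univ.filter (fun u => ReflTransGen (pstep p) v u ∧ ReflTransGen (pstep p) u v) with hC
  have hmemC : ∀ u, u ∈ C ↔ ReflTransGen (pstep p) v u ∧ ReflTransGen (pstep p) u v := by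
    intro u; simp [hC]
  have hvC : v ∈ C := (hmemC v).mpr ⟨ReflTransGen.refl, ReflTransGen.refl⟩
  set g : Fin n → Fin n := fun u => (p u).getD u with hg
  have hgC : ∀ u ∈ C, p u = some (g u) ∧ g u ∈ C := by
    intro u hu
    rw [hmemC] at hu
    have h1 : TransGen (pstep p) u v := TransGen.trans_right hu.2 hv
    obtain ⟨w, huw, hwv⟩ := (TransGen.head'_iff).mp h1
    have hw : g u = w := by simp [hg, show p u = some w from huw]
    rw [hw]
    exact ⟨huw, (hmemC w).mpr ⟨ReflTransGen.tail hu.1 huw, hwv⟩⟩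
  have hsurj : ∀ j ∈ C, ∃ i ∈ C, g i = j := by
    intro j hj
    rw [hmemC] at hj
    have h1 : TransGen (pstep p) v j := TransGen.trans_left hv hj.1
    obtain ⟨i, hvi, hij⟩ := (TransGen.tail'_iff).mp h1
    have hiC : i ∈ C := (hmemC i).mpr ⟨hvi, ReflTransGen.head hij hj.2⟩
    refine ⟨i, hiC, ?_⟩
    have := (hgC i hiC).1
    rw [hij] at this; exact (Option.some_injective _ this.symm)
  have hinj : Set.InjOn g C := by
    intro a ha b hb hab
    exact Finset.inj_on_of_surj_on_of_card_le (s := C) (t := C) (fun a _ => g a)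
      (fun a ha => (hgC a ha).2) (fun b hb => by obtain ⟨i, hi, hgi⟩ := hsurj b hb; exact ⟨i, hi, hgi⟩)
      le_rfl ha hb hab
  have himage : C.image g = C := by
    apply Finset.eq_of_subset_of_card_le
    · intro x hx; obtain ⟨a, ha, rfl⟩ := Finset.mem_image.mp hx; exact (hgC a ha).2
    · rw [Finset.card_image_of_injOn hinj]
  refine ⟨fun u => if u ∈ C then (1 : ℝ) else 0, ?_, ?_⟩
  · intro h0
    have := congrFun h0 v
    simp [hvC] at this
  · funext j
    have : ∀ i, (if i ∈ C then (1 : ℝ) else 0) * Emat p i j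
        = (if i ∈ C then Emat p i j else 0) := by
      intro i; split <;> simp
    rw [Matrix.vecMul, Pi.zero_apply]
    simp only [dotProduct, this]
    rw [Finset.sum_ite_mem, Finset.univ_inter]
    have hsplit : ∀ i ∈ C, Emat p i j
        = (if i = j then (1 : ℝ) else 0) - (if g i = j then (1 : ℝ) else 0) := by
      intro i hi
      have hpi := (hgC i hi).1
      simp only [Emat, Matrix.of_apply, hpi, Option.some.injEq]
    rw [Finset.sum_congr rfl hsplit, Finset.sum_sub_distrib]
    have h2 : ∑ i ∈ C, (if g i = j then (1 : ℝ) else 0)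
        = ∑ i ∈ C, (if i = j then (1 : ℝ) else 0) := by
      conv_rhs => rw [← himage]
      rw [Finset.sum_image (fun x hx y hy => hinj hx hy)]
    rw [h2, sub_self]

lemma pstep_update_none {p : Fin n → Option (Fin n)} {i₀ : Fin n} {a b : Fin n}
    (h : pstep (Function.update p i₀ none) a b) : pstep p a b := by
  unfold pstep at h ⊢
  by_cases hai : a = i₀
  · subst hai; simp [Function.update_self] at h
  · rwa [Function.update_of_ne hai] at h

lemma det_Emat_acyclic_aux : ∀ (N : ℕ) (p : Fin n → Option (Fin n)),
    (univ.filter fun i => (p i).isSome).card = N →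
    (∀ v, ¬ TransGen (pstep p) v v) → (Emat p).det = 1 := by
  intro N
  induction N with
  | zero =>
    intro p hcard _
    have hnone : ∀ i, p i = none := by
      intro i
      by_contra h
      have hi : i ∈ univ.filter fun i => (p i).isSome := by
        simp [Option.isSome_iff_ne_none, h]
      rw [Finset.card_eq_zero] at hcard
      rw [hcard] at hi
      exact absurd hi (Finset.notMem_empty i)
    have : Emat p = 1 := by
      ext i j
      simp [Emat, hnone i, Matrix.one_apply]
    rw [this, Matrix.det_one]
  | succ N ih =>
    intro p hcard hacyc
    classical
    set S := univ.filter fun i => (p i).isSome with hS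
    -- find an exit arc i* -> k with p k = none
    have hSne : S.Nonempty := by
      rw [← Finset.card_pos, hcard]; omega
    set g : Fin n → Fin n := fun u => (p u).getD u with hg
    have hexit : ∃ i ∈ S, ∃ k, p i = some k ∧ p k = none := by
      by_contra hno
      push_neg at hno
      have hmap : ∀ i ∈ S, g i ∈ S := by
        intro i hi
        rw [hS, Finset.mem_filter] at hi
        obtain ⟨k, hk⟩ := Option.isSome_iff_exists.mp hi.2
        have hgk : g i = k := by rw [hg]; simp [hk]
        have := hno i (by rw [hS, Finset.mem_filter]; exact hi) k hk
        rw [hS, Finset.mem_filter, hgk]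
        exact ⟨Finset.mem_univ _, Option.isSome_iff_ne_none.mpr this⟩
      have hR : ∀ i ∈ S, pstep p i (g i) := by
        intro i hi
        rw [hS, Finset.mem_filter] at hi
        obtain ⟨k, hk⟩ := Option.isSome_iff_exists.mp hi.2
        have hgk : g i = k := by rw [hg]; simp [hk]
        rw [hgk]; exact hk
      obtain ⟨v, hv⟩ := exists_cycle (pstep p) g S hmap hR hSne.choose hSne.choose_spec
      exact hacyc v hv
    obtain ⟨i₀, hi₀S, k, hik, hknone⟩ := hexit
    have hki : k ≠ i₀ := by
      intro h; subst h
      exact hacyc k (TransGen.single hik)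
    set p' := Function.update p i₀ none with hp'
    have hp'acyc : ∀ v, ¬ TransGen (pstep p') v v := by
      intro v hv
      exact hacyc v (TransGen.mono (r := pstep p') (p := pstep p) (fun a b h => pstep_update_none h) v v hv)
    have hp'card : (univ.filter fun i => (p' i).isSome).card = N := by
      have : (univ.filter fun i => (p' i).isSome) = S.erase i₀ := by
        ext i
        rw [Finset.mem_erase, hS, Finset.mem_filter, Finset.mem_filter]
        constructor
        · intro hi
          by_cases h : i = i₀
          · subst h; rw [hp'] at hi; simp at hi
          · rw [hp', Function.update_of_ne h] at hi
            exact ⟨h, hi⟩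
        · intro ⟨h, hi⟩
          rw [hp', Function.update_of_ne h]
          exact hi
      rw [this, Finset.card_erase_of_mem hi₀S, hcard]; omega
  -- row operation: Emat p = updateRow (Emat p') i₀ (row + (-1) • row k)
    have hrow : Emat p = Matrix.updateRow (Emat p') i₀ (Emat p' i₀ + (-1 : ℝ) • Emat p' k) := by
      ext i j
      by_cases h : i = i₀
      · subst h
        rw [Matrix.updateRow_self]
        have h1 : p' i = none := by rw [hp']; simp
        have h2 : p' k = p k := by rw [hp', Function.update_of_ne hki]
        simp only [Emat, Matrix.of_apply, Pi.add_apply, Pi.smul_apply, Matrix.of_apply,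
          hik, h1, h2, hknone, Option.some.injEq, smul_eq_mul]
        by_cases hij : i = j <;> by_cases hkj : k = j <;> simp [hij, hkj] <;> ring
      · rw [Matrix.updateRow_ne h]
        have : p' i = p i := by rw [hp', Function.update_of_ne h]
        simp [Emat, this]
    rw [hrow]
    have := Matrix.det_updateRow_add_smul_self (Emat p') (Ne.symm hki) (-1 : ℝ)
    rw [this]
    exact ih p' hp'card hp'acyc

lemma det_Emat_acyclic (p : Fin n → Option (Fin n))
    (hp : ∀ v, ¬ TransGen (pstep p) v v) : (Emat p).det = 1 :=
  det_Emat_acyclic_aux _ p rfl hp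





lemma det_expand (T : Matrix (Fin n) (Fin n) ℝ) (hT1 : ∀ i, ∑ j, T i j = 1) (x : ℝ) :
    (x • (1 : Matrix (Fin n) (Fin n) ℝ) + (1 - T)).det
      = ∑ p : Fin n → Option (Fin n),
          (∏ i, Option.elim (p i) x (fun k => T i k)) * (Emat p).det := by
  classical
  set r : Fin n → Option (Fin n) → (Fin n → ℝ) := fun i c =>
    Option.elim c (x • (Pi.single i 1 : Fin n → ℝ)) (fun k => T i k • ((Pi.single i 1 : Fin n → ℝ) - (Pi.single k 1 : Fin n → ℝ))) with hr
  have hM : (x • (1 : Matrix (Fin n) (Fin n) ℝ) + (1 - T))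
      = Matrix.of (fun i => ∑ c : Option (Fin n), r i c) := by
    ext i j
    have happ : (∑ c : Option (Fin n), r i c) j = ∑ c : Option (Fin n), r i c j := by
      rw [Finset.sum_apply]
    rw [Matrix.of_apply, happ, Fintype.sum_option]
    have hsum : ∑ k, r i (some k) j = (if i = j then (1:ℝ) else 0) - T i j := by
      simp only [hr, Option.elim, Pi.smul_apply, Pi.sub_apply, smul_eq_mul, Pi.single_apply]
      have hterm : ∀ k, T i k * ((if j = i then (1:ℝ) else 0) - (if j = k then (1:ℝ) else 0))
          = (if j = i then T i k else 0) - (if j = k then T i k else 0) := by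
        intro k; split <;> split <;> ring
      rw [Finset.sum_congr rfl fun k _ => hterm k, Finset.sum_sub_distrib,
        Finset.sum_ite_eq]
      by_cases hij : j = i
      · subst hij; simp [hT1]
      · simp [hij, Ne.symm hij]
    rw [hsum]
    simp only [hr, Option.elim, Pi.smul_apply, smul_eq_mul, Pi.single_apply]
    by_cases hij : i = j
    · subst hij
      simp [Matrix.add_apply, Matrix.smul_apply, Matrix.one_apply, Matrix.sub_apply]
    · simp [hij, Ne.symm hij, Matrix.add_apply, Matrix.smul_apply, Matrix.one_apply,
        Matrix.sub_apply]
  rw [hM]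
  have expand := MultilinearMap.map_sum
    (f := (Matrix.detRowAlternating (R := ℝ) (n := Fin n)).toMultilinearMap) (g := r)
  have hdet0 : (Matrix.of (fun i => ∑ c : Option (Fin n), r i c)).det
      = (Matrix.detRowAlternating (R := ℝ) (n := Fin n)).toMultilinearMap
          (fun i => ∑ c : Option (Fin n), r i c) := rfl
  rw [hdet0, expand]
  refine Finset.sum_congr rfl fun p _ => ?_
  have hrow : (fun i => r i (p i))
      = fun i => (Option.elim (p i) x (fun k => T i k)) • (Emat p i) := by
    funext i
    cases hpi : p i with
    | none =>
      funext j
      simp [hr, Emat, hpi, Pi.single_apply, eq_comm]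
    | some k =>
      funext j
      simp only [hr, Option.elim, Emat, Matrix.of_apply, hpi, Pi.smul_apply, Pi.sub_apply,
        smul_eq_mul, Pi.single_apply, Option.some.injEq]
      by_cases h1 : i = j
      · by_cases h2 : k = j
        · simp [h1, h2]
        · simp [h1, h2, Ne.symm h2]
      · by_cases h2 : k = j
        · simp [h1, h2, Ne.symm h1]
        · simp [h1, h2, Ne.symm h1, Ne.symm h2]
  rw [hrow, MultilinearMap.map_smul_univ (m := fun i => Emat p i), smul_eq_mul]
  rfl


end Stmt5Aux
namespace Stmt5Aux

variable {n : ℕ}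

def Phi (p : Fin n → Option (Fin n)) : Finset (Fin n × Fin n) :=
  univ.filter (fun a => p a.1 = some a.2)

noncomputable def Psi (A : Finset (Fin n × Fin n)) : Fin n → Option (Fin n) :=
  fun i => if h : ∃ k, (i, k) ∈ A then some h.choose else none

lemma mem_Phi {p : Fin n → Option (Fin n)} {a : Fin n × Fin n} :
    a ∈ Phi p ↔ p a.1 = some a.2 := by simp [Phi]

lemma arcStep_Phi (p : Fin n → Option (Fin n)) : arcStep (Phi p) = pstep p := by
  funext a b
  apply propext
  constructor
  · intro h; exact mem_Phi.mp h
  · intro h; exact mem_Phi.mpr h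

lemma Psi_some {A : Finset (Fin n × Fin n)}
    (hA : ∀ v, (A.filter fun a => a.1 = v).card ≤ 1) {i k : Fin n} :
    Psi A i = some k ↔ (i, k) ∈ A := by
  unfold Psi
  by_cases h : ∃ k', (i, k') ∈ A
  · rw [dif_pos h]
    constructor
    · intro hk
      have := h.choose_spec
      rwa [Option.some_inj.mp hk] at this
    · intro hk
      have h1 : (i, h.choose) ∈ A.filter fun a => a.1 = i := by
        simp [h.choose_spec]
      have h2 : (i, k) ∈ A.filter fun a => a.1 = i := by simp [hk]
      have := Finset.card_le_one.mp (hA i) _ h1 _ h2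
      rw [Option.some_inj]
      exact (Prod.ext_iff.mp this).2
  · rw [dif_neg h]
    constructor
    · intro hk; exact absurd hk (by simp)
    · intro hk; exact absurd ⟨k, hk⟩ h

lemma pstep_Psi {A : Finset (Fin n × Fin n)}
    (hA : ∀ v, (A.filter fun a => a.1 = v).card ≤ 1) :
    pstep (Psi A) = arcStep A := by
  funext a b
  apply propext
  exact (Psi_some hA (i := a) (k := b)).trans Iff.rfl

lemma isInForest_Phi (p : Fin n → Option (Fin n)) (hp : ∀ v, ¬ TransGen (pstep p) v v) :
    IsInForest (Phi p) := by
  refine ⟨?_, ?_, ?_⟩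
  · intro a ha heq
    rw [mem_Phi] at ha
    apply hp a.1
    apply TransGen.single
    show p a.1 = some a.1
    rw [ha, heq]
  · intro v
    rw [Finset.card_le_one]
    intro a ha b hb
    rw [Finset.mem_filter, mem_Phi] at ha hb
    apply Prod.ext (ha.2.trans hb.2.symm)
    rw [ha.2, hb.2] at *
    rw [ha.2] at ha
    rw [hb.2] at hb
    exact Option.some_inj.mp (ha.1.symm.trans hb.1)
  · intro v hv
    rw [arcStep_Phi] at hv
    exact hp v hv

lemma card_Phi (p : Fin n → Option (Fin n)) :
    (Phi p).card = (univ.filter fun i => (p i).isSome).card := by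
  apply Finset.card_bij (fun a _ => a.1)
  · intro a ha
    rw [mem_Phi] at ha
    simp [ha]
  · intro a ha b hb h
    rw [mem_Phi] at ha hb
    apply Prod.ext h
    rw [h] at ha
    exact Option.some_inj.mp (ha.symm.trans hb)
  · intro i hi
    rw [Finset.mem_filter] at hi
    obtain ⟨k, hk⟩ := Option.isSome_iff_exists.mp hi.2
    exact ⟨(i, k), mem_Phi.mpr hk, rfl⟩

lemma weight_split (T : Matrix (Fin n) (Fin n) ℝ) (p : Fin n → Option (Fin n)) (x : ℝ) :
    (∏ i, Option.elim (p i) x (fun k => T i k))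
      = (∏ a ∈ Phi p, T a.1 a.2) * x ^ (n - (Phi p).card) := by
  rw [← Finset.prod_filter_mul_prod_filter_not univ (fun i => (p i).isSome)]
  congr 1
  · refine Finset.prod_nbij' (fun i => (i, (p i).getD i)) (fun a => a.1) ?_ ?_ ?_ ?_ ?_
    · intro i hi
      rw [Finset.mem_filter] at hi
      obtain ⟨k, hk⟩ := Option.isSome_iff_exists.mp hi.2
      rw [mem_Phi]
      simp [hk]
    · intro a ha
      rw [mem_Phi] at ha
      simp [Option.isSome_iff_exists, ha]
    · intro i _; rfl
    · intro a ha
      rw [mem_Phi] at ha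
      simp [ha]
    · intro i hi
      rw [Finset.mem_filter] at hi
      obtain ⟨k, hk⟩ := Option.isSome_iff_exists.mp hi.2
      simp [hk]
  · have hc : ∀ i ∈ univ.filter (fun i => ¬ (p i).isSome), Option.elim (p i) x (fun k => T i k) = x := by
      intro i hi
      rw [Finset.mem_filter] at hi
      have : p i = none := Option.not_isSome_iff_eq_none.mp hi.2
      rw [this]
      rfl
    rw [Finset.prod_congr rfl hc, Finset.prod_const]
    congr 1
    rw [card_Phi]
    have h1 := Finset.card_filter_add_card_filter_not
      (s := (univ : Finset (Fin n))) (p := fun i => (p i).isSome)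
    have h2 : (univ : Finset (Fin n)).card = n := by simp
    omega

lemma det_forest (T : Matrix (Fin n) (Fin n) ℝ) (hT1 : ∀ i, ∑ j, T i j = 1) (x : ℝ) :
    (x • (1 : Matrix (Fin n) (Fin n) ℝ) + (1 - T)).det
      = ∑ A ∈ univ.filter (fun A : Finset (Fin n × Fin n) => IsInForest A),
          (∏ a ∈ A, T a.1 a.2) * x ^ (n - A.card) := by
  rw [det_expand T hT1 x]
  have hterm : ∀ p : Fin n → Option (Fin n),
      (∏ i, Option.elim (p i) x (fun k => T i k)) * (Emat p).det
      = if (∀ v, ¬ TransGen (pstep p) v v)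
          then (∏ i, Option.elim (p i) x (fun k => T i k)) else 0 := by
    intro p
    by_cases h : ∀ v, ¬ TransGen (pstep p) v v
    · rw [det_Emat_acyclic p h, if_pos h, mul_one]
    · rw [if_neg h]
      push_neg at h
      obtain ⟨v, hv⟩ := h
      rw [det_Emat_of_cycle p v hv, mul_zero]
  rw [Finset.sum_congr rfl (fun p _ => hterm p), ← Finset.sum_filter]
  refine Finset.sum_nbij' Phi Psi ?_ ?_ ?_ ?_ ?_
  · intro p hp
    rw [Finset.mem_filter] at hp
    exact Finset.mem_filter.mpr ⟨Finset.mem_univ _, isInForest_Phi p hp.2⟩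
  · intro A hA
    rw [Finset.mem_filter] at hA
    refine Finset.mem_filter.mpr ⟨Finset.mem_univ _, ?_⟩
    rw [pstep_Psi hA.2.2.1]
    exact hA.2.2.2
  · intro p hp
    rw [Finset.mem_filter] at hp
    funext i
    cases hpi : p i with
    | none =>
      unfold Psi
      rw [dif_neg]
      push_neg
      intro k hk
      rw [mem_Phi] at hk
      simp [hpi] at hk
    | some k =>
      exact (Psi_some (isInForest_Phi p hp.2).2.1).mpr (mem_Phi.mpr hpi)
  · intro A hA
    rw [Finset.mem_filter] at hA
    ext a
    rw [mem_Phi, Psi_some hA.2.2.1]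
  · intro p hp
    exact weight_split T p x

end Stmt5Aux
namespace Stmt5Aux

variable {n : ℕ}

lemma card_le_of_outdeg (A : Finset (Fin n × Fin n))
    (hA : ∀ v, (A.filter fun a => a.1 = v).card ≤ 1) : A.card ≤ n := by
  rw [Finset.card_eq_sum_card_fiberwise (f := Prod.fst) (t := univ)
    (fun a _ => Finset.mem_univ _)]
  calc ∑ v : Fin n, (A.filter fun a => a.1 = v).card ≤ ∑ _v : Fin n, 1 :=
        Finset.sum_le_sum (fun v _ => hA v)
    _ = n := by simp

lemma det_eq_sigma_sum (T : Matrix (Fin n) (Fin n) ℝ) (hT1 : ∀ i, ∑ j, T i j = 1) (x : ℝ) :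
    (x • (1 : Matrix (Fin n) (Fin n) ℝ) + (1 - T)).det
      = ∑ m ∈ Finset.range (n + 1), sigmaF T (n - m) * x ^ m := by
  rw [det_forest T hT1 x]
  have step1 : ∑ m ∈ Finset.range (n + 1), sigmaF T (n - m) * x ^ m
      = ∑ k ∈ Finset.range (n + 1), sigmaF T k * x ^ (n - k) := by
    rw [← Finset.sum_range_reflect (fun k => sigmaF T k * x ^ (n - k)) (n + 1)]
    apply Finset.sum_congr rfl
    intro m hm
    rw [Finset.mem_range] at hm
    have e1 : n + 1 - 1 - m = n - m := by omega
    have e2 : n - (n - m) = m := by omega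
    rw [e1, e2]
  rw [step1]
  have hsig : ∀ k, sigmaF T k
      = ∑ A : Finset (Fin n × Fin n), if IsInForest A ∧ A.card = k then ∏ a ∈ A, T a.1 a.2 else 0 :=
    fun k => by simp [sigmaF, forestWeight, digraphWeight]; congr 1; funext A; split_ifs <;> rfl
  rw [Finset.sum_congr rfl (fun k (_ : k ∈ Finset.range (n+1)) => by rw [hsig k])]
  have step2 : ∀ k ∈ Finset.range (n + 1),
      (∑ A : Finset (Fin n × Fin n),
        if IsInForest A ∧ A.card = k then ∏ a ∈ A, T a.1 a.2 else 0) * x ^ (n - k)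
      = ∑ A : Finset (Fin n × Fin n),
          if IsInForest A ∧ A.card = k then (∏ a ∈ A, T a.1 a.2) * x ^ (n - A.card) else 0 := by
    intro k _
    rw [Finset.sum_mul]
    apply Finset.sum_congr rfl
    intro A _
    split
    · rename_i h; rw [h.2]
    · rw [zero_mul]
  rw [Finset.sum_congr rfl step2, Finset.sum_comm]
  have step3 : ∀ A : Finset (Fin n × Fin n),
      (∑ k ∈ Finset.range (n + 1),
        if IsInForest A ∧ A.card = k then (∏ a ∈ A, T a.1 a.2) * x ^ (n - A.card) else 0)
      = if IsInForest A then (∏ a ∈ A, T a.1 a.2) * x ^ (n - A.card) else 0 := by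
    intro A
    by_cases hA : IsInForest A
    · have hcard : A.card ∈ Finset.range (n + 1) :=
        Finset.mem_range.mpr (Nat.lt_succ_of_le (card_le_of_outdeg A hA.2.1))
      simp only [hA, true_and]
      rw [Finset.sum_ite_eq]
      simp [hcard]
    · simp [hA]
  rw [Finset.sum_congr rfl (fun A _ => step3 A), ← Finset.sum_filter]

lemma sigmaF_zero (T : Matrix (Fin n) (Fin n) ℝ) : sigmaF T 0 = 1 := by
  unfold sigmaF forestWeight
  rw [Finset.sum_eq_single_of_mem (∅ : Finset (Fin n × Fin n)) (Finset.mem_univ _)]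
  · rw [if_pos]
    · simp [digraphWeight]
    · refine ⟨⟨?_, ?_, ?_⟩, rfl⟩
      · intro a ha; exact absurd ha (Finset.notMem_empty a)
      · intro v; simp
      · intro v hv
        obtain ⟨c, hc, -⟩ := (TransGen.head'_iff).mp hv
        exact absurd hc (Finset.notMem_empty _)
  · intro A _ hA
    rw [if_neg]
    rintro ⟨-, h0⟩
    exact hA (Finset.card_eq_zero.mp h0)

lemma sigmaF_n (T : Matrix (Fin n) (Fin n) ℝ) (hn : 1 ≤ n) : sigmaF T n = 0 := by
  unfold sigmaF forestWeight
  apply Finset.sum_eq_zero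
  intro A _
  rw [if_neg]
  rintro ⟨hF, hcard⟩
  have hsum : ∑ v : Fin n, (A.filter fun a => a.1 = v).card = n := by
    rw [← Finset.card_eq_sum_card_fiberwise (f := Prod.fst) (t := univ)
      (fun a _ => Finset.mem_univ _), hcard]
  have hall : ∀ v, (A.filter fun a => a.1 = v).card = 1 := by
    intro v
    by_contra hne
    have hv0 : (A.filter fun a => a.1 = v).card = 0 := by
      have := hF.2.1 v; omega
    have h1 : ∑ u ∈ (univ : Finset (Fin n)).erase v, (A.filter fun a => a.1 = u).card
        + (A.filter fun a => a.1 = v).card = ∑ u : Fin n, (A.filter fun a => a.1 = u).card :=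
      Finset.sum_erase_add _ _ (Finset.mem_univ v)
    have h2 : ∑ u ∈ (univ : Finset (Fin n)).erase v, (A.filter fun a => a.1 = u).card
        ≤ ((univ : Finset (Fin n)).erase v).card • 1 :=
      Finset.sum_le_card_nsmul _ _ 1 (fun u _ => hF.2.1 u)
    have h3 : ((univ : Finset (Fin n)).erase v).card = n - 1 := by
      rw [Finset.card_erase_of_mem (Finset.mem_univ v)]
      simp
    rw [h3, smul_eq_mul, mul_one] at h2
    omega
  have hex : ∀ v : Fin n, ∃ k, (v, k) ∈ A := by
    intro v
    have : (A.filter fun a => a.1 = v).Nonempty := by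
      rw [← Finset.card_pos, hall v]; omega
    obtain ⟨a, ha⟩ := this
    rw [Finset.mem_filter] at ha
    exact ⟨a.2, by rw [show (v, a.2) = a from (Prod.ext ha.2.symm rfl)]; exact ha.1⟩
  choose f hf using hex
  obtain ⟨v, hv⟩ := exists_cycle (arcStep A) f univ (fun i _ => Finset.mem_univ _)
    (fun i _ => hf i) ⟨0, hn⟩ (Finset.mem_univ _)
  exact hF.2.2 v hv

end Stmt5Aux
namespace Stmt5Aux

lemma coeff_sum_C_mul_X_pow (c : ℕ → ℝ) (N k : ℕ) (hk : k < N) :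
    (∑ m ∈ Finset.range N, Polynomial.C (c m) * Polynomial.X ^ m).coeff k = c k := by
  rw [Polynomial.finset_sum_coeff]
  have h : ∀ m ∈ Finset.range N, (Polynomial.C (c m) * Polynomial.X ^ m).coeff k
      = if k = m then c m else 0 := by
    intro m _
    rw [Polynomial.coeff_C_mul, Polynomial.coeff_X_pow]
    split <;> simp [*]
  rw [Finset.sum_congr rfl h, Finset.sum_ite_eq]
  simp [Finset.mem_range.mpr hk]

lemma eval_sum_C_mul_X_pow (c : ℕ → ℝ) (N : ℕ) (x : ℝ) :
    (∑ m ∈ Finset.range N, Polynomial.C (c m) * Polynomial.X ^ m).eval x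
      = ∑ m ∈ Finset.range N, c m * x ^ m := by
  rw [Polynomial.eval_finset_sum]; simp

end Stmt5Aux

open Stmt5Aux in
/-- Kemeny's constant equals `1 + σ_{n-2}/σ_{n-1}`:
`Σ_j π_j·m_ij = 1 + σ_{n-2}/σ_{n-1}` independently of `i`
(with `m_jj` the mean return time). -/
theorem stmt5 {n : ℕ} (hn : 2 ≤ n) (T : Matrix (Fin n) (Fin n) ℝ)
    (hst : IsStochastic T) (hirr : IsIrreducibleMC T)
    (pi : Fin n → ℝ) (hpi : IsStationaryDist T pi)
    (M : Matrix (Fin n) (Fin n) ℝ) (hM : IsMFPTMatrix T M) :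
    ∀ i, ∑ j, pi j * M i j = 1 + sigmaF T (n - 2) / sigmaF T (n - 1) := by
  classical
  obtain ⟨hT0, hT1⟩ := hst
  obtain ⟨hpi0, hpisum, hpistat⟩ := hpi
  intro i
  -- first-step equations in full-sum form
  have hM' : ∀ a j, M a j = 1 + (∑ k, T a k * M k j) - T a j * M j j := by
    intro a j
    rw [hM a j, Finset.filter_ne', Finset.sum_erase_eq_sub (Finset.mem_univ j)]
    ring
  -- harmonic functions are constant
  have hharm : ∀ x : Fin n → ℝ, (∀ u, x u = ∑ k, T u k * x k) → ∀ a b, x a = x b := by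
    intro x hx a b
    obtain ⟨i₀, -, hmax⟩ := Finset.exists_max_image univ x ⟨a, Finset.mem_univ a⟩
    have hstep : ∀ u, x u = x i₀ → ∀ k, 0 < T u k → x k = x i₀ := by
      intro u hu k hTk
      by_contra hne
      have hlt : x k < x i₀ := lt_of_le_of_ne (hmax k (Finset.mem_univ k)) hne
      have hzero : ∑ l, T u l * (x i₀ - x l) = 0 := by
        have e : ∑ l, T u l * (x i₀ - x l) = (∑ l, T u l) * x i₀ - ∑ l, T u l * x l := by
          rw [Finset.sum_mul, ← Finset.sum_sub_distrib]
          apply Finset.sum_congr rfl; intro l _; ring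
        rw [e, hT1 u, one_mul, ← hx u, hu, sub_self]
      have hpos : 0 < ∑ l, T u l * (x i₀ - x l) :=
        Finset.sum_pos' (fun l _ => mul_nonneg (hT0 u l)
            (sub_nonneg.mpr (hmax l (Finset.mem_univ l))))
          ⟨k, Finset.mem_univ k, mul_pos hTk (sub_pos.mpr hlt)⟩
      linarith
    have hall : ∀ c, x c = x i₀ := by
      intro c
      have H : ∀ d, TransGen (fun a b => 0 < T a b) i₀ d → x d = x i₀ := by
        intro d hd
        induction hd with
        | single h => exact hstep i₀ rfl _ h
        | tail _ h ih => exact hstep _ ih _ h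
      exact H c (hirr i₀ c)
    rw [hall a, hall b]
  -- positivity of pi
  have hpipos : ∀ j, 0 < pi j := by
    have hex : ∃ u, 0 < pi u := by
      by_contra h
      push_neg at h
      have : ∑ u, pi u ≤ 0 := Finset.sum_nonpos (fun u _ => h u)
      rw [hpisum] at this; linarith
    obtain ⟨u₀, hu₀⟩ := hex
    have hstep : ∀ u k, 0 < pi u → 0 < T u k → 0 < pi k := by
      intro u k hu hT
      have h1 : pi u * T u k ≤ ∑ l, pi l * T l k :=
        Finset.single_le_sum (fun l _ => mul_nonneg (hpi0 l) (hT0 l k)) (Finset.mem_univ u)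
      rw [hpistat k] at h1
      exact lt_of_lt_of_le (mul_pos hu hT) h1
    intro j
    have H : ∀ d, TransGen (fun a b => 0 < T a b) u₀ d → 0 < pi d := by
      intro d hd
      induction hd with
      | single h => exact hstep _ _ hu₀ h
      | tail _ h ih => exact hstep _ _ ih h
    exact H j (hirr u₀ j)
  -- mean return times
  have hret : ∀ j, pi j * M j j = 1 := by
    intro j
    have h1 : ∑ l, pi l * M l j
        = ∑ l, pi l * (1 + (∑ k, T l k * M k j) - T l j * M j j) :=
      Finset.sum_congr rfl fun l _ => by rw [← hM' l j]
    have h2 : ∑ l, pi l * (1 + (∑ k, T l k * M k j) - T l j * M j j)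
        = (∑ l, pi l) + (∑ l, pi l * ∑ k, T l k * M k j) - (∑ l, pi l * (T l j * M j j)) := by
      rw [← Finset.sum_add_distrib, ← Finset.sum_sub_distrib]
      apply Finset.sum_congr rfl; intro l _; ring
    have h3 : ∑ l, pi l * ∑ k, T l k * M k j = ∑ k, pi k * M k j := by
      have e : ∀ l, pi l * ∑ k, T l k * M k j = ∑ k, pi l * T l k * M k j := by
        intro l; rw [Finset.mul_sum]; apply Finset.sum_congr rfl; intro k _; ring
      rw [Finset.sum_congr rfl fun l _ => e l, Finset.sum_comm]
      apply Finset.sum_congr rfl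
      intro k _
      rw [← Finset.sum_mul, hpistat k]
    have h4 : ∑ l, pi l * (T l j * M j j) = pi j * M j j := by
      have e : ∀ l, pi l * (T l j * M j j) = pi l * T l j * M j j := fun l => by ring
      rw [Finset.sum_congr rfl fun l _ => e l, ← Finset.sum_mul, hpistat j]
    rw [h2, h3, h4, hpisum] at h1
    linarith
  -- Kemeny sums are constant in the start state
  have hKconst : ∀ a b, (∑ j, pi j * M a j) = (∑ j, pi j * M b j) := by
    apply hharm
    intro u
    have h1 : ∑ j, pi j * M u j
        = ∑ j, pi j * (1 + (∑ k, T u k * M k j) - T u j * M j j) :=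
      Finset.sum_congr rfl fun j _ => by rw [← hM' u j]
    have h2 : ∑ j, pi j * (1 + (∑ k, T u k * M k j) - T u j * M j j)
        = (∑ j, pi j) + (∑ j, pi j * ∑ k, T u k * M k j) - (∑ j, T u j * (pi j * M j j)) := by
      rw [← Finset.sum_add_distrib, ← Finset.sum_sub_distrib]
      apply Finset.sum_congr rfl; intro j _; ring
    have h3 : ∑ j, pi j * ∑ k, T u k * M k j = ∑ k, T u k * ∑ j, pi j * M k j := by
      have e : ∀ j, pi j * ∑ k, T u k * M k j = ∑ k, T u k * (pi j * M k j) := by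
        intro j; rw [Finset.mul_sum]; apply Finset.sum_congr rfl; intro k _; ring
      rw [Finset.sum_congr rfl fun j _ => e j, Finset.sum_comm]
      apply Finset.sum_congr rfl
      intro k _
      rw [Finset.mul_sum]
    have h4 : ∑ j, T u j * (pi j * M j j) = 1 := by
      have e : ∀ j, T u j * (pi j * M j j) = T u j := by
        intro j; rw [hret j, mul_one]
      rw [Finset.sum_congr rfl fun j (_ : j ∈ univ) => e j, hT1 u]
    rw [h1, h2, h3, h4, hpisum]
    ring
  set K : ℝ := ∑ j, pi j * M i j with hKdef
  -- the matrix A = I - T + 1 πᵀ and its inverse Z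
  set AM : Matrix (Fin n) (Fin n) ℝ :=
    (1 - T) + Matrix.of (fun _ j => pi j) with hAM
  have hAMapp : ∀ a b, AM a b = (if a = b then (1:ℝ) else 0) - T a b + pi b := by
    intro a b
    simp [hAM, Matrix.sub_apply, Matrix.add_apply, Matrix.one_apply]
  have hAMdet : AM.det ≠ 0 := by
    intro h0
    obtain ⟨v, hv0, hv⟩ := Matrix.exists_mulVec_eq_zero_iff.mpr h0
    have hv' : ∀ u, v u - (∑ k, T u k * v k) + (∑ k, pi k * v k) = 0 := by
      intro u
      have e0 := congrFun hv u
      have e : AM.mulVec v u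
          = (∑ j, (if u = j then v j else 0)) - (∑ j, T u j * v j) + (∑ j, pi j * v j) := by
        simp only [Matrix.mulVec, dotProduct]
        rw [← Finset.sum_sub_distrib, ← Finset.sum_add_distrib]
        apply Finset.sum_congr rfl
        intro j _
        rw [hAMapp u j]
        split <;> ring
      rw [Finset.sum_ite_eq] at e
      simp only [Finset.mem_univ, if_true] at e
      rw [e0] at e
      have ez : (0 : Fin n → ℝ) u = 0 := rfl
      rw [ez] at e
      linarith [e]
    set c : ℝ := ∑ k, pi k * v k with hc
    have hc0 : c = 0 := by
      have h1 : ∑ u, pi u * (v u - (∑ k, T u k * v k) + c) = 0 := by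
        rw [Finset.sum_congr rfl fun u _ => by rw [hv' u, mul_zero]]
        simp
      have h2 : ∑ u, pi u * (v u - (∑ k, T u k * v k) + c)
          = (∑ u, pi u * v u) - (∑ u, pi u * ∑ k, T u k * v k) + (∑ u, pi u) * c := by
        rw [Finset.sum_mul, ← Finset.sum_sub_distrib, ← Finset.sum_add_distrib]
        apply Finset.sum_congr rfl; intro u _; ring
      have h3 : ∑ u, pi u * ∑ k, T u k * v k = ∑ k, pi k * v k := by
        have e : ∀ u, pi u * ∑ k, T u k * v k = ∑ k, pi u * T u k * v k := by
          intro u; rw [Finset.mul_sum]; apply Finset.sum_congr rfl; intro k _; ring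
        rw [Finset.sum_congr rfl fun u _ => e u, Finset.sum_comm]
        apply Finset.sum_congr rfl
        intro k _
        rw [← Finset.sum_mul, hpistat k]
      rw [h2, h3, hpisum, one_mul, ← hc] at h1
      linarith [h1]
    have hvharm : ∀ u, v u = ∑ k, T u k * v k := by
      intro u
      have := hv' u
      rw [hc0] at this
      linarith
    have hvconst : ∀ u, v u = v i := fun u => hharm v hvharm u i
    have : c = v i := by
      rw [hc]
      rw [Finset.sum_congr rfl fun k _ => by rw [hvconst k], ← Finset.sum_mul, hpisum, one_mul]
    apply hv0
    funext u
    rw [Pi.zero_apply, hvconst u, ← this, hc0]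
  have hAMunit : IsUnit AM.det := isUnit_iff_ne_zero.mpr hAMdet
  set Z : Matrix (Fin n) (Fin n) ℝ := AM⁻¹ with hZ
  have hZA : Z * AM = 1 := Matrix.nonsing_inv_mul AM hAMunit
  have hAZ : AM * Z = 1 := Matrix.mul_nonsing_inv AM hAMunit
  have hZAapp : ∀ a b, ∑ k, Z a k * AM k b = if a = b then (1:ℝ) else 0 := by
    intro a b
    have := congrFun (congrFun hZA a) b
    rw [Matrix.mul_apply] at this
    rw [this, Matrix.one_apply]
  have hAMrow : ∀ u, ∑ j, AM u j = 1 := by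
    intro u
    have e : ∑ j, AM u j
        = (∑ j, (if u = j then (1:ℝ) else 0)) - (∑ j, T u j) + (∑ j, pi j) := by
      rw [← Finset.sum_sub_distrib, ← Finset.sum_add_distrib]
      exact Finset.sum_congr rfl fun j _ => by rw [hAMapp u j]
    rw [e, Finset.sum_ite_eq, hT1 u, hpisum]
    simp
  have hZrow : ∀ j, ∑ k, Z j k = 1 := by
    intro j
    have h1 : AM.mulVec (fun _ => (1:ℝ)) = fun _ => 1 := by
      funext u
      simp only [Matrix.mulVec, dotProduct, mul_one]
      exact hAMrow u
    have h2 : Z.mulVec (fun _ => (1:ℝ)) = fun _ => 1 := by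
      conv_lhs => rw [← h1]
      rw [Matrix.mulVec_mulVec, hZA, Matrix.one_mulVec]
    have := congrFun h2 j
    simpa [Matrix.mulVec, dotProduct, mul_one] using this
  -- K = trace Z
  have hKtr : K = ∑ j, Z j j := by
    have hAMM : ∀ k j, (∑ l, AM k l * M l j)
        = 1 - T k j * M j j + (∑ l, pi l * M l j) := by
      intro k j
      have e : ∑ l, AM k l * M l j
          = (∑ l, (if k = l then M l j else 0)) - (∑ l, T k l * M l j) + (∑ l, pi l * M l j) := by
        rw [← Finset.sum_sub_distrib, ← Finset.sum_add_distrib]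
        apply Finset.sum_congr rfl
        intro l _
        rw [hAMapp k l]
        split <;> ring
      rw [e, Finset.sum_ite_eq]
      simp only [Finset.mem_univ, if_true]
      have := hM' k j
      linarith
    have hdiag : ∀ j, M j j = (1 + ∑ l, pi l * M l j) - (∑ k, Z j k * T k j) * M j j := by
      intro j
      have h1 : M j j = ∑ l, (∑ k, Z j k * AM k l) * M l j := by
        have e0 : ∀ l, (∑ k, Z j k * AM k l) * M l j = if j = l then M l j else 0 := by
          intro l
          rw [hZAapp j l]
          split <;> ring
        rw [Finset.sum_congr rfl fun l (_ : l ∈ univ) => e0 l, Finset.sum_ite_eq]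
        simp
      have h2 : ∑ l, (∑ k, Z j k * AM k l) * M l j = ∑ k, Z j k * (∑ l, AM k l * M l j) := by
        have e : ∀ l, (∑ k, Z j k * AM k l) * M l j = ∑ k, Z j k * (AM k l * M l j) := by
          intro l; rw [Finset.sum_mul]; apply Finset.sum_congr rfl; intro k _; ring
        rw [Finset.sum_congr rfl fun l _ => e l, Finset.sum_comm]
        exact Finset.sum_congr rfl fun k _ => by rw [Finset.mul_sum]
      have h3 : ∑ k, Z j k * (∑ l, AM k l * M l j)
          = (∑ k, Z j k) * (1 + ∑ l, pi l * M l j) - (∑ k, Z j k * T k j) * M j j := by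
        rw [Finset.sum_mul, Finset.sum_mul, ← Finset.sum_sub_distrib]
        apply Finset.sum_congr rfl
        intro k _
        rw [hAMM k j]
        ring
      conv_lhs => rw [h1]
      rw [h2, h3, hZrow j, one_mul]
    -- multiply by pi j and sum over j
    have hjj : ∀ j, (1:ℝ) = pi j + pi j * (∑ l, pi l * M l j) - (∑ k, Z j k * T k j) := by
      intro j
      have h1 := hdiag j
      have h2 : M j j * (1 + (∑ k, Z j k * T k j)) = 1 + ∑ l, pi l * M l j := by
        linear_combination h1
      have h3 : (pi j * M j j) * (1 + (∑ k, Z j k * T k j))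
          = pi j * (1 + ∑ l, pi l * M l j) := by
        linear_combination pi j * h2
      rw [hret j, one_mul] at h3
      linear_combination h3
    have hsumjj : (n : ℝ) = 1 + (∑ j, pi j * (∑ l, pi l * M l j)) - (∑ j, ∑ k, Z j k * T k j) := by
      have h1 : ∑ _j : Fin n, (1:ℝ) = (n:ℝ) := by simp
      rw [← h1]
      rw [Finset.sum_congr rfl fun j (_ : j ∈ univ) => hjj j]
      rw [Finset.sum_sub_distrib, Finset.sum_add_distrib, hpisum]
    have hKs : ∑ j, pi j * (∑ l, pi l * M l j) = K := by
      have e : ∀ j, pi j * (∑ l, pi l * M l j) = ∑ l, pi l * (pi j * M l j) := by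
        intro j; rw [Finset.mul_sum]; apply Finset.sum_congr rfl; intro l _; ring
      rw [Finset.sum_congr rfl fun j _ => e j, Finset.sum_comm]
      have e2 : ∀ l, ∑ j, pi l * (pi j * M l j) = pi l * K := by
        intro l
        rw [← Finset.mul_sum]
        congr 1
        exact hKconst l i
      rw [Finset.sum_congr rfl fun l _ => e2 l, ← Finset.sum_mul, hpisum, one_mul]
    have hZT : ∑ j, ∑ k, Z j k * T k j = (∑ j, Z j j) + 1 - n := by
      have e : ∀ j, ∑ k, Z j k * T k j
          = Z j j + pi j * (∑ k, Z j k) - (∑ k, Z j k * AM k j) := by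
        intro j
        have eT : ∀ k, Z j k * T k j
            = (if k = j then Z j k else 0) + pi j * Z j k - Z j k * AM k j := by
          intro k
          have : T k j = (if k = j then (1:ℝ) else 0) + pi j - AM k j := by
            rw [hAMapp k j]; ring
          rw [this]
          split <;> ring
        rw [Finset.sum_congr rfl fun k _ => eT k, Finset.sum_sub_distrib,
          Finset.sum_add_distrib, ← Finset.mul_sum]
        congr 2
        rw [Finset.sum_ite_eq']
        simp
      rw [Finset.sum_congr rfl fun j (_ : j ∈ univ) => e j]
      rw [Finset.sum_sub_distrib, Finset.sum_add_distrib]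
      have e1 : ∑ j, pi j * (∑ k, Z j k) = 1 := by
        rw [Finset.sum_congr rfl fun j (_ : j ∈ univ) => by rw [hZrow j, mul_one], hpisum]
      have e2 : ∑ j, (∑ k, Z j k * AM k j) = (n : ℝ) := by
        rw [Finset.sum_congr rfl fun j (_ : j ∈ univ) => hZAapp j j]
        simp
      rw [e1, e2]
    rw [hKs, hZT] at hsumjj
    linarith
  -- the polynomial identity
  set sig : ℕ → ℝ := fun k => sigmaF T k with hsig
  have hdetL := det_eq_sigma_sum T hT1
  set qphi : Polynomial ℝ :=
    ∑ m ∈ Finset.range (n + 1), Polynomial.C (sig (n - m)) * Polynomial.X ^ m with hqphi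
  set qpsi : Polynomial ℝ :=
    ∑ m ∈ Finset.range n, Polynomial.C (sig (n - 1 - m)) * Polynomial.X ^ m with hqpsi
  have hqphieval : ∀ x : ℝ, qphi.eval x = (x • (1 : Matrix (Fin n) (Fin n) ℝ) + (1 - T)).det := by
    intro x
    rw [hqphi, eval_sum_C_mul_X_pow, hdetL x]
  have hsig0 : sig 0 = 1 := sigmaF_zero T
  have hsign : sig n = 0 := sigmaF_n T (by omega)
  have hqphine : qphi ≠ 0 := by
    intro h
    have h2 := coeff_sum_C_mul_X_pow (fun m => sig (n - m)) (n + 1) n (by omega)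
    rw [← hqphi, h] at h2
    rw [Polynomial.coeff_zero] at h2
    simp only [Nat.sub_self] at h2
    rw [hsig0] at h2
    exact one_ne_zero h2.symm
  set g : Polynomial ℝ :=
    (Matrix.det (1 + (Polynomial.X : Polynomial ℝ) • Z.map Polynomial.C)).divX.divX with hg
  set q1 : Polynomial ℝ :=
    Polynomial.C AM.det * (1 + Polynomial.C (∑ j, Z j j) * Polynomial.X
      + g * Polynomial.X ^ 2) with hq1
  have htr : Matrix.trace Z = ∑ j, Z j j := by
    simp [Matrix.trace, Matrix.diag]
  have hq1eval : ∀ x : ℝ, q1.eval x = (x • (1 : Matrix (Fin n) (Fin n) ℝ) + AM).det := by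
    intro x
    have hfac : x • (1 : Matrix (Fin n) (Fin n) ℝ) + AM = AM * (1 + x • Z) := by
      rw [Matrix.mul_add, Matrix.mul_one, Matrix.mul_smul, hAZ, add_comm]
    rw [hfac, Matrix.det_mul, Matrix.det_one_add_smul x Z]
    rw [hq1]
    simp only [Polynomial.eval_mul, Polynomial.eval_add, Polynomial.eval_one,
      Polynomial.eval_C, Polynomial.eval_X, Polynomial.eval_pow]
    rw [htr, ← hg]
  -- q1 and qphi + qpsi agree away from 0 and roots of qphi
  have hagree : ∀ x : ℝ, x ≠ 0 → qphi.eval x ≠ 0 →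
      q1.eval x = (qphi + qpsi).eval x := by
    intro x hx hroot
    set B : Matrix (Fin n) (Fin n) ℝ := x • (1 : Matrix (Fin n) (Fin n) ℝ) + (1 - T) with hB
    have hBdet : B.det ≠ 0 := by rw [hB, ← hqphieval x] at *; exact hroot
    have hBunit : IsUnit B.det := isUnit_iff_ne_zero.mpr hBdet
    have hBrow : ∀ k, ∑ j, B⁻¹ k j = x⁻¹ := by
      have h1 : B.mulVec (fun _ => (1:ℝ)) = fun _ => x := by
        funext u
        have e0 : B.mulVec (fun _ => (1:ℝ)) u = ∑ j, B u j := by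
          simp [Matrix.mulVec, dotProduct]
        rw [e0]
        have e : ∀ j, B u j = x * (if u = j then (1:ℝ) else 0)
            + ((if u = j then (1:ℝ) else 0) - T u j) := by
          intro j
          rw [hB]
          simp [Matrix.add_apply, Matrix.smul_apply, Matrix.sub_apply, Matrix.one_apply]
        rw [Finset.sum_congr rfl fun j (_ : j ∈ univ) => e j, Finset.sum_add_distrib,
          Finset.sum_sub_distrib, ← Finset.mul_sum, Finset.sum_ite_eq, hT1 u]
        simp
      have h2 : B⁻¹.mulVec (fun _ => (1:ℝ)) = fun _ => x⁻¹ := by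
        have h3 : B⁻¹.mulVec (B.mulVec (fun _ => (1:ℝ))) = fun _ => (1:ℝ) := by
          rw [Matrix.mulVec_mulVec, Matrix.nonsing_inv_mul B hBunit, Matrix.one_mulVec]
        rw [h1] at h3
        have h4 : (fun _ : Fin n => x) = x • (fun _ : Fin n => (1:ℝ)) := by
          funext u; simp
        rw [h4, Matrix.mulVec_smul] at h3
        funext u
        have := congrFun h3 u
        simp only [Pi.smul_apply, smul_eq_mul] at this
        exact (inv_eq_of_mul_eq_one_right this).symm
      intro k
      have := congrFun h2 k
      simpa [Matrix.mulVec, dotProduct, mul_one] using this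
    have hsplit : x • (1 : Matrix (Fin n) (Fin n) ℝ) + AM
        = B + Matrix.replicateCol Unit (fun _ => (1:ℝ)) * Matrix.replicateRow Unit pi := by
      rw [hB, hAM]
      ext a b
      simp [Matrix.add_apply, Matrix.mul_apply, Matrix.replicateCol_apply, Matrix.replicateRow_apply]
      ring
    have hdetAMx : (x • (1 : Matrix (Fin n) (Fin n) ℝ) + AM).det = B.det * (1 + x⁻¹) := by
      rw [hsplit, Matrix.det_add_replicateCol_mul_replicateRow hBunit]
      congr 1
      rw [Matrix.det_unique]
      simp only [Matrix.add_apply, Matrix.one_apply_eq, Matrix.mul_apply, Matrix.replicateRow_apply,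
        Matrix.replicateCol_apply, Finset.univ_unique, Finset.sum_singleton]
      congr 1
      have e : ∀ j, (∑ k, pi k * B⁻¹ k j) * (1:ℝ) = ∑ k, pi k * B⁻¹ k j := by
        intro j; ring
      calc ∑ j, (∑ k, pi k * B⁻¹ k j) * (1:ℝ) = ∑ j, ∑ k, pi k * B⁻¹ k j :=
            Finset.sum_congr rfl fun j _ => e j
        _ = ∑ k, ∑ j, pi k * B⁻¹ k j := Finset.sum_comm
        _ = ∑ k, pi k * x⁻¹ := Finset.sum_congr rfl fun k _ => by
              rw [← Finset.mul_sum, hBrow k]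
        _ = x⁻¹ := by rw [← Finset.sum_mul, hpisum, one_mul]
    have hpsix : qpsi.eval x = qphi.eval x * x⁻¹ := by
      have h1 : qphi.eval x = qpsi.eval x * x := by
        rw [hqphi, hqpsi, eval_sum_C_mul_X_pow, eval_sum_C_mul_X_pow]
        rw [Finset.sum_range_succ']
        rw [Nat.sub_zero, hsign]
        simp only [pow_zero, mul_one, zero_mul, add_zero]
        rw [Finset.sum_mul]
        apply Finset.sum_congr rfl
        intro m _
        have e1 : n - (m + 1) = n - 1 - m := by omega
        rw [e1]
        ring
      rw [h1]
      field_simp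
    rw [hq1eval x, hdetAMx, Polynomial.eval_add, hpsix, ← hqphieval x]
    ring
  have hq12 : q1 = qphi + qpsi := by
    apply Polynomial.eq_of_infinite_eval_eq
    have hfin : Set.Finite ({(0:ℝ)} ∪ {x | qphi.IsRoot x}) :=
      Set.Finite.union (Set.finite_singleton 0) (Polynomial.finite_setOf_isRoot hqphine)
    apply Set.Infinite.mono (s := ({(0:ℝ)} ∪ {x | qphi.IsRoot x})ᶜ)
    · intro x hx
      simp only [Set.mem_compl_iff, Set.mem_union, Set.mem_singleton_iff,
        Set.mem_setOf_eq, not_or] at hx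
      exact hagree x hx.1 hx.2
    · exact Set.Finite.infinite_compl hfin
  -- extract coefficients
  have hcoq1_0 : q1.coeff 0 = AM.det := by
    rw [hq1]
    rw [Polynomial.coeff_C_mul]
    simp [Polynomial.coeff_add, Polynomial.coeff_one, Polynomial.coeff_C_mul,
      Polynomial.coeff_X_zero, Polynomial.coeff_mul_X_pow']
  have hcoq1_1 : q1.coeff 1 = AM.det * (∑ j, Z j j) := by
    rw [hq1]
    rw [Polynomial.coeff_C_mul]
    simp [Polynomial.coeff_add, Polynomial.coeff_one, Polynomial.coeff_C_mul,
      Polynomial.coeff_X_one, Polynomial.coeff_mul_X_pow']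
  have hcoq2_0 : (qphi + qpsi).coeff 0 = sig (n - 1) := by
    rw [Polynomial.coeff_add, hqphi, hqpsi,
      coeff_sum_C_mul_X_pow _ _ 0 (by omega), coeff_sum_C_mul_X_pow _ _ 0 (by omega)]
    rw [Nat.sub_zero, Nat.sub_zero, hsign]
    ring
  have hcoq2_1 : (qphi + qpsi).coeff 1 = sig (n - 1) + sig (n - 2) := by
    rw [Polynomial.coeff_add, hqphi, hqpsi,
      coeff_sum_C_mul_X_pow _ _ 1 (by omega), coeff_sum_C_mul_X_pow _ _ 1 (by omega)]
    have e : n - 1 - 1 = n - 2 := by omega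
    rw [e]
  have hdetsig : AM.det = sig (n - 1) := by
    rw [← hcoq1_0, hq12, hcoq2_0]
  have htrsig : AM.det * (∑ j, Z j j) = sig (n - 1) + sig (n - 2) := by
    rw [← hcoq1_1, hq12, hcoq2_1]
  -- finish
  have hsig1ne : sig (n - 1) ≠ 0 := by rw [← hdetsig]; exact hAMdet
  rw [hdetsig] at htrsig
  have hfinal : (∑ j, Z j j) = 1 + sig (n - 2) / sig (n - 1) := by
    field_simp
    linarith [htrsig]
  rw [hKtr, hfinal]
end

section
/- For the version of hitting times with m_ii = 0, the weighted average Σ_j π_j·m_ij equals σ_{n-2}/σ_{n-1} for every starting state i. -/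
open Finset Relation Matrix
open scoped Classical

section ForestBasics

variable {n : ℕ}

lemma outArc_unique {A : Finset (Fin n × Fin n)}
    (h : ∀ v : Fin n, (A.filter fun a => a.1 = v).card ≤ 1)
    {v a b : Fin n} (ha : (v, a) ∈ A) (hb : (v, b) ∈ A) : a = b := by
  have ha' : (v, a) ∈ A.filter fun x => x.1 = v := by simp [ha]
  have hb' : (v, b) ∈ A.filter fun x => x.1 = v := by simp [hb]
  have := Finset.card_le_one.mp (h v) _ ha' _ hb'
  exact (Prod.ext_iff.mp this).2

/-- Determinism: if `v` reaches a root `r`, then anything `v` reaches also reaches `r`. -/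
lemma reach_root_of_reach {A : Finset (Fin n × Fin n)}
    (h : ∀ v : Fin n, (A.filter fun a => a.1 = v).card ≤ 1)
    {v r z : Fin n} (hr : IsRootOf A r)
    (hvz : Relation.ReflTransGen (arcStep A) v z)
    (hvr : Relation.ReflTransGen (arcStep A) v r) :
    Relation.ReflTransGen (arcStep A) z r := by
  induction hvz using Relation.ReflTransGen.head_induction_on with
  | refl => exact hvr
  | head hac hcz ih =>
    rename_i a c
    -- a → c, and RTG a r; a is not the root since it has an out-arc
    rcases (Relation.ReflTransGen.cases_head hvr) with rfl | ⟨c', hac', hc'r⟩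
    · exact absurd rfl (hr _ hac)
    · have : c' = c := outArc_unique h hac' hac
      exact ih (this ▸ hc'r)

lemma root_unique_of_reach {A : Finset (Fin n × Fin n)}
    (h : ∀ v : Fin n, (A.filter fun a => a.1 = v).card ≤ 1)
    {v r₁ r₂ : Fin n} (h1 : IsRootOf A r₁) (h2 : IsRootOf A r₂)
    (hv1 : Relation.ReflTransGen (arcStep A) v r₁)
    (hv2 : Relation.ReflTransGen (arcStep A) v r₂) : r₁ = r₂ := by
  have := reach_root_of_reach h h2 hv1 hv2
  rcases Relation.ReflTransGen.cases_head this with rfl | ⟨c, hc, _⟩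
  · rfl
  · exact absurd rfl (h1 _ hc)

/-- From any vertex of an in-forest one reaches a root. -/
lemma exists_root_reach {A : Finset (Fin n × Fin n)} (hA : IsInForest A) (v : Fin n) :
    ∃ r, IsRootOf A r ∧ Relation.ReflTransGen (arcStep A) v r := by
  obtain ⟨hloop, hdeg, hacyc⟩ := hA
  -- strong induction on the number of vertices reachable from v
  generalize hk : (Finset.univ.filter fun w => Relation.TransGen (arcStep A) v w).card = k
  induction k using Nat.strong_induction_on generalizing v with
  | _ k ih =>
    by_cases hroot : IsRootOf A v
    · exact ⟨v, hroot, Relation.ReflTransGen.refl⟩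
    · simp only [IsRootOf, not_forall] at hroot
      obtain ⟨a, haA, ha1⟩ := hroot
      simp only [not_not] at ha1
      have hstep : arcStep A v a.2 := by
        show (v, a.2) ∈ A
        rw [← ha1]; exact haA
      set w := a.2 with hw
      have hsub : (Finset.univ.filter fun z => Relation.TransGen (arcStep A) w z) ⊂
          (Finset.univ.filter fun z => Relation.TransGen (arcStep A) v z) := by
        rw [Finset.ssubset_iff_of_subset]
        · refine ⟨w, by simp [Relation.TransGen.single hstep], by simp [hacyc w]⟩
        · intro z hz
          simp only [Finset.mem_filter, Finset.mem_univ, true_and] at hz ⊢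
          exact Relation.TransGen.head' hstep hz.to_reflTransGen
      subst hk
      obtain ⟨r, hr, hwr⟩ := ih _ (Finset.card_lt_card hsub) w rfl
      exact ⟨r, hr, Relation.ReflTransGen.head hstep hwr⟩

/-- The non-roots of a forest are exactly the tails of its arcs, so their number is `A.card`. -/
lemma card_nonroots {A : Finset (Fin n × Fin n)}
    (h : ∀ v : Fin n, (A.filter fun a => a.1 = v).card ≤ 1) :
    (Finset.univ.filter fun v : Fin n => ¬ IsRootOf A v).card = A.card := by
  classical
  rw [eq_comm]
  apply Finset.card_bij (fun a _ => a.1)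
  · intro a ha
    simp only [Finset.mem_filter, Finset.mem_univ, true_and, IsRootOf, not_forall]
    exact ⟨a, ha, by simp⟩
  · intro a ha b hb hab
    have : a.2 = b.2 := by
      apply outArc_unique h (v := a.1)
      · exact (by simpa using ha : (a.1, a.2) ∈ A)
      · rw [hab]; exact (by simpa using hb : (b.1, b.2) ∈ A)
    exact Prod.ext hab this
  · intro v hv
    simp only [Finset.mem_filter, Finset.mem_univ, true_and, IsRootOf, not_forall] at hv
    obtain ⟨a, ha, ha1⟩ := hv
    simp only [not_not] at ha1
    exact ⟨a, ha, ha1⟩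

lemma card_roots {A : Finset (Fin n × Fin n)}
    (h : ∀ v : Fin n, (A.filter fun a => a.1 = v).card ≤ 1) :
    (Finset.univ.filter fun v : Fin n => IsRootOf A v).card = n - A.card := by
  have h1 := card_nonroots h
  have h2 : (Finset.univ.filter fun v : Fin n => IsRootOf A v).card
      + (Finset.univ.filter fun v : Fin n => ¬ IsRootOf A v).card = n := by
    rw [Finset.card_filter_add_card_filter_not]
    simp
  omega

lemma card_le_of_forest {A : Finset (Fin n × Fin n)}
    (h : ∀ v : Fin n, (A.filter fun a => a.1 = v).card ≤ 1) : A.card ≤ n := by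
  have := card_nonroots h
  calc A.card = _ := this.symm
    _ ≤ (Finset.univ : Finset (Fin n)).card := Finset.card_filter_le _ _
    _ = n := by simp

end ForestBasics


section ForestSurgery

variable {n : ℕ}

lemma rtg_mono {A B : Finset (Fin n × Fin n)} (hAB : A ⊆ B) {u v : Fin n}
    (h : Relation.ReflTransGen (arcStep A) u v) : Relation.ReflTransGen (arcStep B) u v :=
  Relation.ReflTransGen.mono (p := arcStep B) (fun _ _ hx => hAB hx) _ _ h

lemma isInForest_subset {A B : Finset (Fin n × Fin n)} (hAB : A ⊆ B) (hB : IsInForest B) :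
    IsInForest A := by
  obtain ⟨hl, hd, hc⟩ := hB
  refine ⟨fun a ha => hl a (hAB ha), fun v => le_trans (Finset.card_le_card ?_) (hd v),
    fun v hv => hc v (Relation.TransGen.mono (p := arcStep B) (fun _ _ hx => hAB hx) _ _ hv)⟩
  exact Finset.filter_subset_filter _ hAB

lemma root_reach_eq {A : Finset (Fin n × Fin n)} {r v : Fin n} (hr : IsRootOf A r)
    (h : Relation.ReflTransGen (arcStep A) r v) : v = r := by
  rcases Relation.ReflTransGen.cases_head h with rfl | ⟨c, hc, _⟩
  · rfl
  · exact absurd rfl (hr _ hc)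

/-- Decomposition of reachability after inserting the arc `(x,y)`. -/
lemma rtg_insert_decomp {A : Finset (Fin n × Fin n)} {x y u v : Fin n}
    (h : Relation.ReflTransGen (arcStep (insert (x, y) A)) u v) :
    Relation.ReflTransGen (arcStep A) u v ∨
      (Relation.ReflTransGen (arcStep A) u x ∧
        Relation.ReflTransGen (arcStep (insert (x, y) A)) y v) := by
  induction h using Relation.ReflTransGen.head_induction_on with
  | refl => exact Or.inl Relation.ReflTransGen.refl
  | head hac hcv ih =>
    rename_i a c
    rcases Finset.mem_insert.mp hac with heq | hA
    · obtain ⟨rfl, rfl⟩ : a = x ∧ c = y := by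
        simpa [Prod.ext_iff] using heq
      exact Or.inr ⟨Relation.ReflTransGen.refl, hcv⟩
    · rcases ih with h1 | ⟨h1, h2⟩
      · exact Or.inl (Relation.ReflTransGen.head hA h1)
      · exact Or.inr ⟨Relation.ReflTransGen.head hA h1, h2⟩

/-- If `y` cannot reach `x` in `A`, then reachability from `y` in `insert (x,y) A`
already holds in `A`. -/
lemma rtg_insert_from_y {A : Finset (Fin n × Fin n)} {x y : Fin n}
    (hyx : ¬ Relation.ReflTransGen (arcStep A) y x) {u v : Fin n}
    (h : Relation.ReflTransGen (arcStep (insert (x, y) A)) u v)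
    (hyu : Relation.ReflTransGen (arcStep A) y u) :
    Relation.ReflTransGen (arcStep A) y v := by
  induction h using Relation.ReflTransGen.head_induction_on with
  | refl => exact hyu
  | head hac hcv ih =>
    rename_i a c
    rcases Finset.mem_insert.mp hac with heq | hA
    · obtain ⟨rfl, rfl⟩ : a = x ∧ c = y := by simpa [Prod.ext_iff] using heq
      exact absurd hyu hyx
    · exact ih (hyu.tail hA)

lemma rtg_insert_of_not_reach {A : Finset (Fin n × Fin n)} {x y u v : Fin n}
    (h : Relation.ReflTransGen (arcStep (insert (x, y) A)) u v)
    (hux : ¬ Relation.ReflTransGen (arcStep A) u x) :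
    Relation.ReflTransGen (arcStep A) u v := by
  rcases rtg_insert_decomp h with h1 | ⟨h1, _⟩
  · exact h1
  · exact absurd h1 hux

/-- Inserting an arc `(x,y)` at a root `x` with `¬ y ⇝ x` preserves being a forest. -/
lemma isInForest_insert {A : Finset (Fin n × Fin n)} {x y : Fin n} (hA : IsInForest A)
    (hx : IsRootOf A x) (hxy : x ≠ y) (hyx : ¬ Relation.ReflTransGen (arcStep A) y x) :
    IsInForest (insert (x, y) A) := by
  obtain ⟨hl, hd, hc⟩ := hA
  refine ⟨?_, ?_, ?_⟩
  · intro a ha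
    rcases Finset.mem_insert.mp ha with rfl | hA'
    · exact hxy
    · exact hl a hA'
  · intro v
    by_cases hvx : v = x
    · subst hvx
      have : (A.filter fun a => a.1 = v) = ∅ := by
        rw [Finset.filter_eq_empty_iff]
        intro a ha
        simpa using (hx a ha)
      have : ((insert (v, y) A).filter fun a => a.1 = v) ⊆ {(v, y)} := by
        intro a ha
        simp only [Finset.mem_filter, Finset.mem_insert] at ha
        rcases ha.1 with rfl | hA'
        · simp
        · exact absurd ha.2 (hx a hA')
      calc _ ≤ ({(v, y)} : Finset (Fin n × Fin n)).card := Finset.card_le_card this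
        _ = 1 := Finset.card_singleton _
    · have : ((insert (x, y) A).filter fun a => a.1 = v) = (A.filter fun a => a.1 = v) := by
        rw [Finset.filter_insert]
        have hxv : ¬ x = v := fun h => hvx h.symm
        simp [hxv]
      rw [this]; exact hd v
  · intro v hv
    obtain ⟨c, hvc, hcv⟩ := Relation.TransGen.head'_iff.mp hv
    rcases Finset.mem_insert.mp hvc with heq | hA'
    · obtain ⟨rfl, rfl⟩ : v = x ∧ c = y := by simpa [Prod.ext_iff] using heq
      exact hyx (rtg_insert_from_y hyx hcv Relation.ReflTransGen.refl)
    · rcases rtg_insert_decomp hcv with h1 | ⟨h1, h2⟩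
      · exact hc v (Relation.TransGen.head' hA' h1)
      · have hyv : Relation.ReflTransGen (arcStep A) y v :=
          rtg_insert_from_y hyx h2 Relation.ReflTransGen.refl
        exact hyx ((hyv.tail hA').trans h1)

/-- Reachability survives erasing an arc whose tail is not reachable from `u`. -/
lemma rtg_erase {A : Finset (Fin n × Fin n)} {x s u v : Fin n}
    (h : Relation.ReflTransGen (arcStep A) u v)
    (hux : ¬ Relation.ReflTransGen (arcStep A) u x) :
    Relation.ReflTransGen (arcStep (A.erase (x, s))) u v := by
  induction h using Relation.ReflTransGen.head_induction_on with
  | refl => exact Relation.ReflTransGen.refl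
  | head hac hcv ih =>
    rename_i a c
    have hax : a ≠ x := fun heq => hux (heq ▸ Relation.ReflTransGen.refl)
    have : (a, c) ∈ A.erase (x, s) := by
      rw [Finset.mem_erase]
      exact ⟨by simp [Prod.ext_iff, hax], hac⟩
    refine Relation.ReflTransGen.head this (ih fun hcx => hux ?_)
    exact Relation.ReflTransGen.head hac hcx

lemma isRootOf_erase {A : Finset (Fin n × Fin n)} {x s : Fin n}
    (hd : ∀ v : Fin n, (A.filter fun a => a.1 = v).card ≤ 1)
    (hxs : (x, s) ∈ A) : IsRootOf (A.erase (x, s)) x := by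
  intro a ha
  rw [Finset.mem_erase] at ha
  intro h1
  apply ha.1
  have : a.2 = s := outArc_unique hd (v := x) (by rw [← h1]; simpa using ha.2) hxs
  rw [Prod.ext_iff]
  exact ⟨h1, this⟩

lemma isRootOf_insert {A : Finset (Fin n × Fin n)} {x y r : Fin n}
    (hr : IsRootOf A r) (hrx : r ≠ x) : IsRootOf (insert (x, y) A) r := by
  intro a ha
  rcases Finset.mem_insert.mp ha with rfl | hA'
  · exact Ne.symm hrx
  · exact hr a hA'

end ForestSurgery


section RootCount

variable {n : ℕ}

/-- A spanning converging tree: a forest with `n-1` arcs has a unique root,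
and every vertex reaches the root. -/
lemma tree_unique_root (hn : 1 ≤ n) {A : Finset (Fin n × Fin n)} (hA : IsInForest A)
    (hcard : A.card = n - 1) {j : Fin n} (hj : IsRootOf A j) (v : Fin n) :
    Relation.ReflTransGen (arcStep A) v j := by
  have hroots : (Finset.univ.filter fun v : Fin n => IsRootOf A v).card = 1 := by
    rw [card_roots hA.2.1, hcard]; omega
  obtain ⟨r, hr, hvr⟩ := exists_root_reach hA v
  obtain ⟨w, hw⟩ := Finset.card_eq_one.mp hroots
  have h1 : r = w := by
    have : r ∈ Finset.univ.filter fun v : Fin n => IsRootOf A v := by simp [hr]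
    rw [hw] at this; simpa using this
  have h2 : j = w := by
    have : j ∈ Finset.univ.filter fun v : Fin n => IsRootOf A v := by simp [hj]
    rw [hw] at this; simpa using this
  rw [h2, ← h1]; exact hvr

/-- In a 2-tree forest, for each `i` there is exactly one root not reachable from `i`. -/
lemma twoforest_unique_other_root (hn : 2 ≤ n) {A : Finset (Fin n × Fin n)}
    (hA : IsInForest A) (hcard : A.card = n - 2) (i : Fin n) :
    ∃! j, IsRootOf A j ∧ ¬ Relation.ReflTransGen (arcStep A) i j := by
  have hroots : (Finset.univ.filter fun v : Fin n => IsRootOf A v).card = 2 := by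
    rw [card_roots hA.2.1, hcard]; omega
  obtain ⟨r1, r2, hne, hset⟩ := Finset.card_eq_two.mp hroots
  have hr1 : IsRootOf A r1 := by
    have : r1 ∈ Finset.univ.filter fun v : Fin n => IsRootOf A v := by simp [hset]
    simpa using this
  have hr2 : IsRootOf A r2 := by
    have : r2 ∈ Finset.univ.filter fun v : Fin n => IsRootOf A v := by simp [hset]
    simpa using this
  have hmem : ∀ j, IsRootOf A j → j = r1 ∨ j = r2 := by
    intro j hj
    have : j ∈ Finset.univ.filter fun v : Fin n => IsRootOf A v := by simp [hj]
    rw [hset] at this; simpa using this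
  obtain ⟨r, hr, hir⟩ := exists_root_reach hA i
  rcases hmem r hr with rfl | rfl
  · refine ⟨r2, ⟨hr2, fun hcon => hne (root_unique_of_reach hA.2.1 hr hr2 hir hcon)⟩, ?_⟩
    intro j ⟨hj, hnj⟩
    rcases hmem j hj with rfl | rfl
    · exact absurd hir hnj
    · rfl
  · refine ⟨r1, ⟨hr1, fun hcon => hne (root_unique_of_reach hA.2.1 hr1 hr hcon hir)⟩, ?_⟩
    intro j ⟨hj, hnj⟩
    rcases hmem j hj with rfl | rfl
    · rfl
    · exact absurd hir hnj

lemma tree_pred_iff {A : Finset (Fin n × Fin n)} (j : Fin n) :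
    InTreeOf A j j ↔ IsRootOf A j :=
  ⟨fun h => h.1, fun h => ⟨h, Relation.ReflTransGen.refl⟩⟩

variable (T : Matrix (Fin n) (Fin n) ℝ)

lemma sum_treeW (hn : 1 ≤ n) : ∑ j, treeW T j = sigmaF T (n - 1) := by
  unfold treeW qF sigmaF forestWeight
  rw [Finset.sum_comm]
  apply Finset.sum_congr rfl
  intro A _
  by_cases hA : IsInForest A ∧ A.card = n - 1
  · rw [if_pos hA]
    have hroots : (Finset.univ.filter fun v : Fin n => IsRootOf A v).card = 1 := by
      rw [card_roots hA.1.2.1, hA.2]; omega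
    obtain ⟨r, hr⟩ := Finset.card_eq_one.mp hroots
    have hrr : IsRootOf A r := by
      have : r ∈ Finset.univ.filter fun v : Fin n => IsRootOf A v := by simp [hr]
      simpa using this
    rw [Finset.sum_eq_single r]
    · rw [if_pos ⟨hA.1, hA.2, (tree_pred_iff r).mpr hrr⟩]
    · intro j _ hjr
      rw [if_neg]
      rintro ⟨h1, h2, h3⟩
      apply hjr
      have : j ∈ Finset.univ.filter fun v : Fin n => IsRootOf A v := by simp [h3.1]
      rw [hr] at this; simpa using this
    · intro h; exact absurd (Finset.mem_univ r) h
  · rw [if_neg hA]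
    apply Finset.sum_eq_zero
    intro j _
    rw [if_neg]
    rintro ⟨h1, h2, h3⟩
    exact hA ⟨h1, h2⟩

lemma sum_fF (hn : 2 ≤ n) (i : Fin n) : ∑ j, fF T i j = sigmaF T (n - 2) := by
  unfold fF sigmaF forestWeight
  rw [Finset.sum_comm]
  apply Finset.sum_congr rfl
  intro A _
  by_cases hA : IsInForest A ∧ A.card = n - 2
  · rw [if_pos hA]
    obtain ⟨j₀, ⟨hj₀, hnj₀⟩, huniq⟩ := twoforest_unique_other_root hn hA.1 hA.2 i
    rw [Finset.sum_eq_single j₀]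
    · rw [if_pos ⟨hA.1, hA.2, hj₀, hnj₀⟩]
    · intro j _ hjj
      rw [if_neg]
      rintro ⟨h1, h2, h3, h4⟩
      exact hjj (huniq j ⟨h3, h4⟩)
    · intro h; exact absurd (Finset.mem_univ j₀) h
  · rw [if_neg hA]
    apply Finset.sum_eq_zero
    intro j _
    rw [if_neg]
    rintro ⟨h1, h2, h3⟩
    exact hA ⟨h1, h2⟩

end RootCount


section Positivity

variable {n : ℕ}

lemma digraphWeight_nonneg {T : Matrix (Fin n) (Fin n) ℝ} (hT : ∀ i j, 0 ≤ T i j)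
    (A : Finset (Fin n × Fin n)) : 0 ≤ digraphWeight T A :=
  Finset.prod_nonneg fun a _ => hT a.1 a.2

lemma forestWeight_nonneg {T : Matrix (Fin n) (Fin n) ℝ} (hT : ∀ i j, 0 ≤ T i j)
    (P : Finset (Fin n × Fin n) → Prop) : 0 ≤ forestWeight T P := by
  apply Finset.sum_nonneg
  intro A _
  split
  · exact digraphWeight_nonneg hT A
  · exact le_rfl

lemma crossing {r : Fin n → Fin n → Prop} {P : Fin n → Prop} {v j : Fin n}
    (h : Relation.TransGen r v j) (hv : ¬ P v) (hj : P j) :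
    ∃ x y, r x y ∧ ¬ P x ∧ P y := by
  induction h with
  | single h1 => exact ⟨_, _, h1, hv, hj⟩
  | tail h1 h2 ih =>
    rename_i b c
    by_cases hb : P b
    · exact ih hb
    · exact ⟨b, c, h2, hb, hj⟩

lemma exists_pos_tree {T : Matrix (Fin n) (Fin n) ℝ} (hirr : IsIrreducibleMC T)
    (j : Fin n) (hn : 1 ≤ n) :
    ∃ B : Finset (Fin n × Fin n), IsInForest B ∧ B.card = n - 1 ∧ IsRootOf B j ∧
      ∀ a ∈ B, 0 < T a.1 a.2 := by
  suffices h : ∀ m : ℕ, ∀ A : Finset (Fin n × Fin n), IsInForest A → IsRootOf A j →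
      (∀ a ∈ A, 0 < T a.1 a.2) → (∀ a ∈ A, Relation.ReflTransGen (arcStep A) a.1 j) →
      (Finset.univ.filter fun v : Fin n => ¬ Relation.ReflTransGen (arcStep A) v j).card = m →
      ∃ B : Finset (Fin n × Fin n), IsInForest B ∧ B.card = n - 1 ∧ IsRootOf B j ∧
        ∀ a ∈ B, 0 < T a.1 a.2 by
    apply h _ ∅ ?_ ?_ ?_ ?_ rfl
    · exact ⟨by simp, by simp, fun v hv => by
        obtain ⟨c, hc, _⟩ := Relation.TransGen.head'_iff.mp hv
        simp [arcStep] at hc⟩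
    · intro a ha; simp at ha
    · intro a ha; simp at ha
    · intro a ha; simp at ha
  intro m
  induction m using Nat.strong_induction_on with
  | _ m ih =>
    intro A hA hroot hpos hreach hm
    by_cases hall : ∀ v, Relation.ReflTransGen (arcStep A) v j
    · -- A is already spanning
      refine ⟨A, hA, ?_, hroot, hpos⟩
      have hsub : (Finset.univ.filter fun v : Fin n => IsRootOf A v) = {j} := by
        apply Finset.eq_singleton_iff_unique_mem.mpr
        constructor
        · simp [hroot]
        · intro r hr
          simp only [Finset.mem_filter, Finset.mem_univ, true_and] at hr
          exact (root_reach_eq hr (hall r)).symm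
      have h1 : n - A.card = 1 := by
        rw [← card_roots hA.2.1, hsub, Finset.card_singleton]
      have h2 := card_le_of_forest hA.2.1
      omega
    · push_neg at hall
      obtain ⟨v, hv⟩ := hall
      obtain ⟨x, y, hxy, hx, hy⟩ :=
        crossing (P := fun u => Relation.ReflTransGen (arcStep A) u j) (hirr v j) hv Relation.ReflTransGen.refl
      have hxroot : IsRootOf A x := by
        intro a ha h1
        exact hx (h1 ▸ hreach a ha)
      have hxney : x ≠ y := fun h => hx (h ▸ hy)
      have hyx : ¬ Relation.ReflTransGen (arcStep A) y x := by
        intro hcon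
        exact hx (reach_root_of_reach hA.2.1 hroot hcon hy)
      set A' := insert (x, y) A with hA'def
      have hA' : IsInForest A' := isInForest_insert hA hxroot hxney hyx
      have hroot' : IsRootOf A' j := isRootOf_insert hroot (fun h => hx (h ▸ Relation.ReflTransGen.refl))
      have hsubAA' : A ⊆ A' := Finset.subset_insert _ _
      have hreach' : ∀ a ∈ A', Relation.ReflTransGen (arcStep A') a.1 j := by
        intro a ha
        rcases Finset.mem_insert.mp ha with rfl | haA
        · exact Relation.ReflTransGen.head (Finset.mem_insert_self _ _) (rtg_mono hsubAA' hy)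
        · exact rtg_mono hsubAA' (hreach a haA)
      have hpos' : ∀ a ∈ A', 0 < T a.1 a.2 := by
        intro a ha
        rcases Finset.mem_insert.mp ha with rfl | haA
        · exact hxy
        · exact hpos a haA
      have hlt : (Finset.univ.filter fun w : Fin n =>
          ¬ Relation.ReflTransGen (arcStep A') w j).card < m := by
        rw [← hm]
        apply Finset.card_lt_card
        rw [Finset.ssubset_iff_of_subset]
        · refine ⟨x, ?_, ?_⟩
          · simp only [Finset.mem_filter, Finset.mem_univ, true_and]
            exact hx
          · simp only [Finset.mem_filter, Finset.mem_univ, true_and, not_not]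
            exact Relation.ReflTransGen.head (Finset.mem_insert_self _ _) (rtg_mono hsubAA' hy)
        · intro w hw
          simp only [Finset.mem_filter, Finset.mem_univ, true_and] at hw ⊢
          exact fun hcon => hw (rtg_mono hsubAA' hcon)
      exact ih _ hlt A' hA' hroot' hpos' hreach' rfl

lemma treeW_pos {T : Matrix (Fin n) (Fin n) ℝ} (hst : IsStochastic T)
    (hirr : IsIrreducibleMC T) (hn : 1 ≤ n) (j : Fin n) : 0 < treeW T j := by
  obtain ⟨B, hB, hcard, hroot, hpos⟩ := exists_pos_tree hirr j hn
  simp only [treeW, qF, forestWeight]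
  have hBpos : 0 < digraphWeight T B := Finset.prod_pos fun a ha => hpos a ha
  refine lt_of_lt_of_le ?_ (Finset.single_le_sum (fun A _ => ?_) (Finset.mem_univ B))
  · rw [if_pos ⟨hB, hcard, (tree_pred_iff j).mpr hroot⟩]; exact hBpos
  · split
    · exact digraphWeight_nonneg hst.1 _
    · exact le_rfl

lemma sigmaF_pos {T : Matrix (Fin n) (Fin n) ℝ} (hst : IsStochastic T)
    (hirr : IsIrreducibleMC T) (hn : 1 ≤ n) : 0 < sigmaF T (n - 1) := by
  rw [← sum_treeW T hn]
  have hpos := treeW_pos hst hirr hn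
  have hnonempty : (Finset.univ : Finset (Fin n)).Nonempty := by
    rw [Finset.univ_nonempty_iff]
    exact Fin.pos_iff_nonempty.mp (by omega)
  exact lt_of_lt_of_le (hpos hnonempty.choose)
    (Finset.single_le_sum (fun j _ => le_of_lt (hpos j)) (Finset.mem_univ _))

end Positivity


section MoreForest

variable {n : ℕ}

/-- Comparability of vertices reachable from a common vertex. -/
lemma reach_comparable {A : Finset (Fin n × Fin n)}
    (h : ∀ v : Fin n, (A.filter fun a => a.1 = v).card ≤ 1) {k a b : Fin n}
    (hka : Relation.ReflTransGen (arcStep A) k a)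
    (hkb : Relation.ReflTransGen (arcStep A) k b) :
    Relation.ReflTransGen (arcStep A) a b ∨ Relation.ReflTransGen (arcStep A) b a := by
  induction hka using Relation.ReflTransGen.head_induction_on with
  | refl => exact Or.inl hkb
  | head huc hca ih =>
    rename_i u c
    rcases Relation.ReflTransGen.cases_head hkb with rfl | ⟨c', hc', hcb⟩
    · exact Or.inr (Relation.ReflTransGen.head huc hca)
    · have : c' = c := outArc_unique h hc' huc
      exact ih (this ▸ hcb)

/-- Erasing the out-arc of the endpoint preserves reachability to it. -/
lemma rtg_erase_endpoint {A : Finset (Fin n × Fin n)}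
    (hacyc : ∀ v : Fin n, ¬ Relation.TransGen (arcStep A) v v) {u v s : Fin n}
    (h : Relation.ReflTransGen (arcStep A) u v) :
    Relation.ReflTransGen (arcStep (A.erase (v, s))) u v := by
  induction h using Relation.ReflTransGen.head_induction_on with
  | refl => exact Relation.ReflTransGen.refl
  | head huc hcv ih =>
    rename_i a c
    have hav : a ≠ v := by
      rintro rfl
      exact hacyc a (Relation.TransGen.head' huc hcv)
    refine Relation.ReflTransGen.head ?_ ih
    show (a, c) ∈ A.erase (v, s)
    rw [Finset.mem_erase]
    exact ⟨by simp [Prod.ext_iff, hav], huc⟩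

lemma isRootOf_subset {A B : Finset (Fin n × Fin n)} (hAB : A ⊆ B) {r : Fin n}
    (hr : IsRootOf B r) : IsRootOf A r := fun a ha => hr a (hAB ha)

/-- Last-step decomposition of a nontrivial reflexive-transitive path. -/
lemma rtg_last_step {r : Fin n → Fin n → Prop} {u v : Fin n}
    (h : Relation.ReflTransGen r u v) (huv : u ≠ v) :
    ∃ w, Relation.ReflTransGen r u w ∧ r w v := by
  rcases (Relation.ReflTransGen.cases_tail h) with rfl | ⟨c, hc1, hc2⟩
  · exact absurd rfl huv
  · exact ⟨c, hc1, hc2⟩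

/-- The unique out-arc of a non-root vertex. -/
noncomputable def succA (A : Finset (Fin n × Fin n)) (v : Fin n) : Fin n × Fin n :=
  if h : (A.filter fun a => a.1 = v).Nonempty then h.choose else (v, v)

lemma succA_mem {A : Finset (Fin n × Fin n)} {v : Fin n} (hv : ¬ IsRootOf A v) :
    succA A v ∈ A ∧ (succA A v).1 = v := by
  have hne : (A.filter fun a => a.1 = v).Nonempty := by
    simp only [IsRootOf, not_forall] at hv
    obtain ⟨a, ha, ha1⟩ := hv
    simp only [not_not] at ha1
    exact ⟨a, by simp [ha, ha1]⟩
  rw [succA, dif_pos hne]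
  have := hne.choose_spec
  simp only [Finset.mem_filter] at this
  exact this

lemma succA_eq {A : Finset (Fin n × Fin n)}
    (h : ∀ v : Fin n, (A.filter fun a => a.1 = v).card ≤ 1) {v w : Fin n}
    (hvw : (v, w) ∈ A) : succA A v = (v, w) := by
  have hv : ¬ IsRootOf A v := fun hr => hr _ hvw rfl
  obtain ⟨hmem, h1⟩ := succA_mem hv
  have hmem' : (v, (succA A v).2) ∈ A := by
    have h3 : ((succA A v).1, (succA A v).2) ∈ A := by simpa using hmem
    rwa [h1] at h3
  have h2 : (succA A v).2 = w := outArc_unique h hmem' hvw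
  rw [Prod.ext_iff]
  exact ⟨h1, h2⟩

lemma mem_succA_snd {A : Finset (Fin n × Fin n)} {v : Fin n} (hv : ¬ IsRootOf A v) :
    (v, (succA A v).2) ∈ A := by
  obtain ⟨hmem, h1⟩ := succA_mem hv
  have h3 : ((succA A v).1, (succA A v).2) ∈ A := by simpa using hmem
  rwa [h1] at h3

/-- A vertex which is not the unique root of a spanning tree is not a root. -/
lemma not_root_of_ne_root (hn : 1 ≤ n) {A : Finset (Fin n × Fin n)} (hA : IsInForest A)
    (hcard : A.card = n - 1) {j r : Fin n} (hr : IsRootOf A r) (hne : j ≠ r) :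
    ¬ IsRootOf A j := by
  intro hj
  have hroots : (Finset.univ.filter fun v : Fin n => IsRootOf A v).card = 1 := by
    rw [card_roots hA.2.1, hcard]; omega
  obtain ⟨w, hw⟩ := Finset.card_eq_one.mp hroots
  have h1 : j ∈ ({w} : Finset (Fin n)) := by rw [← hw]; simp [hj]
  have h2 : r ∈ ({w} : Finset (Fin n)) := by rw [← hw]; simp [hr]
  simp only [Finset.mem_singleton] at h1 h2
  exact hne (h1.trans h2.symm)

end MoreForest

section MaxPrinciple

variable {n : ℕ} {T : Matrix (Fin n) (Fin n) ℝ}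

/-- Maximum principle: a function harmonic away from `j` and vanishing at `j` vanishes. -/
lemma absorbed_eq_zero (hn : 1 ≤ n) (hst : IsStochastic T) (hirr : IsIrreducibleMC T)
    {j : Fin n} (x : Fin n → ℝ) (hj : x j = 0)
    (hharm : ∀ i, i ≠ j → x i = ∑ k, T i k * x k) : ∀ i, x i = 0 := by
  -- first show `x i ≤ 0` for every `i`, for any such `x`
  have key : ∀ y : Fin n → ℝ, y j = 0 → (∀ i, i ≠ j → y i = ∑ k, T i k * y k) →
      ∀ i, y i ≤ 0 := by
    intro y hyj hyharm i
    by_contra hcon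
    push_neg at hcon
    -- take the maximum
    have hne : (Finset.univ : Finset (Fin n)).Nonempty :=
      Finset.univ_nonempty_iff.mpr (Fin.pos_iff_nonempty.mp (by omega))
    obtain ⟨i₀, _, hmax⟩ := Finset.exists_max_image Finset.univ y hne
    have hmax' : ∀ k, y k ≤ y i₀ := fun k => hmax k (Finset.mem_univ k)
    have hMpos : 0 < y i₀ := lt_of_lt_of_le hcon (hmax' i)
    have hclosed : ∀ v w, y v = y i₀ → v ≠ j → 0 < T v w → y w = y i₀ := by
      intro v w hv hvj hT
      by_contra hw
      have hlt : y w < y i₀ := lt_of_le_of_ne (hmax' w) hw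
      have h1 : y v = ∑ k, T v k * y k := hyharm v hvj
      have h2 : ∑ k, T v k * y k < ∑ k, T v k * y i₀ := by
        apply Finset.sum_lt_sum
        · intro k _
          exact mul_le_mul_of_nonneg_left (hmax' k) (hst.1 v k)
        · exact ⟨w, Finset.mem_univ w, by
            exact mul_lt_mul_of_pos_left hlt hT⟩
      rw [← Finset.sum_mul, hst.2 v, one_mul] at h2
      rw [hv] at h1
      linarith [h1, h2]
    -- propagate the maximum from i₀ to j along a positive path
    have hreach : ∀ w, Relation.TransGen (fun a b => 0 < T a b) i₀ w → y w = y i₀ := by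
      intro w hw
      induction hw with
      | single h1 =>
        exact hclosed _ _ rfl (fun h => by rw [h, hyj] at hMpos; exact lt_irrefl 0 hMpos) h1
      | tail h1 h2 ih =>
        rename_i b c
        refine hclosed _ _ ih (fun h => ?_) h2
        rw [h, hyj] at ih
        rw [← ih] at hMpos
        exact lt_irrefl 0 hMpos
    have := hreach j (hirr i₀ j)
    rw [hyj] at this
    rw [← this] at hMpos
    exact lt_irrefl 0 hMpos
  intro i
  have h1 := key x hj hharm i
  have h2 := key (fun k => - x k) (by simp [hj]) (by
    intro i hij
    rw [hharm i hij, ← Finset.sum_neg_distrib]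
    apply Finset.sum_congr rfl
    intro k _
    ring) i
  simp only [neg_nonpos] at h2
  linarith

/-- Propagation of positivity for a stationary vector. -/
lemma stationary_prop (hst : IsStochastic T) {y : Fin n → ℝ} (hy : ∀ k, 0 ≤ y k)
    (hstat : ∀ k, ∑ i, y i * T i k = y k) {i w : Fin n} (hi : 0 < y i)
    (hw : Relation.TransGen (fun a b => 0 < T a b) i w) : 0 < y w := by
  induction hw with
  | single h1 =>
    rename_i c
    calc (0:ℝ) < y i * T i c := mul_pos hi h1
      _ ≤ ∑ u, y u * T u c := Finset.single_le_sum
          (fun u _ => mul_nonneg (hy u) (hst.1 u c)) (Finset.mem_univ i)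
      _ = y c := hstat c
  | tail h1 h2 ih =>
    rename_i b c
    calc (0:ℝ) < y b * T b c := mul_pos ih h2
      _ ≤ ∑ u, y u * T u c := Finset.single_le_sum
          (fun u _ => mul_nonneg (hy u) (hst.1 u c)) (Finset.mem_univ b)
      _ = y c := hstat c

end MaxPrinciple


section TreeStationary

variable {n : ℕ} {T : Matrix (Fin n) (Fin n) ℝ}

lemma into_root_unique {B : Finset (Fin n × Fin n)} (hB : IsInForest B) {j k i₁ i₂ : Fin n}
    (hrootj : IsRootOf B j) (h1 : (i₁, j) ∈ B) (h2 : (i₂, j) ∈ B)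
    (hk1 : Relation.ReflTransGen (arcStep B) k i₁)
    (hk2 : Relation.ReflTransGen (arcStep B) k i₂) : i₁ = i₂ := by
  have claim : ∀ a b : Fin n, (a, j) ∈ B → (b, j) ∈ B →
      Relation.ReflTransGen (arcStep B) a b → a = b := by
    intro a b ha hb hab
    rcases Relation.ReflTransGen.cases_head hab with rfl | ⟨c, hc, hcb⟩
    · rfl
    · have : c = j := outArc_unique hB.2.1 hc ha
      subst this
      have := root_reach_eq hrootj hcb
      subst this
      exact absurd rfl (hB.1 _ hb)
  rcases reach_comparable hB.2.1 hk1 hk2 with h | h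
  · exact claim _ _ h1 h2 h
  · exact (claim _ _ h2 h1 h).symm

lemma treeW_pred (i : Fin n) : treeW T i = ∑ A : Finset (Fin n × Fin n),
    if IsInForest A ∧ A.card = n - 1 ∧ IsRootOf A i then digraphWeight T A else 0 := by
  simp only [treeW, qF, forestWeight]
  apply Finset.sum_congr rfl
  intro A _
  congr 1
  rw [eq_iff_iff]
  constructor
  · rintro ⟨h1, h2, h3⟩; exact ⟨h1, h2, h3.1⟩
  · rintro ⟨h1, h2, h3⟩; exact ⟨h1, h2, (tree_pred_iff i).mpr h3⟩

lemma treeW_stationary (hst : IsStochastic T) (hn : 1 ≤ n) (j : Fin n) :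
    ∑ i, treeW T i * T i j = treeW T j := by
  classical
  -- peel off the diagonal term on both sides
  have hsplit : ∑ i, treeW T i * T i j
      = treeW T j * T j j + ∑ i ∈ Finset.univ.erase j, treeW T i * T i j := by
    rw [← Finset.add_sum_erase _ _ (Finset.mem_univ j)]
  have hsplit' : treeW T j
      = treeW T j * T j j + ∑ k ∈ Finset.univ.erase j, treeW T j * T j k := by
    have hrow : (T j j + ∑ k ∈ Finset.univ.erase j, T j k) = 1 := by
      rw [Finset.add_sum_erase _ _ (Finset.mem_univ j)]; exact hst.2 j
    calc treeW T j = treeW T j * (T j j + ∑ k ∈ Finset.univ.erase j, T j k) := by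
          rw [hrow, mul_one]
      _ = _ := by rw [mul_add, Finset.mul_sum]
  rw [hsplit]
  conv_rhs => rw [hsplit']
  congr 1
  -- now the bijection between the two off-diagonal sums
  have lhs_eq : ∑ i ∈ Finset.univ.erase j, treeW T i * T i j
      = ∑ p ∈ ((Finset.univ.erase j) ×ˢ (Finset.univ : Finset (Finset (Fin n × Fin n)))).filter
          (fun p => IsInForest p.2 ∧ p.2.card = n - 1 ∧ IsRootOf p.2 p.1),
          digraphWeight T p.2 * T p.1 j := by
    rw [Finset.sum_filter, Finset.sum_product]
    apply Finset.sum_congr rfl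
    intro i _
    rw [treeW_pred, Finset.sum_mul]
    apply Finset.sum_congr rfl
    intro A _
    rw [ite_mul, zero_mul]
  have rhs_eq : ∑ k ∈ Finset.univ.erase j, treeW T j * T j k
      = ∑ p ∈ ((Finset.univ.erase j) ×ˢ (Finset.univ : Finset (Finset (Fin n × Fin n)))).filter
          (fun p => IsInForest p.2 ∧ p.2.card = n - 1 ∧ IsRootOf p.2 j),
          digraphWeight T p.2 * T j p.1 := by
    rw [Finset.sum_filter, Finset.sum_product]
    apply Finset.sum_congr rfl
    intro k _
    rw [treeW_pred, Finset.sum_mul]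
    apply Finset.sum_congr rfl
    intro A _
    rw [ite_mul, zero_mul]
  rw [lhs_eq, rhs_eq]
  -- the bijection
  apply Finset.sum_bij
    (i := fun p _ => ((succA p.2 j).2, insert (p.1, j) (p.2.erase (succA p.2 j))))
  -- membership
  · rintro ⟨i, A⟩ hp
    simp only [Finset.mem_filter, Finset.mem_product, Finset.mem_erase, Finset.mem_univ,
      and_true, true_and] at hp
    obtain ⟨hij, hA, hcard, hrooti⟩ := hp
    have hnrj : ¬ IsRootOf A j := not_root_of_ne_root hn hA hcard hrooti (Ne.symm hij)
    have hjk : (j, (succA A j).2) ∈ A := mem_succA_snd hnrj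
    have hsucc : succA A j = (j, (succA A j).2) := succA_eq hA.2.1 hjk
    set k := (succA A j).2 with hk
    have hkj : k ≠ j := Ne.symm (hA.1 _ hjk)
    have hRTGji : Relation.ReflTransGen (arcStep A) j i := tree_unique_root hn hA hcard hrooti j
    have hRTGki : Relation.ReflTransGen (arcStep A) k i := by
      rcases Relation.ReflTransGen.cases_head hRTGji with rfl | ⟨c, hc, hci⟩
      · exact absurd rfl hij
      · have : c = k := outArc_unique hA.2.1 hc hjk
        exact this ▸ hci
    have hnotRTGkj : ¬ Relation.ReflTransGen (arcStep A) k j := by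
      intro hcon
      exact hA.2.2 j (Relation.TransGen.head' hjk hcon)
    have hijA : (i, j) ∉ A := fun hmem => hrooti _ hmem rfl
    have hEforest : IsInForest (A.erase (succA A j)) :=
      isInForest_subset (Finset.erase_subset _ _) hA
    have hrootjE : IsRootOf (A.erase (succA A j)) j := by
      rw [hsucc]; exact isRootOf_erase hA.2.1 hjk
    have hirootE : IsRootOf (A.erase (succA A j)) i :=
      isRootOf_subset (Finset.erase_subset _ _) hrooti
    have hRTGkiE : Relation.ReflTransGen (arcStep (A.erase (succA A j))) k i := by
      rw [hsucc]; exact rtg_erase hRTGki hnotRTGkj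
    have hnotji : ¬ Relation.ReflTransGen (arcStep (A.erase (succA A j))) j i := by
      intro hcon
      exact hij ((root_reach_eq hrootjE hcon).symm ▸ rfl : i = j) |>.elim
    simp only [Finset.mem_filter, Finset.mem_product, Finset.mem_erase, Finset.mem_univ,
      and_true, true_and]
    refine ⟨hkj, isInForest_insert hEforest hirootE hij hnotji, ?_, ?_⟩
    · rw [Finset.card_insert_of_notMem (fun hmem => hijA (Finset.mem_of_mem_erase hmem)),
        Finset.card_erase_of_mem (hsucc ▸ hjk), hcard]
      omega
    · exact isRootOf_insert hrootjE (Ne.symm hij)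
  -- injectivity
  · rintro ⟨i₁, A₁⟩ hp₁ ⟨i₂, A₂⟩ hp₂ heq
    simp only [Finset.mem_filter, Finset.mem_product, Finset.mem_erase, Finset.mem_univ,
      and_true, true_and] at hp₁ hp₂
    obtain ⟨hij₁, hA₁, hcard₁, hrooti₁⟩ := hp₁
    obtain ⟨hij₂, hA₂, hcard₂, hrooti₂⟩ := hp₂
    rw [Prod.ext_iff] at heq
    obtain ⟨hfst, hsnd⟩ := heq
    simp only at hfst hsnd
    -- setup for p₁
    have setup : ∀ (i : Fin n) (A : Finset (Fin n × Fin n)), i ≠ j → IsInForest A →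
        A.card = n - 1 → IsRootOf A i →
        (j, (succA A j).2) ∈ A ∧ succA A j = (j, (succA A j).2) ∧
        (i, j) ∈ insert (i, j) (A.erase (succA A j)) ∧
        Relation.ReflTransGen (arcStep (insert (i, j) (A.erase (succA A j)))) (succA A j).2 i ∧
        IsInForest (insert (i, j) (A.erase (succA A j))) ∧
        IsRootOf (insert (i, j) (A.erase (succA A j))) j := by
      intro i A hij hA hcard hrooti
      have hnrj : ¬ IsRootOf A j := not_root_of_ne_root hn hA hcard hrooti (Ne.symm hij)
      have hjk : (j, (succA A j).2) ∈ A := mem_succA_snd hnrj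
      have hsucc : succA A j = (j, (succA A j).2) := succA_eq hA.2.1 hjk
      have hRTGji : Relation.ReflTransGen (arcStep A) j i := tree_unique_root hn hA hcard hrooti j
      have hRTGki : Relation.ReflTransGen (arcStep A) (succA A j).2 i := by
        rcases Relation.ReflTransGen.cases_head hRTGji with rfl | ⟨c, hc, hci⟩
        · exact absurd rfl hij
        · have : c = (succA A j).2 := outArc_unique hA.2.1 hc hjk
          exact this ▸ hci
      have hnotRTGkj : ¬ Relation.ReflTransGen (arcStep A) (succA A j).2 j := by
        intro hcon
        exact hA.2.2 j (Relation.TransGen.head' hjk hcon)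
      have hEforest : IsInForest (A.erase (succA A j)) :=
        isInForest_subset (Finset.erase_subset _ _) hA
      have hrootjE : IsRootOf (A.erase (succA A j)) j := by
        rw [hsucc]; exact isRootOf_erase hA.2.1 hjk
      have hirootE : IsRootOf (A.erase (succA A j)) i :=
        isRootOf_subset (Finset.erase_subset _ _) hrooti
      have hRTGkiE : Relation.ReflTransGen (arcStep (A.erase (succA A j))) (succA A j).2 i := by
        rw [hsucc]; exact rtg_erase hRTGki hnotRTGkj
      have hnotji : ¬ Relation.ReflTransGen (arcStep (A.erase (succA A j))) j i := by
        intro hcon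
        exact hij ((root_reach_eq hrootjE hcon).symm ▸ rfl : i = j) |>.elim
      exact ⟨hjk, hsucc, Finset.mem_insert_self _ _,
        rtg_mono (Finset.subset_insert _ _) hRTGkiE,
        isInForest_insert hEforest hirootE hij hnotji,
        isRootOf_insert hrootjE (Ne.symm hij)⟩
    obtain ⟨hjk₁, hsucc₁, hmem₁, hreach₁, hBf₁, hBroot₁⟩ := setup i₁ A₁ hij₁ hA₁ hcard₁ hrooti₁
    obtain ⟨hjk₂, hsucc₂, hmem₂, hreach₂, hBf₂, hBroot₂⟩ := setup i₂ A₂ hij₂ hA₂ hcard₂ hrooti₂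
    have hii : i₁ = i₂ := by
      apply into_root_unique hBf₁ hBroot₁ hmem₁ (k := (succA A₁ j).2)
      · rw [hsnd]; exact hmem₂
      · exact hreach₁
      · rw [hfst, hsnd]; exact hreach₂
    have hijA₁ : (i₁, j) ∉ A₁.erase (succA A₁ j) :=
      fun hmem => hrooti₁ _ (Finset.mem_of_mem_erase hmem) rfl
    have hijA₂ : (i₂, j) ∉ A₂.erase (succA A₂ j) :=
      fun hmem => hrooti₂ _ (Finset.mem_of_mem_erase hmem) rfl
    have hAA : A₁ = A₂ := by
      have h₁ : A₁.erase (succA A₁ j) = A₂.erase (succA A₂ j) := by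
        have e1 : A₁.erase (succA A₁ j)
            = (insert (i₁, j) (A₁.erase (succA A₁ j))).erase (i₁, j) :=
          (Finset.erase_insert hijA₁).symm
        have e2 : A₂.erase (succA A₂ j)
            = (insert (i₂, j) (A₂.erase (succA A₂ j))).erase (i₂, j) :=
          (Finset.erase_insert hijA₂).symm
        rw [e1, e2, hsnd, hii]
      have h₂ : succA A₁ j = succA A₂ j := by
        rw [hsucc₁, hsucc₂, hfst]
      calc A₁ = insert (succA A₁ j) (A₁.erase (succA A₁ j)) :=
            (Finset.insert_erase (hsucc₁ ▸ hjk₁)).symm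
        _ = insert (succA A₂ j) (A₂.erase (succA A₂ j)) := by rw [h₁, h₂]
        _ = A₂ := Finset.insert_erase (hsucc₂ ▸ hjk₂)
    rw [Prod.ext_iff]
    exact ⟨hii, hAA⟩
  -- surjectivity
  · rintro ⟨k, B⟩ hq
    simp only [Finset.mem_filter, Finset.mem_product, Finset.mem_erase, Finset.mem_univ,
      and_true, true_and] at hq
    obtain ⟨hkj, hB, hcard, hrootj⟩ := hq
    have hRTGkj : Relation.ReflTransGen (arcStep B) k j := tree_unique_root hn hB hcard hrootj k
    obtain ⟨i, hki, hijB⟩ := rtg_last_step hRTGkj hkj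
    have hij : i ≠ j := hB.1 _ hijB
    have hE'forest : IsInForest (B.erase (i, j)) :=
      isInForest_subset (Finset.erase_subset _ _) hB
    have hirootE' : IsRootOf (B.erase (i, j)) i := isRootOf_erase hB.2.1 hijB
    have hjrootE' : IsRootOf (B.erase (i, j)) j := isRootOf_subset (Finset.erase_subset _ _) hrootj
    have hkiE' : Relation.ReflTransGen (arcStep (B.erase (i, j))) k i :=
      rtg_erase_endpoint hB.2.2 hki
    have hnotkjE' : ¬ Relation.ReflTransGen (arcStep (B.erase (i, j))) k j := by
      intro hcon
      have := reach_root_of_reach hE'forest.2.1 hirootE' hcon hkiE'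
      exact hij (root_reach_eq hjrootE' this)
    have hjkE' : (j, k) ∉ B.erase (i, j) := fun hmem => hjrootE' _ hmem rfl
    set A := insert (j, k) (B.erase (i, j)) with hAdef
    have hAforest : IsInForest A :=
      isInForest_insert hE'forest hjrootE' (Ne.symm hkj) hnotkjE'
    have hAcard : A.card = n - 1 := by
      rw [hAdef, Finset.card_insert_of_notMem hjkE', Finset.card_erase_of_mem hijB, hcard]
      have h2 := card_le_of_forest hB.2.1
      have h3 : 1 ≤ B.card := Finset.card_pos.mpr ⟨(i, j), hijB⟩
      omega
    have hirootA : IsRootOf A i := isRootOf_insert hirootE' hij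
    have hjkA : (j, k) ∈ A := Finset.mem_insert_self _ _
    have hsuccA : succA A j = (j, k) := succA_eq hAforest.2.1 hjkA
    refine ⟨(i, A), ?_, ?_⟩
    · simp only [Finset.mem_filter, Finset.mem_product, Finset.mem_erase, Finset.mem_univ,
        and_true, true_and]
      exact ⟨hij, hAforest, hAcard, hirootA⟩
    · rw [Prod.ext_iff]
      constructor
      · simp only [hsuccA]
      · simp only [hsuccA]
        rw [hAdef, Finset.erase_insert hjkE', Finset.insert_erase hijB]
  -- weights
  · rintro ⟨i, A⟩ hp
    simp only [Finset.mem_filter, Finset.mem_product, Finset.mem_erase, Finset.mem_univ,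
      and_true, true_and] at hp
    obtain ⟨hij, hA, hcard, hrooti⟩ := hp
    have hnrj : ¬ IsRootOf A j := not_root_of_ne_root hn hA hcard hrooti (Ne.symm hij)
    have hjk : (j, (succA A j).2) ∈ A := mem_succA_snd hnrj
    have hsucc : succA A j = (j, (succA A j).2) := succA_eq hA.2.1 hjk
    have hijA : (i, j) ∉ A.erase (succA A j) :=
      fun hmem => hrooti _ (Finset.mem_of_mem_erase hmem) rfl
    simp only
    rw [digraphWeight, digraphWeight, Finset.prod_insert hijA]
    have : ∏ a ∈ A, T a.1 a.2
        = T j (succA A j).2 * ∏ a ∈ A.erase (succA A j), T a.1 a.2 := by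
      rw [hsucc]
      exact (Finset.mul_prod_erase A (fun a => T a.1 a.2) (hsucc ▸ hjk)).symm
    rw [this]
    ring

end TreeStationary


section MCTT

variable {n : ℕ} {T : Matrix (Fin n) (Fin n) ℝ}

/-- Markov chain tree theorem: the stationary distribution is proportional
to the tree weights. -/
lemma pi_mul_sigma_eq_treeW (hn : 1 ≤ n) (hst : IsStochastic T) (hirr : IsIrreducibleMC T)
    {pi : Fin n → ℝ} (hpi : IsStationaryDist T pi) (j : Fin n) :
    pi j * sigmaF T (n - 1) = treeW T j := by
  have hq : ∀ k, 0 < treeW T k := treeW_pos hst hirr hn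
  have hne : (Finset.univ : Finset (Fin n)).Nonempty :=
    Finset.univ_nonempty_iff.mpr (Fin.pos_iff_nonempty.mp (by omega))
  obtain ⟨k₀, _, hmin⟩ := Finset.exists_min_image Finset.univ (fun k => pi k / treeW T k) hne
  set c := pi k₀ / treeW T k₀ with hc
  set y := fun k => pi k - c * treeW T k with hy
  have hynn : ∀ k, 0 ≤ y k := by
    intro k
    have h1 : c ≤ pi k / treeW T k := hmin k (Finset.mem_univ k)
    have h2 : c * treeW T k ≤ pi k := by
      have h3 : c * treeW T k ≤ (pi k / treeW T k) * treeW T k :=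
        mul_le_mul_of_nonneg_right h1 (le_of_lt (hq k))
      rwa [div_mul_cancel₀ _ (ne_of_gt (hq k))] at h3
    simp [hy]; linarith
  have hyk₀ : y k₀ = 0 := by
    simp only [hy, hc]
    rw [div_mul_cancel₀ _ (ne_of_gt (hq k₀))]
    ring
  have hystat : ∀ k, ∑ i, y i * T i k = y k := by
    intro k
    simp only [hy]
    have : ∀ i, (pi i - c * treeW T i) * T i k = pi i * T i k - c * (treeW T i * T i k) := by
      intro i; ring
    rw [Finset.sum_congr rfl (fun i _ => this i), Finset.sum_sub_distrib, ← Finset.mul_sum,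
      hpi.2.2 k, treeW_stationary hst hn k]
  have hyzero : ∀ k, y k = 0 := by
    intro k
    by_contra hcon
    have hpos : 0 < y k := lt_of_le_of_ne (hynn k) (Ne.symm hcon)
    have := stationary_prop hst hynn hystat hpos (hirr k k₀)
    rw [hyk₀] at this
    exact lt_irrefl 0 this
  have hpic : ∀ k, pi k = c * treeW T k := by
    intro k
    have := hyzero k
    simp only [hy] at this
    linarith
  have hsum : c * sigmaF T (n - 1) = 1 := by
    rw [← sum_treeW T hn, Finset.mul_sum]
    rw [← hpi.2.1]
    exact Finset.sum_congr rfl (fun k _ => (hpic k).symm)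
  calc pi j * sigmaF T (n - 1) = c * treeW T j * sigmaF T (n - 1) := by rw [hpic j]
    _ = treeW T j * (c * sigmaF T (n - 1)) := by ring
    _ = treeW T j := by rw [hsum, mul_one]

end MCTT


section HitIdentity

variable {n : ℕ} {T : Matrix (Fin n) (Fin n) ℝ}

lemma fF_eq (x j : Fin n) : fF T x j = ∑ A : Finset (Fin n × Fin n),
    if IsInForest A ∧ A.card = n - 2 ∧ IsRootOf A j ∧
      ¬ Relation.ReflTransGen (arcStep A) x j then digraphWeight T A else 0 := by
  simp only [fF, forestWeight]
  apply Finset.sum_congr rfl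
  intro A _
  congr 1

/-- Key surgery lemma: `∑_{k ≠ i} T i k (f_{ij} - f_{kj}) = q_j`. -/
lemma key_surgery (hn : 2 ≤ n) {i j : Fin n} (hij : i ≠ j) :
    ∑ k ∈ Finset.univ.erase i, T i k * (fF T i j - fF T k j) = treeW T j := by
  classical
  -- pointwise rewriting
  have pointwise : ∀ k ∈ Finset.univ.erase i, T i k * (fF T i j - fF T k j)
      = (∑ A : Finset (Fin n × Fin n),
          if IsInForest A ∧ A.card = n - 2 ∧ IsRootOf A j ∧
            ¬ Relation.ReflTransGen (arcStep A) i j ∧ Relation.ReflTransGen (arcStep A) k j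
          then T i k * digraphWeight T A else 0)
        - (∑ A : Finset (Fin n × Fin n),
          if IsInForest A ∧ A.card = n - 2 ∧ IsRootOf A j ∧
            Relation.ReflTransGen (arcStep A) i j ∧ ¬ Relation.ReflTransGen (arcStep A) k j
          then T i k * digraphWeight T A else 0) := by
    intro k _
    rw [fF_eq, fF_eq, ← Finset.sum_sub_distrib, Finset.mul_sum, ← Finset.sum_sub_distrib]
    apply Finset.sum_congr rfl
    intro A _
    by_cases hb : IsInForest A ∧ A.card = n - 2 ∧ IsRootOf A j
    · by_cases hRi : Relation.ReflTransGen (arcStep A) i j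
        <;> by_cases hRk : Relation.ReflTransGen (arcStep A) k j
      · rw [if_neg (fun h => h.2.2.2 hRi), if_neg (fun h => h.2.2.2 hRk),
          if_neg (fun h => h.2.2.2.1 hRi), if_neg (fun h => h.2.2.2.2 hRk)]
        ring
      · rw [if_neg (fun h => h.2.2.2 hRi), if_pos ⟨hb.1, hb.2.1, hb.2.2, hRk⟩,
          if_neg (fun h => hRk h.2.2.2.2), if_pos ⟨hb.1, hb.2.1, hb.2.2, hRi, hRk⟩]
        ring
      · rw [if_pos ⟨hb.1, hb.2.1, hb.2.2, hRi⟩, if_neg (fun h => h.2.2.2 hRk),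
          if_pos ⟨hb.1, hb.2.1, hb.2.2, hRi, hRk⟩, if_neg (fun h => hRi h.2.2.2.1)]
        ring
      · rw [if_pos ⟨hb.1, hb.2.1, hb.2.2, hRi⟩, if_pos ⟨hb.1, hb.2.1, hb.2.2, hRk⟩,
          if_neg (fun h => hRk h.2.2.2.2), if_neg (fun h => hRi h.2.2.2.1)]
        ring
    · rw [if_neg (fun h => hb ⟨h.1, h.2.1, h.2.2.1⟩), if_neg (fun h => hb ⟨h.1, h.2.1, h.2.2.1⟩),
        if_neg (fun h => hb ⟨h.1, h.2.1, h.2.2.1⟩), if_neg (fun h => hb ⟨h.1, h.2.1, h.2.2.1⟩)]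
      ring
  rw [Finset.sum_congr rfl pointwise, Finset.sum_sub_distrib]
  -- convert to sums over filtered products
  have lhsA : ∑ k ∈ Finset.univ.erase i, (∑ A : Finset (Fin n × Fin n),
        if IsInForest A ∧ A.card = n - 2 ∧ IsRootOf A j ∧
          ¬ Relation.ReflTransGen (arcStep A) i j ∧ Relation.ReflTransGen (arcStep A) k j
        then T i k * digraphWeight T A else 0)
      = ∑ p ∈ ((Finset.univ.erase i) ×ˢ (Finset.univ : Finset (Finset (Fin n × Fin n)))).filter
          (fun p => IsInForest p.2 ∧ p.2.card = n - 2 ∧ IsRootOf p.2 j ∧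
            ¬ Relation.ReflTransGen (arcStep p.2) i j ∧
            Relation.ReflTransGen (arcStep p.2) p.1 j),
          T i p.1 * digraphWeight T p.2 := by
    rw [Finset.sum_filter, Finset.sum_product]
  have lhsB : ∑ k ∈ Finset.univ.erase i, (∑ A : Finset (Fin n × Fin n),
        if IsInForest A ∧ A.card = n - 2 ∧ IsRootOf A j ∧
          Relation.ReflTransGen (arcStep A) i j ∧ ¬ Relation.ReflTransGen (arcStep A) k j
        then T i k * digraphWeight T A else 0)
      = ∑ p ∈ ((Finset.univ.erase i) ×ˢ (Finset.univ : Finset (Finset (Fin n × Fin n)))).filter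
          (fun p => IsInForest p.2 ∧ p.2.card = n - 2 ∧ IsRootOf p.2 j ∧
            Relation.ReflTransGen (arcStep p.2) i j ∧
            ¬ Relation.ReflTransGen (arcStep p.2) p.1 j),
          T i p.1 * digraphWeight T p.2 := by
    rw [Finset.sum_filter, Finset.sum_product]
  rw [lhsA, lhsB]
  -- split the 𝒜-sum according to whether `i` is a root
  set sA := ((Finset.univ.erase i) ×ˢ (Finset.univ : Finset (Finset (Fin n × Fin n)))).filter
      (fun p => IsInForest p.2 ∧ p.2.card = n - 2 ∧ IsRootOf p.2 j ∧
        ¬ Relation.ReflTransGen (arcStep p.2) i j ∧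
        Relation.ReflTransGen (arcStep p.2) p.1 j) with hsA
  have hsplit : ∑ p ∈ sA, T i p.1 * digraphWeight T p.2
      = (∑ p ∈ sA.filter (fun p => IsRootOf p.2 i), T i p.1 * digraphWeight T p.2)
        + (∑ p ∈ sA.filter (fun p => ¬ IsRootOf p.2 i), T i p.1 * digraphWeight T p.2) :=
    (Finset.sum_filter_add_sum_filter_not sA _ _).symm
  rw [hsplit]
  have htree : ∑ p ∈ sA.filter (fun p => IsRootOf p.2 i), T i p.1 * digraphWeight T p.2
      = treeW T j := by
    rw [treeW_pred, ← Finset.sum_filter]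
    apply Finset.sum_bij (i := fun p _ => insert ((i : Fin n), p.1) p.2)
    · rintro ⟨k, F⟩ hp
      simp only [hsA, Finset.mem_filter, Finset.mem_product, Finset.mem_erase, Finset.mem_univ,
        and_true, true_and] at hp
      obtain ⟨⟨hki, hF, hcard, hrootj, hnRi, hRk⟩, hrooti⟩ := hp
      have hik : i ≠ k := Ne.symm hki
      have hnki : ¬ Relation.ReflTransGen (arcStep F) k i := by
        intro hcon
        exact hnRi (reach_root_of_reach hF.2.1 hrootj hcon hRk)
      have hikF : (i, k) ∉ F := fun hmem => hrooti _ hmem rfl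
      simp only [Finset.mem_filter, Finset.mem_univ, true_and]
      refine ⟨isInForest_insert hF hrooti hik hnki, ?_, ?_⟩
      · rw [Finset.card_insert_of_notMem hikF, hcard]; omega
      · exact isRootOf_insert hrootj (Ne.symm hij)
    · rintro ⟨k₁, F₁⟩ hp₁ ⟨k₂, F₂⟩ hp₂ heq
      simp only [hsA, Finset.mem_filter, Finset.mem_product, Finset.mem_erase, Finset.mem_univ,
        and_true, true_and] at hp₁ hp₂
      obtain ⟨⟨hki₁, hF₁, hcard₁, hrootj₁, hnRi₁, hRk₁⟩, hrooti₁⟩ := hp₁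
      obtain ⟨⟨hki₂, hF₂, hcard₂, hrootj₂, hnRi₂, hRk₂⟩, hrooti₂⟩ := hp₂
      simp only at heq
      have hikF₁ : (i, k₁) ∉ F₁ := fun hmem => hrooti₁ _ hmem rfl
      have hikF₂ : (i, k₂) ∉ F₂ := fun hmem => hrooti₂ _ hmem rfl
      have hBf : IsInForest (insert (i, k₁) F₁) := by
        refine isInForest_insert hF₁ hrooti₁ (Ne.symm hki₁) ?_
        intro hcon
        exact hnRi₁ (reach_root_of_reach hF₁.2.1 hrootj₁ hcon hRk₁)
      have hkk : k₁ = k₂ := by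
        apply outArc_unique hBf.2.1 (v := i) (Finset.mem_insert_self _ _)
        rw [heq]; exact Finset.mem_insert_self _ _
      have hFF : F₁ = F₂ := by
        have e1 : F₁ = (insert (i, k₁) F₁).erase (i, k₁) := (Finset.erase_insert hikF₁).symm
        have e2 : F₂ = (insert (i, k₂) F₂).erase (i, k₂) := (Finset.erase_insert hikF₂).symm
        rw [e1, e2, heq, hkk]
      rw [Prod.ext_iff]; exact ⟨hkk, hFF⟩
    · intro B hB'
      simp only [Finset.mem_filter, Finset.mem_univ, true_and] at hB'
      obtain ⟨hB, hcard, hrootj⟩ := hB'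
      have hnri : ¬ IsRootOf B i := not_root_of_ne_root (by omega) hB hcard hrootj hij
      have hik : (i, (succA B i).2) ∈ B := mem_succA_snd hnri
      set k := (succA B i).2 with hk
      have hki : k ≠ i := Ne.symm (hB.1 _ hik)
      have hF : IsInForest (B.erase (i, k)) := isInForest_subset (Finset.erase_subset _ _) hB
      have hrootiF : IsRootOf (B.erase (i, k)) i := by
        have := isRootOf_erase hB.2.1 hik
        rwa [← succA_eq hB.2.1 hik] at this ⊢
      have hrootjF : IsRootOf (B.erase (i, k)) j := isRootOf_subset (Finset.erase_subset _ _) hrootj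
      have hnki : ¬ Relation.ReflTransGen (arcStep B) k i := by
        intro hcon
        exact hB.2.2 i (Relation.TransGen.head' hik hcon)
      have hRkB : Relation.ReflTransGen (arcStep B) k j := tree_unique_root (by omega) hB hcard hrootj k
      have hRkF : Relation.ReflTransGen (arcStep (B.erase (i, k))) k j := rtg_erase hRkB hnki
      have hnRiF : ¬ Relation.ReflTransGen (arcStep (B.erase (i, k))) i j := by
        intro hcon
        exact hij (root_reach_eq hrootiF hcon).symm
      refine ⟨(k, B.erase (i, k)), ?_, ?_⟩
      · simp only [hsA, Finset.mem_filter, Finset.mem_product, Finset.mem_erase, Finset.mem_univ,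
          and_true, true_and]
        refine ⟨⟨hki, hF, ?_, hrootjF, hnRiF, hRkF⟩, hrootiF⟩
        rw [Finset.card_erase_of_mem hik, hcard]
        have : 1 ≤ B.card := Finset.card_pos.mpr ⟨_, hik⟩
        omega
      · simp only
        exact Finset.insert_erase hik
    · rintro ⟨k, F⟩ hp
      simp only [hsA, Finset.mem_filter, Finset.mem_product, Finset.mem_erase, Finset.mem_univ,
        and_true, true_and] at hp
      obtain ⟨⟨hki, hF, hcard, hrootj, hnRi, hRk⟩, hrooti⟩ := hp
      have hikF : (i, k) ∉ F := fun hmem => hrooti _ hmem rfl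
      simp only [digraphWeight, Finset.prod_insert hikF]
  rw [htree]
  have hbij2 : ∑ p ∈ sA.filter (fun p => ¬ IsRootOf p.2 i), T i p.1 * digraphWeight T p.2
      = ∑ p ∈ ((Finset.univ.erase i) ×ˢ (Finset.univ : Finset (Finset (Fin n × Fin n)))).filter
          (fun p => IsInForest p.2 ∧ p.2.card = n - 2 ∧ IsRootOf p.2 j ∧
            Relation.ReflTransGen (arcStep p.2) i j ∧
            ¬ Relation.ReflTransGen (arcStep p.2) p.1 j),
          T i p.1 * digraphWeight T p.2 := by
    apply Finset.sum_bij
      (i := fun p _ => ((succA p.2 i).2, insert ((i : Fin n), p.1) (p.2.erase (succA p.2 i))))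
    · rintro ⟨k, F⟩ hp
      simp only [hsA, Finset.mem_filter, Finset.mem_product, Finset.mem_erase, Finset.mem_univ,
        and_true, true_and] at hp
      obtain ⟨⟨hki, hF, hcard, hrootj, hnRi, hRk⟩, hnrooti⟩ := hp
      have his : (i, (succA F i).2) ∈ F := mem_succA_snd hnrooti
      have hsucc : succA F i = (i, (succA F i).2) := succA_eq hF.2.1 his
      set s := (succA F i).2 with hs
      have hsi : s ≠ i := Ne.symm (hF.1 _ his)
      have hnki : ¬ Relation.ReflTransGen (arcStep F) k i := by
        intro hcon
        exact hnRi (reach_root_of_reach hF.2.1 hrootj hcon hRk)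
      have hEf : IsInForest (F.erase (succA F i)) := isInForest_subset (Finset.erase_subset _ _) hF
      have hrootiE : IsRootOf (F.erase (succA F i)) i := by
        rw [hsucc]; exact isRootOf_erase hF.2.1 his
      have hrootjE : IsRootOf (F.erase (succA F i)) j :=
        isRootOf_subset (Finset.erase_subset _ _) hrootj
      have hRkE : Relation.ReflTransGen (arcStep (F.erase (succA F i))) k j := by
        rw [hsucc]; exact rtg_erase hRk hnki
      have hnkiE : ¬ Relation.ReflTransGen (arcStep (F.erase (succA F i))) k i :=
        fun hcon => hnki (rtg_mono (Finset.erase_subset _ _) hcon)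
      have hikE : (i, k) ∉ F.erase (succA F i) := fun hmem => hrootiE _ hmem rfl
      have hGf : IsInForest (insert (i, k) (F.erase (succA F i))) :=
        isInForest_insert hEf hrootiE (Ne.symm hki) hnkiE
      simp only [Finset.mem_filter, Finset.mem_product, Finset.mem_erase, Finset.mem_univ,
        and_true, true_and]
      refine ⟨hsi, hGf, ?_, isRootOf_insert hrootjE (Ne.symm hij), ?_, ?_⟩
      · rw [Finset.card_insert_of_notMem hikE, Finset.card_erase_of_mem (hsucc ▸ his), hcard]
        have : 1 ≤ F.card := Finset.card_pos.mpr ⟨_, his⟩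
        omega
      · exact Relation.ReflTransGen.head (Finset.mem_insert_self _ _)
          (rtg_mono (Finset.subset_insert _ _) hRkE)
      · intro hcon
        rcases rtg_insert_decomp hcon with h1 | ⟨h1, _⟩
        · have h2 : Relation.ReflTransGen (arcStep F) s j :=
            rtg_mono (Finset.erase_subset _ _) h1
          exact hnRi (Relation.ReflTransGen.head his h2)
        · have h2 : Relation.ReflTransGen (arcStep F) s i :=
            rtg_mono (Finset.erase_subset _ _) h1
          exact hF.2.2 i (Relation.TransGen.head' his h2)
    · rintro ⟨k₁, F₁⟩ hp₁ ⟨k₂, F₂⟩ hp₂ heq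
      simp only [hsA, Finset.mem_filter, Finset.mem_product, Finset.mem_erase, Finset.mem_univ,
        and_true, true_and] at hp₁ hp₂
      obtain ⟨⟨hki₁, hF₁, hcard₁, hrootj₁, hnRi₁, hRk₁⟩, hnrooti₁⟩ := hp₁
      obtain ⟨⟨hki₂, hF₂, hcard₂, hrootj₂, hnRi₂, hRk₂⟩, hnrooti₂⟩ := hp₂
      rw [Prod.ext_iff] at heq
      obtain ⟨hfst, hsnd⟩ := heq
      simp only at hfst hsnd
      have his₁ : (i, (succA F₁ i).2) ∈ F₁ := mem_succA_snd hnrooti₁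
      have his₂ : (i, (succA F₂ i).2) ∈ F₂ := mem_succA_snd hnrooti₂
      have hsucc₁ : succA F₁ i = (i, (succA F₁ i).2) := succA_eq hF₁.2.1 his₁
      have hsucc₂ : succA F₂ i = (i, (succA F₂ i).2) := succA_eq hF₂.2.1 his₂
      have hikE₁ : (i, k₁) ∉ F₁.erase (succA F₁ i) := by
        rw [hsucc₁]
        intro hmem
        exact (isRootOf_erase hF₁.2.1 his₁) _ hmem rfl
      have hikE₂ : (i, k₂) ∉ F₂.erase (succA F₂ i) := by
        rw [hsucc₂]
        intro hmem
        exact (isRootOf_erase hF₂.2.1 his₂) _ hmem rfl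
      -- the common image G
      have hG₁mem : (i, k₁) ∈ insert (i, k₁) (F₁.erase (succA F₁ i)) := Finset.mem_insert_self _ _
      have hG₂mem : (i, k₂) ∈ insert (i, k₁) (F₁.erase (succA F₁ i)) := by
        rw [hsnd]; exact Finset.mem_insert_self _ _
      have hGf : IsInForest (insert (i, k₁) (F₁.erase (succA F₁ i))) := by
        have hnki : ¬ Relation.ReflTransGen (arcStep F₁) k₁ i := by
          intro hcon
          exact hnRi₁ (reach_root_of_reach hF₁.2.1 hrootj₁ hcon hRk₁)
        refine isInForest_insert (isInForest_subset (Finset.erase_subset _ _) hF₁) ?_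
          (Ne.symm hki₁) (fun hcon => hnki (rtg_mono (Finset.erase_subset _ _) hcon))
        rw [hsucc₁]; exact isRootOf_erase hF₁.2.1 his₁
      have hkk : k₁ = k₂ := outArc_unique hGf.2.1 hG₁mem hG₂mem
      have hEE : F₁.erase (succA F₁ i) = F₂.erase (succA F₂ i) := by
        have e1 : F₁.erase (succA F₁ i)
            = (insert (i, k₁) (F₁.erase (succA F₁ i))).erase (i, k₁) :=
          (Finset.erase_insert hikE₁).symm
        have e2 : F₂.erase (succA F₂ i)
            = (insert (i, k₂) (F₂.erase (succA F₂ i))).erase (i, k₂) :=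
          (Finset.erase_insert hikE₂).symm
        rw [e1, e2, hsnd, hkk]
      have hFF : F₁ = F₂ := by
        calc F₁ = insert (succA F₁ i) (F₁.erase (succA F₁ i)) :=
              (Finset.insert_erase (hsucc₁ ▸ his₁)).symm
          _ = insert (succA F₂ i) (F₂.erase (succA F₂ i)) := by
              rw [hEE, hsucc₁, hsucc₂, hfst]
          _ = F₂ := Finset.insert_erase (hsucc₂ ▸ his₂)
      rw [Prod.ext_iff]; exact ⟨hkk, hFF⟩
    · rintro ⟨s, G⟩ hq
      simp only [Finset.mem_filter, Finset.mem_product, Finset.mem_erase, Finset.mem_univ,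
        and_true, true_and] at hq
      obtain ⟨hsi, hG, hcard, hrootj, hRi, hnRs⟩ := hq
      rcases Relation.ReflTransGen.cases_head hRi with rfl | ⟨k, hik, hkj⟩
      · exact absurd rfl hij
      have hki : k ≠ i := Ne.symm (hG.1 _ hik)
      have hEf : IsInForest (G.erase (i, k)) := isInForest_subset (Finset.erase_subset _ _) hG
      have hrootiE : IsRootOf (G.erase (i, k)) i := isRootOf_erase hG.2.1 hik
      have hrootjE : IsRootOf (G.erase (i, k)) j := isRootOf_subset (Finset.erase_subset _ _) hrootj
      have hnki : ¬ Relation.ReflTransGen (arcStep G) k i := by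
        intro hcon
        exact hG.2.2 i (Relation.TransGen.head' hik hcon)
      have hkE : Relation.ReflTransGen (arcStep (G.erase (i, k))) k j := rtg_erase hkj hnki
      have hnsiE : ¬ Relation.ReflTransGen (arcStep (G.erase (i, k))) s i := by
        intro hcon
        have h1 : Relation.ReflTransGen (arcStep G) s i := rtg_mono (Finset.erase_subset _ _) hcon
        exact hnRs (h1.trans hRi)
      have hisE : (i, s) ∉ G.erase (i, k) := fun hmem => hrootiE _ hmem rfl
      set F := insert ((i : Fin n), s) (G.erase (i, k)) with hF
      have hFf : IsInForest F := isInForest_insert hEf hrootiE (Ne.symm hsi) hnsiE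
      have hisF : (i, s) ∈ F := Finset.mem_insert_self _ _
      have hsuccF : succA F i = (i, s) := succA_eq hFf.2.1 hisF
      have hRkF : Relation.ReflTransGen (arcStep F) k j :=
        rtg_mono (Finset.subset_insert _ _) hkE
      have hnRiF : ¬ Relation.ReflTransGen (arcStep F) i j := by
        intro hcon
        rcases rtg_insert_decomp hcon with h1 | ⟨_, h2⟩
        · exact hij (root_reach_eq hrootiE h1).symm
        · rcases rtg_insert_decomp h2 with h3 | ⟨h3, _⟩
          · exact hnRs (rtg_mono (Finset.erase_subset _ _) h3)
          · exact hnsiE h3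
      refine ⟨(k, F), ?_, ?_⟩
      · simp only [hsA, Finset.mem_filter, Finset.mem_product, Finset.mem_erase, Finset.mem_univ,
          and_true, true_and]
        refine ⟨⟨hki, hFf, ?_, isRootOf_insert hrootjE (Ne.symm hij), hnRiF, hRkF⟩,
          fun hroot => hroot _ hisF rfl⟩
        rw [hF, Finset.card_insert_of_notMem hisE, Finset.card_erase_of_mem hik, hcard]
        have : 1 ≤ G.card := Finset.card_pos.mpr ⟨_, hik⟩
        omega
      · rw [Prod.ext_iff]
        constructor
        · simp only [hsuccF]
        · simp only [hsuccF]
          rw [hF, Finset.erase_insert hisE, Finset.insert_erase hik]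
    · rintro ⟨k, F⟩ hp
      simp only [hsA, Finset.mem_filter, Finset.mem_product, Finset.mem_erase, Finset.mem_univ,
        and_true, true_and] at hp
      obtain ⟨⟨hki, hF, hcard, hrootj, hnRi, hRk⟩, hnrooti⟩ := hp
      have his : (i, (succA F i).2) ∈ F := mem_succA_snd hnrooti
      have hsucc : succA F i = (i, (succA F i).2) := succA_eq hF.2.1 his
      have hikE : (i, k) ∉ F.erase (succA F i) := by
        rw [hsucc]
        intro hmem
        exact (isRootOf_erase hF.2.1 his) _ hmem rfl
      simp only [digraphWeight, Finset.prod_insert hikE]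
      have hw : ∏ a ∈ F, T a.1 a.2
          = T i (succA F i).2 * ∏ a ∈ F.erase (succA F i), T a.1 a.2 := by
        rw [hsucc]
        exact (Finset.mul_prod_erase F (fun a => T a.1 a.2) (hsucc ▸ his)).symm
      rw [hw]
      ring
  rw [hbij2]
  ring

end HitIdentity


section Final

variable {n : ℕ} {T : Matrix (Fin n) (Fin n) ℝ}

lemma fF_self (x : Fin n) : fF T x x = 0 := by
  rw [fF_eq]
  apply Finset.sum_eq_zero
  intro A _
  rw [if_neg (fun h => h.2.2.2 Relation.ReflTransGen.refl)]

lemma fF_identity (hn : 2 ≤ n) (hst : IsStochastic T) {i j : Fin n} (hij : i ≠ j) :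
    fF T i j = treeW T j + ∑ k, T i k * fF T k j := by
  have hkey := key_surgery (T := T) hn hij
  have hrow : T i i + ∑ k ∈ Finset.univ.erase i, T i k = 1 := by
    rw [Finset.add_sum_erase _ _ (Finset.mem_univ i)]; exact hst.2 i
  have hexp : ∑ k ∈ Finset.univ.erase i, T i k * (fF T i j - fF T k j)
      = (∑ k ∈ Finset.univ.erase i, T i k) * fF T i j
        - ∑ k ∈ Finset.univ.erase i, T i k * fF T k j := by
    rw [Finset.sum_mul, ← Finset.sum_sub_distrib]
    apply Finset.sum_congr rfl
    intro k _
    ring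
  rw [hexp] at hkey
  have hfull : ∑ k, T i k * fF T k j
      = T i i * fF T i j + ∑ k ∈ Finset.univ.erase i, T i k * fF T k j := by
    rw [← Finset.add_sum_erase _ _ (Finset.mem_univ i)]
  rw [hfull]
  have h2 : ∑ k ∈ Finset.univ.erase i, T i k = 1 - T i i := by linarith
  rw [h2] at hkey
  linarith

lemma hitting_eq_fF (hn : 2 ≤ n) (hst : IsStochastic T) (hirr : IsIrreducibleMC T)
    {m : Fin n → Fin n → ℝ} (hm : IsHittingTime T m) (i j : Fin n) :
    m i j * treeW T j = fF T i j := by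
  set d := fun k => m k j * treeW T j - fF T k j with hd
  have hdj : d j = 0 := by
    simp only [hd]
    rw [hm.1 j, fF_self j]
    ring
  have hharm : ∀ k, k ≠ j → d k = ∑ u, T k u * d u := by
    intro k hkj
    have h1 : m k j = 1 + ∑ u, T k u * m u j := hm.2 k j hkj
    have h2 : fF T k j = treeW T j + ∑ u, T k u * fF T u j := fF_identity hn hst hkj
    simp only [hd]
    rw [h1, h2]
    have h3 : ∀ u, T k u * (m u j * treeW T j - fF T u j)
        = T k u * m u j * treeW T j - T k u * fF T u j := by
      intro u; ring
    rw [Finset.sum_congr rfl (fun u _ => h3 u), Finset.sum_sub_distrib, ← Finset.sum_mul]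
    ring
  have := absorbed_eq_zero (by omega) hst hirr d hdj hharm i
  simp only [hd] at this
  linarith

end Final

/-- for the hitting times with `m i i = 0`,
`Σ_j π_j·m_ij = σ_{n-2}/σ_{n-1}` for every starting state `i`. -/
theorem stmt6 {n : ℕ} (hn : 2 ≤ n) (T : Matrix (Fin n) (Fin n) ℝ)
    (hst : IsStochastic T) (hirr : IsIrreducibleMC T)
    (pi : Fin n → ℝ) (hpi : IsStationaryDist T pi)
    (m : Fin n → Fin n → ℝ) (hm : IsHittingTime T m) :
    ∀ i, ∑ j, pi j * m i j = sigmaF T (n - 2) / sigmaF T (n - 1) := by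
  intro i
  have hσ : 0 < sigmaF T (n - 1) := sigmaF_pos hst hirr (by omega)
  rw [eq_div_iff (ne_of_gt hσ), Finset.sum_mul]
  rw [← sum_fF T hn i]
  apply Finset.sum_congr rfl
  intro j _
  calc pi j * m i j * sigmaF T (n - 1) = m i j * (pi j * sigmaF T (n - 1)) := by ring
    _ = m i j * treeW T j := by rw [pi_mul_sigma_eq_treeW (by omega) hst hirr hpi j]
    _ = fF T i j := hitting_eq_fF hn hst hirr hm i j
end

section
/- Forest formula for effective resistance: in a connected weighted undirected graph G, the effective resistance between vertices i and j equals f'_ij / q', where q' is the total weight of spanning trees of G and f'_ij is the total weight of 2-tree spanning forests of G having i and j in different trees. -/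
open Finset Relation Matrix
open scoped Classical

/-- The (undirected) step relation of a canonically oriented edge set. -/
def edgeStep {n : ℕ} (A : Finset (Fin n × Fin n)) (x y : Fin n) : Prop :=
  (x, y) ∈ A ∨ (y, x) ∈ A

/-- Every pair in `A` is canonically oriented, so `A` encodes a set of undirected edges. -/
def IsEdgeSet {n : ℕ} (A : Finset (Fin n × Fin n)) : Prop := ∀ a ∈ A, a.1 < a.2

/-- `A` is a spanning tree of the undirected graph on `Fin n`:
`n - 1` edges and connected. -/
def IsSpanningTreeU {n : ℕ} (A : Finset (Fin n × Fin n)) : Prop :=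
  IsEdgeSet A ∧ A.card = n - 1 ∧ ∀ u v : Fin n, Relation.ReflTransGen (edgeStep A) u v

/-- `A` is a 2-tree spanning forest of the undirected graph on `Fin n`
having `i` and `j` in different trees. -/
def IsTwoForestSep {n : ℕ} (A : Finset (Fin n × Fin n)) (i j : Fin n) : Prop :=
  IsEdgeSet A ∧ A.card = n - 2 ∧ ¬ Relation.ReflTransGen (edgeStep A) i j ∧
    ∀ v : Fin n, Relation.ReflTransGen (edgeStep A) v i ∨ Relation.ReflTransGen (edgeStep A) v j

/-- Total weight of the edge sets satisfying `P` (weights of forests are products of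
edge weights; weights of sets of forests are sums). -/
noncomputable def uWeightSum {n : ℕ} (W : Matrix (Fin n) (Fin n) ℝ)
    (P : Finset (Fin n × Fin n) → Prop) : ℝ :=
  ∑ A : Finset (Fin n × Fin n), if P A then digraphWeight W A else 0

/-- The weighted undirected graph with weight matrix `W` is connected. -/
def IsConnectedW {n : ℕ} (W : Matrix (Fin n) (Fin n) ℝ) : Prop :=
  ∀ i j : Fin n, Relation.ReflTransGen (fun a b => 0 < W a b) i j

namespace Forest

variable {n : ℕ}

/-- connectivity relation of an edge set -/
def Rel (A : Finset (Fin n × Fin n)) : Fin n → Fin n → Prop :=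
  Relation.ReflTransGen (edgeStep A)

lemma edgeStep_symm {A : Finset (Fin n × Fin n)} {x y : Fin n} (h : edgeStep A x y) :
    edgeStep A y x := h.symm

lemma Rel.refl {A : Finset (Fin n × Fin n)} {x : Fin n} : Rel A x x :=
  Relation.ReflTransGen.refl

lemma Rel.trans {A : Finset (Fin n × Fin n)} {x y z : Fin n} (h : Rel A x y) (h' : Rel A y z) :
    Rel A x z := Relation.ReflTransGen.trans h h'

lemma Rel.symm {A : Finset (Fin n × Fin n)} {x y : Fin n} (h : Rel A x y) : Rel A y x := by
  unfold Rel at h ⊢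
  induction h with
  | refl => exact Relation.ReflTransGen.refl
  | tail _ hs ih => exact Relation.ReflTransGen.head hs.symm ih

lemma Rel.single {A : Finset (Fin n × Fin n)} {x y : Fin n} (h : edgeStep A x y) : Rel A x y :=
  Relation.ReflTransGen.single h

lemma Rel.mono {A B : Finset (Fin n × Fin n)} (hAB : A ⊆ B) {x y : Fin n} (h : Rel A x y) :
    Rel B x y := by
  induction h with
  | refl => exact Rel.refl
  | tail _ hs ih => exact ih.tail (hs.imp (fun h => hAB h) (fun h => hAB h))

lemma rel_empty {x y : Fin n} (h : Rel (∅ : Finset (Fin n × Fin n)) x y) : x = y := by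
  induction h with
  | refl => rfl
  | tail _ hs ih => rcases hs with h | h <;> simp at h

/-- merging lemma for inserting an edge -/
lemma rel_insert_iff {A : Finset (Fin n × Fin n)} {u v x y : Fin n} :
    Rel (insert (u, v) A) x y ↔
      Rel A x y ∨ (Rel A x u ∧ Rel A v y) ∨ (Rel A x v ∧ Rel A u y) := by
  constructor
  · intro h
    induction h with
    | refl => exact Or.inl Rel.refl
    | tail _ hs ih =>
      rename_i b c _
      have hstep : edgeStep A b c ∨ (b = u ∧ c = v) ∨ (b = v ∧ c = u) := by
        rcases hs with h | h <;> rcases Finset.mem_insert.mp h with h | h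
        · obtain ⟨h1, h2⟩ := Prod.mk.injEq .. ▸ h
          exact Or.inr (Or.inl ⟨h1, h2⟩)
        · exact Or.inl (Or.inl h)
        · obtain ⟨h1, h2⟩ := Prod.mk.injEq .. ▸ h
          exact Or.inr (Or.inr ⟨h2, h1⟩)
        · exact Or.inl (Or.inr h)
      rcases hstep with hs' | ⟨hb, hc⟩ | ⟨hb, hc⟩
      · rcases ih with h | ⟨h1, h2⟩ | ⟨h1, h2⟩
        · exact Or.inl (h.tail hs')
        · exact Or.inr (Or.inl ⟨h1, h2.tail hs'⟩)
        · exact Or.inr (Or.inr ⟨h1, h2.tail hs'⟩)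
      · subst hb; subst hc
        rcases ih with h | ⟨h1, h2⟩ | ⟨h1, h2⟩
        · exact Or.inr (Or.inl ⟨h, Rel.refl⟩)
        · exact Or.inr (Or.inl ⟨h1, Rel.refl⟩)
        · exact Or.inl h1
      · subst hb; subst hc
        rcases ih with h | ⟨h1, h2⟩ | ⟨h1, h2⟩
        · exact Or.inr (Or.inr ⟨h, Rel.refl⟩)
        · exact Or.inl h1
        · exact Or.inr (Or.inr ⟨h1, Rel.refl⟩)
  · have hsub : A ⊆ insert (u, v) A := Finset.subset_insert _ _
    have huv : Rel (insert (u, v) A) u v :=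
      Rel.single (Or.inl (Finset.mem_insert_self _ _))
    rintro (h | ⟨h1, h2⟩ | ⟨h1, h2⟩)
    · exact h.mono hsub
    · exact ((h1.mono hsub).trans huv).trans (h2.mono hsub)
    · exact ((h1.mono hsub).trans huv.symm).trans (h2.mono hsub)


/-- set of component representatives (minima of components) -/
noncomputable def reps (A : Finset (Fin n × Fin n)) : Finset (Fin n) :=
  Finset.univ.filter (fun x => ∀ y, Rel A y x → x ≤ y)

lemma mem_reps {A : Finset (Fin n × Fin n)} {x : Fin n} :
    x ∈ reps A ↔ ∀ y, Rel A y x → x ≤ y := by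
  simp [reps]

lemma reps_empty : reps (∅ : Finset (Fin n × Fin n)) = Finset.univ := by
  ext x; simp only [mem_reps, Finset.mem_univ, iff_true]
  intro y h; exact le_of_eq (rel_empty h).symm

lemma reps_anti {A B : Finset (Fin n × Fin n)} (h : A ⊆ B) : reps B ⊆ reps A := by
  intro x hx
  rw [mem_reps] at hx ⊢
  exact fun y hy => hx y (hy.mono h)

/-- every vertex is related to a representative -/
lemma exists_rep (A : Finset (Fin n × Fin n)) (x : Fin n) :
    ∃ r ∈ reps A, Rel A x r := by
  have hne : (Finset.univ.filter (fun y => Rel A x y)).Nonempty :=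
    ⟨x, by simp [Rel.refl]⟩
  set C := Finset.univ.filter (fun y => Rel A x y) with hC
  refine ⟨C.min' hne, ?_, ?_⟩
  · rw [mem_reps]
    intro y hy
    have hxm : Rel A x (C.min' hne) := by
      have := C.min'_mem hne
      simpa [hC] using this
    have hxy : Rel A x y := hxm.trans hy.symm
    exact C.min'_le y (by simp [hC, hxy])
  · have := C.min'_mem hne
    simpa [hC] using this

lemma reps_card_le_insert (A : Finset (Fin n × Fin n)) (u v : Fin n) :
    (reps A).card ≤ (reps (insert (u, v) A)).card + 1 := by
  have hsub : reps (insert (u, v) A) ⊆ reps A := reps_anti (Finset.subset_insert _ _)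
  have hdiff : (reps A \ reps (insert (u, v) A)).card ≤ 1 := by
    refine Finset.card_le_one.mpr ?_
    intro x hx y hy
    simp only [Finset.mem_sdiff, mem_reps] at hx hy
    obtain ⟨hxA, hxB⟩ := hx
    obtain ⟨hyA, hyB⟩ := hy
    push_neg at hxB hyB
    obtain ⟨zx, hzx, hzx'⟩ := hxB
    obtain ⟨zy, hzy, hzy'⟩ := hyB
    have hzx2 : ¬ Rel A zx x := fun h => absurd (hxA _ h) (not_le.mpr hzx')
    have hzy2 : ¬ Rel A zy y := fun h => absurd (hyA _ h) (not_le.mpr hzy')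
    have hmin : ∀ p q : Fin n, (∀ z, Rel A z p → p ≤ z) → (∀ z, Rel A z q → q ≤ z) →
        Rel A p q → p = q := fun p q hp hq hpq =>
      le_antisymm (hp q hpq.symm) (hq p hpq)
    have hlt_x : zx < x := hzx'
    have hlt_y : zy < y := hzy'
    rcases rel_insert_iff.mp hzx with h | ⟨hx1, hx2⟩ | ⟨hx1, hx2⟩
    · exact absurd h hzx2
    all_goals rcases rel_insert_iff.mp hzy with h' | ⟨hy1, hy2⟩ | ⟨hy1, hy2⟩
    · exact absurd h' hzy2
    · -- x ∈ class v, y ∈ class v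
      exact hmin x y hxA hyA (hx2.symm.trans hy2)
    · -- x ∈ class v (hx2 : Rel A v x), y ∈ class u (hy2 : Rel A u y), zy ∈ class v
      exact absurd (hxA zy (hy1.trans hx2))
        (not_le.mpr (lt_of_lt_of_le hlt_y (le_trans (hyA zx (hx1.trans hy2)) hlt_x.le)))
    · exact absurd h' hzy2
    · -- x ∈ class u, y ∈ class v
      exact absurd (hxA zy (hy1.trans hx2))
        (not_le.mpr (lt_of_lt_of_le hlt_y (le_trans (hyA zx (hx1.trans hy2)) hlt_x.le)))
    · -- both class u
      exact hmin x y hxA hyA (hx2.symm.trans hy2)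
  calc (reps A).card = (reps A \ reps (insert (u, v) A)).card + (reps (insert (u,v) A)).card := by
        rw [Finset.card_sdiff_add_card_eq_card hsub]
      _ ≤ (reps (insert (u, v) A)).card + 1 := by omega


/-- number of vertices ≤ edges + components -/
lemma card_reps_bound (A : Finset (Fin n × Fin n)) :
    n ≤ A.card + (reps A).card := by
  induction A using Finset.induction_on with
  | empty => simp [reps_empty]
  | insert e B hnotmem ih =>
    have := reps_card_le_insert B e.1 e.2
    rw [Finset.card_insert_of_notMem hnotmem]
    have he : (insert e B) = insert (e.1, e.2) B := by simp
    rw [he]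
    omega

/-- connected iff one representative -/
lemma connected_of_reps_card (A : Finset (Fin n × Fin n)) (h : (reps A).card ≤ 1) :
    ∀ x y, Rel A x y := by
  intro x y
  obtain ⟨rx, hrx, hxr⟩ := exists_rep A x
  obtain ⟨ry, hry, hyr⟩ := exists_rep A y
  have : rx = ry := by
    by_contra hne
    have : 2 ≤ (reps A).card := Finset.one_lt_card.mpr ⟨rx, hrx, ry, hry, hne⟩
    omega
  exact (hxr.trans (this ▸ hyr.symm))

lemma reps_card_of_connected (A : Finset (Fin n × Fin n)) (hn : 1 ≤ n)
    (h : ∀ x y, Rel A x y) : (reps A).card = 1 := by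
  obtain ⟨r, hr, _⟩ := exists_rep A ⟨0, hn⟩
  refine Finset.card_eq_one.mpr ⟨r, ?_⟩
  ext x
  simp only [Finset.mem_singleton]
  constructor
  · intro hx
    rw [mem_reps] at hx hr
    exact le_antisymm (hx r (h r x)) (hr x (h x r))
  · rintro rfl; exact hr

lemma connected_card_ge (A : Finset (Fin n × Fin n)) (hn : 1 ≤ n)
    (h : ∀ x y, Rel A x y) : n - 1 ≤ A.card := by
  have := card_reps_bound A
  rw [reps_card_of_connected A hn h] at this
  omega


/-- removing an edge from a spanning tree: spanning two-forest separating the endpoints -/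
lemma bridge {T : Finset (Fin n × Fin n)} (hn2 : 2 ≤ n) (hT : IsSpanningTreeU T)
    {u v : Fin n} (he : (u, v) ∈ T) :
    ¬ Rel (T.erase (u, v)) u v ∧ ∀ x, Rel (T.erase (u, v)) x u ∨ Rel (T.erase (u, v)) x v := by
  obtain ⟨hedge, hcard, hconn⟩ := hT
  set G := T.erase (u, v) with hG
  have hGcard : G.card = n - 2 := by
    rw [hG, Finset.card_erase_of_mem he, hcard]
    omega
  have hspan : ∀ x, Rel G x u ∨ Rel G x v := by
    intro x
    have hx : Rel T u x := hconn u x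
    induction hx with
    | refl => exact Or.inl Rel.refl
    | @tail b c hxb hs ih =>
      by_cases hbc : ((b, c) = (u, v) ∨ (c, b) = (u, v))
      · rcases hbc with h | h
        · have : c = v := congrArg Prod.snd h
          subst this; exact Or.inr Rel.refl
        · have : c = u := congrArg Prod.fst h
          subst this; exact Or.inl Rel.refl
      · push_neg at hbc
        have hstep : edgeStep G b c := by
          rcases hs with h | h
          · exact Or.inl (Finset.mem_erase.mpr ⟨hbc.1, h⟩)
          · exact Or.inr (Finset.mem_erase.mpr ⟨hbc.2, h⟩)
        rcases ih with h | h
        · exact Or.inl ((Rel.single (edgeStep_symm hstep)).trans h)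
        · exact Or.inr ((Rel.single (edgeStep_symm hstep)).trans h)
  refine ⟨?_, hspan⟩
  intro hrel
  have hlift : ∀ x y, edgeStep T x y → Rel G x y := by
    intro x y hs
    by_cases hxy : ((x, y) = (u, v) ∨ (y, x) = (u, v))
    · rcases hxy with h | h
      · have h1 : x = u := congrArg Prod.fst h
        have h2 : y = v := congrArg Prod.snd h
        subst h1; subst h2; exact hrel
      · have h1 : y = u := congrArg Prod.fst h
        have h2 : x = v := congrArg Prod.snd h
        subst h1; subst h2; exact hrel.symm
    · push_neg at hxy
      rcases hs with h | h
      · exact Rel.single (Or.inl (Finset.mem_erase.mpr ⟨hxy.1, h⟩))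
      · exact Rel.single (Or.inr (Finset.mem_erase.mpr ⟨hxy.2, h⟩))
  have hGconn : ∀ x y, Rel G x y := by
    intro x y
    have hx : Rel T x y := hconn x y
    induction hx with
    | refl => exact Rel.refl
    | tail _ hs ih => exact ih.trans (hlift _ _ hs)
  have := connected_card_ge G (by omega) hGconn
  omega


/-- canonical orientation of an edge -/
def oedge (a c : Fin n) : Fin n × Fin n := if a < c then (a, c) else (c, a)

lemma oedge_comm (a c : Fin n) : oedge a c = oedge c a := by
  unfold oedge
  rcases lt_trichotomy a c with h | h | h
  · simp [h, not_lt.mpr h.le]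
  · simp [h]
  · simp [h, not_lt.mpr h.le]

lemma oedge_weight (W : Matrix (Fin n) (Fin n) ℝ) (hsym : ∀ i j, W i j = W j i)
    (a c : Fin n) : W (oedge a c).1 (oedge a c).2 = W a c := by
  unfold oedge
  split <;> simp [hsym a c]

lemma oedge_step {A : Finset (Fin n × Fin n)} {a c : Fin n} (h : oedge a c ∈ A) :
    edgeStep A a c := by
  unfold oedge at h
  split at h
  · exact Or.inl h
  · exact Or.inr h

lemma oedge_mem_of_step {A : Finset (Fin n × Fin n)} (hA : IsEdgeSet A) {a c : Fin n}
    (h : (a, c) ∈ A ∨ (c, a) ∈ A) : oedge a c ∈ A := by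
  rcases h with h | h
  · have : a < c := hA _ h
    simp [oedge, this, h]
  · have : c < a := hA _ h
    simp [oedge, not_lt.mpr this.le, h]

lemma oedge_self_not_mem {A : Finset (Fin n × Fin n)} (hA : IsEdgeSet A) (a : Fin n) :
    oedge a a ∉ A := by
  intro h
  have := hA _ h
  simp [oedge] at this

/-- the edge set obtained by deleting all edges at `a` -/
def delv (T : Finset (Fin n × Fin n)) (a : Fin n) : Finset (Fin n × Fin n) :=
  T.filter (fun p => p.1 ≠ a ∧ p.2 ≠ a)

lemma delv_rel_eq {T : Finset (Fin n × Fin n)} {a x : Fin n}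
    (h : Rel (delv T a) a x) : x = a := by
  induction h with
  | refl => rfl
  | @tail b c _ hs ih =>
    subst ih
    rcases hs with h | h <;>
      · have := (Finset.mem_filter.mp h).2
        simp at this

lemma delv_subset_erase {T : Finset (Fin n × Fin n)} {a c : Fin n} :
    delv T a ⊆ T.erase (oedge a c) := by
  intro p hp
  obtain ⟨hpT, hp1, hp2⟩ := Finset.mem_filter.mp hp
  refine Finset.mem_erase.mpr ⟨?_, hpT⟩
  intro hpe
  subst hpe
  unfold oedge at hp1 hp2
  split at hp1 <;> simp_all

lemma rel_delv_of_not_rel {T : Finset (Fin n × Fin n)} {a c x : Fin n}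
    (hno : ¬ Rel (T.erase (oedge a c)) c a) (h : Rel (T.erase (oedge a c)) c x) :
    Rel (delv T a) c x := by
  induction h with
  | refl => exact Rel.refl
  | @tail b d hcb hs ih =>
    by_cases hb : b = a
    · exact absurd (hb ▸ hcb) hno
    by_cases hd : d = a
    · exact absurd (hd ▸ hcb.tail hs) hno
    have hstep : edgeStep (delv T a) b d := by
      rcases hs with h | h
      · exact Or.inl (Finset.mem_filter.mpr ⟨Finset.mem_of_mem_erase h, hb, hd⟩)
      · exact Or.inr (Finset.mem_filter.mpr ⟨Finset.mem_of_mem_erase h, hd, hb⟩)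
    exact ih.tail hstep


lemma oedge_right_inj {a c1 c2 : Fin n} (h : oedge a c1 = oedge a c2) : c1 = c2 := by
  unfold oedge at h
  split at h <;> split at h <;>
    simp only [Prod.mk.injEq] at h <;> omega

lemma bridge' {T : Finset (Fin n × Fin n)} (hn2 : 2 ≤ n) (hT : IsSpanningTreeU T)
    {a c : Fin n} (he : oedge a c ∈ T) :
    ¬ Rel (T.erase (oedge a c)) a c ∧
      ∀ x, Rel (T.erase (oedge a c)) x a ∨ Rel (T.erase (oedge a c)) x c := by
  by_cases hac : a < c
  · simp only [oedge, if_pos hac] at he ⊢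
    exact bridge hn2 hT he
  · simp only [oedge, if_neg hac] at he ⊢
    have := bridge hn2 hT he
    exact ⟨fun h => this.1 h.symm, fun x => (this.2 x).symm⟩

lemma neighbor_count (hn2 : 2 ≤ n) {T : Finset (Fin n × Fin n)} (hT : IsSpanningTreeU T)
    (a j : Fin n) :
    (Finset.univ.filter fun c => oedge a c ∈ T ∧ Rel (T.erase (oedge a c)) c j).card
      = if a = j then 0 else 1 := by
  split
  · rename_i haj
    subst haj
    rw [Finset.card_eq_zero]
    ext c
    simp only [Finset.mem_filter, Finset.mem_univ, true_and, Finset.notMem_empty, iff_false,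
      not_and]
    intro he hrel
    exact (bridge' hn2 hT he).1 hrel.symm
  · rename_i haj
    -- existence
    have hclaim : ∀ x, Rel T j x →
        (Rel (delv T a) j x ∨ ∃ c, oedge a c ∈ T ∧ Rel (delv T a) j c) := by
      intro x hx
      induction hx with
      | refl => exact Or.inl Rel.refl
      | @tail b d hb hs ih =>
        rcases ih with hjb | hex
        · by_cases hba : b = a
          · subst hba
            exact absurd (delv_rel_eq hjb.symm) (Ne.symm haj)
          by_cases hda : d = a
          · subst hda
            refine Or.inr ⟨b, ?_, hjb⟩
            rw [oedge_comm]
            exact oedge_mem_of_step hT.1 hs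
          · have hstep : edgeStep (delv T a) b d := by
              rcases hs with h | h
              · exact Or.inl (Finset.mem_filter.mpr ⟨h, hba, hda⟩)
              · exact Or.inr (Finset.mem_filter.mpr ⟨h, hda, hba⟩)
            exact Or.inl (hjb.tail hstep)
        · exact Or.inr hex
    have hex : ∃ c, oedge a c ∈ T ∧ Rel (T.erase (oedge a c)) c j := by
      rcases hclaim a (hT.2.2 j a) with h | ⟨c, hc, hrel⟩
      · exact absurd (delv_rel_eq h.symm) (Ne.symm haj)
      · exact ⟨c, hc, (hrel.mono delv_subset_erase).symm⟩
    obtain ⟨c₀, hc₀, hrel₀⟩ := hex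
    rw [Finset.card_eq_one]
    refine ⟨c₀, ?_⟩
    ext c
    simp only [Finset.mem_filter, Finset.mem_univ, true_and, Finset.mem_singleton]
    constructor
    · rintro ⟨hc, hrel⟩
      by_contra hne
      have hno1 : ¬ Rel (T.erase (oedge a c)) c a :=
        fun h => (bridge' hn2 hT hc).1 h.symm
      have hno2 : ¬ Rel (T.erase (oedge a c₀)) c₀ a :=
        fun h => (bridge' hn2 hT hc₀).1 h.symm
      have hd1 : Rel (delv T a) c j := rel_delv_of_not_rel hno1 hrel
      have hd2 : Rel (delv T a) c₀ j := rel_delv_of_not_rel hno2 hrel₀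
      have hcc : Rel (delv T a) c c₀ := hd1.trans hd2.symm
      have hmem : oedge a c₀ ∈ T.erase (oedge a c) :=
        Finset.mem_erase.mpr ⟨fun h => hne (oedge_right_inj h.symm), hc₀⟩
      have : Rel (T.erase (oedge a c)) c a :=
        (hcc.mono delv_subset_erase).tail (edgeStep_symm (oedge_step hmem))
      exact hno1 this
    · rintro rfl
      exact ⟨hc₀, hrel₀⟩


lemma oedge_lt {y z : Fin n} (h : y ≠ z) : (oedge y z).1 < (oedge y z).2 := by
  rcases lt_or_gt_of_ne h with h' | h' <;> simp [oedge, h', not_lt.mpr h'.le]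

noncomputable def dw (W : Matrix (Fin n) (Fin n) ℝ) (A : Finset (Fin n × Fin n)) : ℝ :=
  ∏ a ∈ A, W a.1 a.2

lemma dw_nonneg {W : Matrix (Fin n) (Fin n) ℝ} (hnn : ∀ i j, 0 ≤ W i j)
    (A : Finset (Fin n × Fin n)) : 0 ≤ dw W A :=
  Finset.prod_nonneg fun a _ => hnn a.1 a.2

lemma dw_insert {W : Matrix (Fin n) (Fin n) ℝ} (hsym : ∀ i j, W i j = W j i)
    {G : Finset (Fin n × Fin n)} {y z : Fin n} (h : oedge y z ∉ G) :
    dw W (insert (oedge y z) G) = W y z * dw W G := by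
  rw [dw, Finset.prod_insert h, oedge_weight W hsym]
  rfl

/-- the key bijection: (2-forest separating y,j with z in j's tree) + edge yz ↔
spanning tree containing edge yz whose removal leaves z with j -/
lemma term_bij (hn2 : 2 ≤ n) (W : Matrix (Fin n) (Fin n) ℝ) (hsym : ∀ i j, W i j = W j i)
    {y z : Fin n} (hyz : y ≠ z) (j : Fin n) :
    ∑ G : Finset (Fin n × Fin n),
        (if IsTwoForestSep G y j ∧ Rel G z j then W y z * dw W G else 0)
      = ∑ T : Finset (Fin n × Fin n),
          (if IsSpanningTreeU T ∧ oedge y z ∈ T ∧ Rel (T.erase (oedge y z)) z j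
            then dw W T else 0) := by
  rw [← Finset.sum_filter, ← Finset.sum_filter]
  refine Finset.sum_bij' (fun G _ => insert (oedge y z) G) (fun T _ => T.erase (oedge y z))
    ?_ ?_ ?_ ?_ ?_
  · -- forward maps into target
    intro G hG
    rw [Finset.mem_filter] at hG
    obtain ⟨⟨hedge, hcard, hsep, hspan⟩, hzj⟩ := hG.2
    have hnm : oedge y z ∉ G := fun h =>
      hsep ((Rel.single (oedge_step h)).trans hzj)
    have hconn : ∀ v, Rel (insert (oedge y z) G) v y := by
      intro v
      have hsub : G ⊆ insert (oedge y z) G := Finset.subset_insert _ _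
      rcases hspan v with h | h
      · exact Rel.mono hsub h
      · exact (Rel.mono hsub h).trans ((Rel.mono hsub hzj.symm).tail
          (edgeStep_symm (oedge_step (Finset.mem_insert_self _ _))))
    refine Finset.mem_filter.mpr ⟨Finset.mem_univ _, ⟨?_, ?_, ?_⟩, ?_, ?_⟩
    · intro p hp
      rcases Finset.mem_insert.mp hp with h | h
      · exact h ▸ oedge_lt hyz
      · exact hedge p h
    · rw [Finset.card_insert_of_notMem hnm, hcard]
      omega
    · exact fun u v => (hconn u).trans (hconn v).symm
    · exact Finset.mem_insert_self _ _
    · rw [Finset.erase_insert hnm]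
      exact hzj
  · -- backward maps into source
    intro T hT
    rw [Finset.mem_filter] at hT
    obtain ⟨hTree, he, hzj⟩ := hT.2
    obtain ⟨hnrel, hspan⟩ := bridge' hn2 hTree he
    refine Finset.mem_filter.mpr ⟨Finset.mem_univ _, ⟨?_, ?_, ?_, ?_⟩, hzj⟩
    · exact fun p hp => hTree.1 p (Finset.mem_of_mem_erase hp)
    · rw [Finset.card_erase_of_mem he, hTree.2.1]
      omega
    · exact fun h => hnrel (h.trans hzj.symm)
    · intro v
      rcases hspan v with h | h
      · exact Or.inl h
      · exact Or.inr (h.trans hzj)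
  · intro G hG
    rw [Finset.mem_filter] at hG
    obtain ⟨⟨hedge, hcard, hsep, hspan⟩, hzj⟩ := hG.2
    have hnm : oedge y z ∉ G := fun h =>
      hsep ((Rel.single (oedge_step h)).trans hzj)
    exact Finset.erase_insert hnm
  · intro T hT
    rw [Finset.mem_filter] at hT
    exact Finset.insert_erase hT.2.2.1
  · intro G hG
    rw [Finset.mem_filter] at hG
    obtain ⟨⟨hedge, hcard, hsep, hspan⟩, hzj⟩ := hG.2
    have hnm : oedge y z ∉ G := fun h =>
      hsep ((Rel.single (oedge_step h)).trans hzj)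
    exact (dw_insert hsym hnm).symm


lemma crossing_edge {W : Matrix (Fin n) (Fin n) ℝ} {A : Finset (Fin n × Fin n)}
    {x y : Fin n} (h : Relation.ReflTransGen (fun a b => 0 < W a b) x y)
    (hnot : ¬ Rel A x y) : ∃ p q, 0 < W p q ∧ ¬ Rel A p q := by
  induction h with
  | refl => exact absurd Rel.refl hnot
  | @tail b c hxb hs ih =>
    by_cases hxbA : Rel A x b
    · by_cases hbc : Rel A b c
      · exact absurd (hxbA.trans hbc) hnot
      · exact ⟨b, c, hs, hbc⟩
    · exact ih hxbA

lemma exists_pos_tree (hn2 : 2 ≤ n) (W : Matrix (Fin n) (Fin n) ℝ)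
    (hsym : ∀ i j, W i j = W j i) (h0 : ∀ i, W i i = 0)
    (hconn : ∀ i j : Fin n, Relation.ReflTransGen (fun a b => 0 < W a b) i j) :
    ∃ T, IsSpanningTreeU T ∧ ∀ p ∈ T, 0 < W p.1 p.2 := by
  suffices h : ∀ k (A : Finset (Fin n × Fin n)), IsEdgeSet A → (∀ p ∈ A, 0 < W p.1 p.2) →
      A.card + (reps A).card = n → (reps A).card = k →
      ∃ T, IsSpanningTreeU T ∧ ∀ p ∈ T, 0 < W p.1 p.2 by
    refine h n ∅ (by simp [IsEdgeSet]) (by simp) ?_ ?_ <;>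
      simp [reps_empty]
  intro k
  induction k using Nat.strong_induction_on with
  | _ k ih =>
    intro A hedge hpos hinv hk
    have hkpos : 1 ≤ (reps A).card := by
      obtain ⟨r, hr, -⟩ := exists_rep A ⟨0, by omega⟩
      exact Finset.card_pos.mpr ⟨r, hr⟩
    rcases Nat.lt_or_ge k 2 with hk2 | hk2
    · -- k ≤ 1 : connected
      refine ⟨A, ⟨hedge, by omega, ?_⟩, hpos⟩
      exact connected_of_reps_card A (by omega)
    · -- k ≥ 2 : grow
      obtain ⟨r1, hr1, r2, hr2, hne⟩ := Finset.one_lt_card.mp (by omega : 1 < (reps A).card)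
      have hnrel : ¬ Rel A r1 r2 := by
        intro h
        rw [mem_reps] at hr1 hr2
        exact hne (le_antisymm (hr1 r2 h.symm) (hr2 r1 h))
      obtain ⟨p, q, hpq, hpqA⟩ := crossing_edge (hconn r1 r2) hnrel
      have hpqne : p ≠ q := fun h => by
        rw [h, h0] at hpq; exact lt_irrefl 0 hpq
      have henm : oedge p q ∉ A := fun h => hpqA (Rel.single (oedge_step h))
      set B := insert (oedge p q) A with hB
      have hBedge : IsEdgeSet B := by
        intro x hx
        rcases Finset.mem_insert.mp hx with h | h
        · exact h ▸ oedge_lt hpqne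
        · exact hedge x h
      have hBpos : ∀ x ∈ B, 0 < W x.1 x.2 := by
        intro x hx
        rcases Finset.mem_insert.mp hx with h | h
        · subst h
          rw [oedge_weight W hsym]
          exact hpq
        · exact hpos x h
      have hBcard : B.card = A.card + 1 := Finset.card_insert_of_notMem henm
      -- reps drop by exactly one
      obtain ⟨rp, hrp, hprp⟩ := exists_rep A p
      obtain ⟨rq, hrq, hqrq⟩ := exists_rep A q
      have hrpq : rp ≠ rq := fun h =>
        hpqA (hprp.trans (h ▸ hqrq.symm))
      have hkey : ∀ s t rs rt : Fin n, oedge s t ∈ B → Rel A s rs → Rel A t rt → rt < rs →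
          rs ∉ reps B := by
        intro s t rs rt hst hs ht hlt hrs
        rw [mem_reps] at hrs
        have hrel : Rel B rt rs := by
          have hsub : A ⊆ B := Finset.subset_insert _ _
          exact ((Rel.mono hsub ht.symm).tail (edgeStep_symm (oedge_step hst))).trans
            (Rel.mono hsub hs)
        exact absurd (hrs rt hrel) (not_le.mpr hlt)
      have hdrop : ∃ m ∈ reps A, m ∉ reps B := by
        rcases lt_or_gt_of_ne hrpq with h | h
        · exact ⟨rq, hrq, hkey q p rq rp (oedge_comm p q ▸ Finset.mem_insert_self _ _)
            hqrq hprp h⟩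
        · exact ⟨rp, hrp, hkey p q rp rq (Finset.mem_insert_self _ _) hprp hqrq h⟩
      have hssub : reps B ⊂ reps A := by
        obtain ⟨m, hm1, hm2⟩ := hdrop
        exact ⟨reps_anti (Finset.subset_insert _ _), fun h => hm2 (h hm1)⟩
      have hlt : (reps B).card < k := hk ▸ Finset.card_lt_card hssub
      have hge : k ≤ (reps B).card + 1 := by
        have := reps_card_le_insert A p q
        have hor : B = insert (p, q) A ∨ B = insert (q, p) A := by
          rw [hB]
          unfold oedge
          split
          · exact Or.inl rfl
          · exact Or.inr rfl
        rcases hor with h | h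
        · rw [← h] at this; omega
        · have := reps_card_le_insert A q p
          rw [← h] at this; omega
      have hBrep : (reps B).card = k - 1 := by omega
      exact ih (k - 1) (by omega) B hBedge hBpos (by omega) hBrep


noncomputable def Fw (W : Matrix (Fin n) (Fin n) ℝ) (i j : Fin n) : ℝ :=
  ∑ G : Finset (Fin n × Fin n), if IsTwoForestSep G i j then dw W G else 0

noncomputable def tauW (W : Matrix (Fin n) (Fin n) ℝ) : ℝ :=
  ∑ T : Finset (Fin n × Fin n), if IsSpanningTreeU T then dw W T else 0

lemma two_forest_symm {G : Finset (Fin n × Fin n)} {i j : Fin n}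
    (h : IsTwoForestSep G i j) : IsTwoForestSep G j i := by
  obtain ⟨h1, h2, h3, h4⟩ := h
  exact ⟨h1, h2, fun hr => h3 (Rel.symm hr), fun v => (h4 v).symm⟩

lemma Fw_symm (W : Matrix (Fin n) (Fin n) ℝ) (i j : Fin n) : Fw W i j = Fw W j i := by
  unfold Fw
  refine Finset.sum_congr rfl fun G _ => ?_
  congr 1
  simp only [eq_iff_iff]
  exact ⟨two_forest_symm, two_forest_symm⟩

lemma Fw_self (W : Matrix (Fin n) (Fin n) ℝ) (i : Fin n) : Fw W i i = 0 := by
  unfold Fw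
  refine Finset.sum_eq_zero fun G _ => ?_
  rw [if_neg]
  rintro ⟨-, -, h3, -⟩
  exact h3 Relation.ReflTransGen.refl

lemma two_forest_transfer {G : Finset (Fin n × Fin n)} {a c j : Fin n}
    (h : IsTwoForestSep G a j) (hc : ¬ Rel G c j) : IsTwoForestSep G c j := by
  obtain ⟨h1, h2, h3, h4⟩ := h
  have hca : Rel G c a := by
    rcases h4 c with h | h
    · exact h
    · exact absurd h hc
  refine ⟨h1, h2, hc, fun v => ?_⟩
  rcases h4 v with h | h
  · exact Or.inl (h.trans hca.symm)
  · exact Or.inr h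

/-- pointwise indicator identity -/
lemma pointwise_id (W : Matrix (Fin n) (Fin n) ℝ) (a c j : Fin n)
    (G : Finset (Fin n × Fin n)) :
    W a c * (if IsTwoForestSep G a j then dw W G else 0)
      - W a c * (if IsTwoForestSep G c j then dw W G else 0)
    = (if IsTwoForestSep G a j ∧ Rel G c j then W a c * dw W G else 0)
      - (if IsTwoForestSep G c j ∧ Rel G a j then W a c * dw W G else 0) := by
  by_cases h1 : IsTwoForestSep G a j <;> by_cases h2 : IsTwoForestSep G c j
  · rw [if_pos h1, if_pos h2, if_neg (fun h => h2.2.2.1 h.2), if_neg (fun h => h1.2.2.1 h.2)]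
    ring
  · have hcj : Rel G c j := by
      by_contra hc
      exact h2 (two_forest_transfer h1 hc)
    rw [if_pos h1, if_neg h2, if_pos ⟨h1, hcj⟩, if_neg (fun h => h2 h.1)]
    ring
  · have haj : Rel G a j := by
      by_contra hc
      exact h1 (two_forest_transfer h2 hc)
    rw [if_neg h1, if_pos h2, if_neg (fun h => h1 h.1), if_pos ⟨h2, haj⟩]
    ring
  · rw [if_neg h1, if_neg h2, if_neg (fun h => h1 h.1), if_neg (fun h => h2 h.1)]
    ring


noncomputable def Dtot (W : Matrix (Fin n) (Fin n) ℝ) (a : Fin n) : ℝ :=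
  ∑ c : Fin n, ∑ T : Finset (Fin n × Fin n),
    if IsSpanningTreeU T ∧ oedge a c ∈ T then dw W T else 0

lemma S_split (W : Matrix (Fin n) (Fin n) ℝ) (a j : Fin n) (c : Fin n)
    (T : Finset (Fin n × Fin n)) (hn2 : 2 ≤ n) :
    (if IsSpanningTreeU T ∧ oedge a c ∈ T ∧ Rel (T.erase (oedge a c)) c j
        then dw W T else 0)
      + (if IsSpanningTreeU T ∧ oedge a c ∈ T ∧ Rel (T.erase (oedge a c)) a j
        then dw W T else 0)
      = if IsSpanningTreeU T ∧ oedge a c ∈ T then dw W T else 0 := by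
  by_cases hC : IsSpanningTreeU T ∧ oedge a c ∈ T
  · obtain ⟨hT, he⟩ := hC
    obtain ⟨hnrel, hspan⟩ := bridge' hn2 hT he
    by_cases hQ1 : Rel (T.erase (oedge a c)) c j
    · have hQ2 : ¬ Rel (T.erase (oedge a c)) a j := fun h =>
        hnrel (h.trans hQ1.symm)
      rw [if_pos ⟨hT, he, hQ1⟩, if_neg (fun h => hQ2 h.2.2), if_pos ⟨hT, he⟩]
      ring
    · have hQ2 : Rel (T.erase (oedge a c)) a j := by
        rcases hspan j with h | h
        · exact h.symm
        · exact absurd h.symm hQ1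
      rw [if_neg (fun h => hQ1 h.2.2), if_pos ⟨hT, he, hQ2⟩, if_pos ⟨hT, he⟩]
      ring
  · rw [if_neg (fun h => hC ⟨h.1, h.2.1⟩), if_neg (fun h => hC ⟨h.1, h.2.1⟩), if_neg hC]
    ring

lemma T1_eval (hn2 : 2 ≤ n) (W : Matrix (Fin n) (Fin n) ℝ) (a j : Fin n) :
    (∑ c : Fin n, ∑ T : Finset (Fin n × Fin n),
        if IsSpanningTreeU T ∧ oedge a c ∈ T ∧ Rel (T.erase (oedge a c)) c j
          then dw W T else 0)
      = (if a = j then 0 else 1) * tauW W := by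
  rw [Finset.sum_comm]
  have hinner : ∀ T : Finset (Fin n × Fin n),
      (∑ c : Fin n, if IsSpanningTreeU T ∧ oedge a c ∈ T ∧ Rel (T.erase (oedge a c)) c j
          then dw W T else 0)
        = (if a = j then 0 else 1) * (if IsSpanningTreeU T then dw W T else 0) := by
    intro T
    by_cases hT : IsSpanningTreeU T
    · simp only [hT, true_and, if_true]
      rw [← Finset.sum_filter, Finset.sum_const, neighbor_count hn2 hT a j]
      split <;> simp
    · simp [hT]
  rw [Finset.sum_congr rfl fun T _ => hinner T, ← Finset.mul_sum]
  rfl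

lemma master (hn2 : 2 ≤ n) (W : Matrix (Fin n) (Fin n) ℝ) (hsym : ∀ i j, W i j = W j i)
    (a j : Fin n) :
    ∑ c, lap W a c * Fw W c j
      = 2 * ((if a = j then 0 else 1) * tauW W) - Dtot W a := by
  have hlap : ∀ c, lap W a c = (if a = c then (∑ b, W a b) else 0) - W a c := by
    intro c
    simp [lap, Matrix.sub_apply, Matrix.diagonal_apply]
  have step1 : ∑ c, lap W a c * Fw W c j
      = ∑ c, (W a c * Fw W a j - W a c * Fw W c j) := by
    simp only [hlap, sub_mul]
    rw [Finset.sum_sub_distrib, Finset.sum_sub_distrib]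
    congr 1
    have hpt : ∀ c : Fin n, (if a = c then (∑ b, W a b) else 0) * Fw W c j
        = if a = c then (∑ b, W a b) * Fw W c j else 0 := by
      intro c; split <;> simp
    rw [Finset.sum_congr rfl (fun c _ => hpt c),
      Finset.sum_ite_eq Finset.univ a (fun c => (∑ b, W a b) * Fw W c j),
      if_pos (Finset.mem_univ a), Finset.sum_mul]
  rw [step1]
  have hterm : ∀ c : Fin n, W a c * Fw W a j - W a c * Fw W c j
      = (∑ G : Finset (Fin n × Fin n),
          if IsTwoForestSep G a j ∧ Rel G c j then W a c * dw W G else 0)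
        - (∑ G : Finset (Fin n × Fin n),
          if IsTwoForestSep G c j ∧ Rel G a j then W a c * dw W G else 0) := by
    intro c
    rw [Fw, Fw, Finset.mul_sum, Finset.mul_sum, ← Finset.sum_sub_distrib,
      ← Finset.sum_sub_distrib]
    exact Finset.sum_congr rfl fun G _ => pointwise_id W a c j G
  have hS1 : ∀ c : Fin n, (∑ G : Finset (Fin n × Fin n),
        if IsTwoForestSep G a j ∧ Rel G c j then W a c * dw W G else 0)
      = ∑ T : Finset (Fin n × Fin n),
          if IsSpanningTreeU T ∧ oedge a c ∈ T ∧ Rel (T.erase (oedge a c)) c j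
            then dw W T else 0 := by
    intro c
    by_cases hac : a = c
    · subst hac
      rw [Finset.sum_eq_zero, Finset.sum_eq_zero]
      · intro T _
        exact if_neg (fun h => oedge_self_not_mem h.1.1 a h.2.1)
      · intro G _
        exact if_neg (fun h => h.1.2.2.1 h.2)
    · exact term_bij hn2 W hsym hac j
  have hS2 : ∀ c : Fin n, (∑ G : Finset (Fin n × Fin n),
        if IsTwoForestSep G c j ∧ Rel G a j then W a c * dw W G else 0)
      = ∑ T : Finset (Fin n × Fin n),
          if IsSpanningTreeU T ∧ oedge a c ∈ T ∧ Rel (T.erase (oedge a c)) a j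
            then dw W T else 0 := by
    intro c
    by_cases hac : a = c
    · subst hac
      rw [Finset.sum_eq_zero, Finset.sum_eq_zero]
      · intro T _
        exact if_neg (fun h => oedge_self_not_mem h.1.1 a h.2.1)
      · intro G _
        exact if_neg (fun h => h.1.2.2.1 h.2)
    · have := term_bij hn2 W hsym (Ne.symm hac) j
      rw [oedge_comm c a] at this
      rw [← this]
      exact Finset.sum_congr rfl fun G _ => by rw [hsym a c]
  rw [Finset.sum_congr rfl fun c _ => (hterm c).trans (by rw [hS1 c, hS2 c])]
  rw [Finset.sum_sub_distrib, T1_eval hn2 W a j]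
  have hsplit : (∑ c : Fin n, ∑ T : Finset (Fin n × Fin n),
        if IsSpanningTreeU T ∧ oedge a c ∈ T ∧ Rel (T.erase (oedge a c)) a j
          then dw W T else 0)
      = Dtot W a - (if a = j then 0 else 1) * tauW W := by
    have : (∑ c : Fin n, ∑ T : Finset (Fin n × Fin n),
          if IsSpanningTreeU T ∧ oedge a c ∈ T ∧ Rel (T.erase (oedge a c)) c j
            then dw W T else 0)
        + (∑ c : Fin n, ∑ T : Finset (Fin n × Fin n),
          if IsSpanningTreeU T ∧ oedge a c ∈ T ∧ Rel (T.erase (oedge a c)) a j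
            then dw W T else 0)
        = Dtot W a := by
      rw [← Finset.sum_add_distrib]
      refine Finset.sum_congr rfl fun c _ => ?_
      rw [← Finset.sum_add_distrib]
      exact Finset.sum_congr rfl fun T _ => S_split W a j c T hn2
    rw [T1_eval hn2 W a j] at this
    linarith
  rw [hsplit]
  ring
end Forest

open Forest

/-- forest formula for effective resistance: `Ω(i,j) = f'_ij / q'`,
where `Ω` is defined via the group inverse of the Laplacian. -/
theorem stmt7 {n : ℕ} (hn : 2 ≤ n) (W : Matrix (Fin n) (Fin n) ℝ)
    (hsym : ∀ i j, W i j = W j i) (hnn : ∀ i j, 0 ≤ W i j) (h0 : ∀ i, W i i = 0)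
    (hconn : IsConnectedW W)
    (Y : Matrix (Fin n) (Fin n) ℝ) (hY : IsGroupInverse (lap W) Y) :
    ∀ i j, i ≠ j →
      Y i i + Y j j - Y i j - Y j i =
        uWeightSum W (fun A => IsTwoForestSep A i j) / uWeightSum W IsSpanningTreeU := by
  intro i j hij
  -- positivity of tree weight
  have htau : 0 < tauW W := by
    obtain ⟨T₀, hT₀, hpos⟩ := exists_pos_tree hn W hsym h0 hconn
    have h1 : 0 < dw W T₀ := Finset.prod_pos fun p hp => hpos p hp
    have h2 : dw W T₀ ≤ tauW W := by
      have := Finset.single_le_sum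
        (f := fun T => if IsSpanningTreeU T then dw W T else 0)
        (fun T _ => by
          split
          · exact dw_nonneg hnn T
          · exact le_refl 0)
        (Finset.mem_univ T₀)
      simp only [if_pos hT₀] at this
      exact this
    linarith
  have hτ0 : tauW W ≠ 0 := ne_of_gt htau
  set L := lap W with hL
  have hLsymm : ∀ p q, L p q = L q p := by
    intro p q
    simp only [hL, lap, Matrix.sub_apply, Matrix.diagonal_apply]
    by_cases h : p = q
    · subst h; simp
    · rw [if_neg h, if_neg (Ne.symm h), hsym]
  have hLYL : ∀ p q, ∑ d, (∑ c, L p c * Y c d) * L d q = L p q := by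
    intro p q
    have h := congrFun (congrFun hY.1 p) q
    simpa [Matrix.mul_apply] using h
  set v : Fin n → ℝ := fun c => (Fw W c j - Fw W c i) / (2 * tauW W) with hv
  set x : Fin n → ℝ := fun a => (if a = i then (1:ℝ) else 0) - (if a = j then 1 else 0) with hx
  have hLv : ∀ a, (∑ c, L a c * v c) = x a := by
    intro a
    have hj' := master hn W hsym a j
    have hi' := master hn W hsym a i
    have hnum : ∑ c, L a c * v c
        = ((∑ c, L a c * Fw W c j) - (∑ c, L a c * Fw W c i)) / (2 * tauW W) := by
      rw [← Finset.sum_sub_distrib, Finset.sum_div]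
      refine Finset.sum_congr rfl fun c _ => ?_
      rw [hv]
      field_simp
    rw [hnum, hj', hi']
    by_cases hai : a = i <;> by_cases haj : a = j
    · exact absurd (hai ▸ haj : i = j) hij
    · subst hai
      simp only [hx, if_pos, if_neg haj, if_neg hij]
      field_simp
      try ring
    · subst haj
      simp only [hx, if_pos, if_neg hai, if_neg (Ne.symm hij)]
      field_simp
      try ring
    · simp only [hx, if_neg hai, if_neg haj]
      field_simp
      ring
  -- the quadratic form
  have hinner : ∀ c, (∑ d, Y c d * x d) = Y c i - Y c j := by
    intro c
    rw [hx]
    simp only [mul_sub, mul_ite, mul_one, mul_zero, Finset.sum_sub_distrib,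
      Finset.sum_ite_eq' Finset.univ, Finset.mem_univ, if_pos]
  have hS : (∑ c, x c * (∑ d, Y c d * x d)) = Y i i + Y j j - Y i j - Y j i := by
    rw [Finset.sum_congr rfl fun c _ => by rw [hinner c]]
    rw [hx]
    simp only [sub_mul, ite_mul, one_mul, zero_mul, Finset.sum_sub_distrib,
      Finset.sum_ite_eq' Finset.univ, Finset.mem_univ, if_pos]
    ring
  have htp : ∀ p, (∑ c, L p c * (∑ d, Y c d * x d)) = x p := by
    intro p
    calc ∑ c, L p c * (∑ d, Y c d * x d)
        = ∑ c, ∑ d, L p c * (Y c d * x d) := by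
          exact Finset.sum_congr rfl fun c _ => Finset.mul_sum _ _ _
      _ = ∑ d, ∑ c, L p c * (Y c d * x d) := Finset.sum_comm
      _ = ∑ d, (∑ c, L p c * Y c d) * x d := by
          refine Finset.sum_congr rfl fun d _ => ?_
          rw [Finset.sum_mul]
          exact Finset.sum_congr rfl fun c _ => by ring
      _ = ∑ d, (∑ c, L p c * Y c d) * (∑ q, L d q * v q) := by
          exact Finset.sum_congr rfl fun d _ => by rw [hLv d]
      _ = ∑ d, ∑ q, ((∑ c, L p c * Y c d) * L d q) * v q := by
          refine Finset.sum_congr rfl fun d _ => ?_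
          rw [Finset.mul_sum]
          exact Finset.sum_congr rfl fun q _ => by ring
      _ = ∑ q, (∑ d, (∑ c, L p c * Y c d) * L d q) * v q := by
          rw [Finset.sum_comm]
          exact Finset.sum_congr rfl fun q _ => by rw [Finset.sum_mul]
      _ = ∑ q, L p q * v q := by
          exact Finset.sum_congr rfl fun q _ => by rw [hLYL p q]
      _ = x p := hLv p
  have hmain : (∑ c, x c * (∑ d, Y c d * x d)) = v i - v j := by
    calc ∑ c, x c * (∑ d, Y c d * x d)
        = ∑ c, (∑ p, L c p * v p) * (∑ d, Y c d * x d) := by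
          exact Finset.sum_congr rfl fun c _ => by rw [hLv c]
      _ = ∑ c, ∑ p, v p * (L p c * (∑ d, Y c d * x d)) := by
          refine Finset.sum_congr rfl fun c _ => ?_
          rw [Finset.sum_mul]
          exact Finset.sum_congr rfl fun p _ => by rw [hLsymm c p]; ring
      _ = ∑ p, ∑ c, v p * (L p c * (∑ d, Y c d * x d)) := Finset.sum_comm
      _ = ∑ p, v p * (∑ c, L p c * (∑ d, Y c d * x d)) := by
          exact Finset.sum_congr rfl fun p _ => (Finset.mul_sum _ _ _).symm
      _ = ∑ p, v p * x p := by
          exact Finset.sum_congr rfl fun p _ => by rw [htp p]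
      _ = v i - v j := by
          rw [hx]
          simp only [mul_sub, mul_ite, mul_one, mul_zero, Finset.sum_sub_distrib,
            Finset.sum_ite_eq' Finset.univ, Finset.mem_univ, if_pos]
  have hval : v i - v j = Fw W i j / tauW W := by
    rw [hv]
    simp only
    rw [Fw_self, Fw_self, Fw_symm W j i]
    field_simp
    ring
  have hfin : Y i i + Y j j - Y i j - Y j i = Fw W i j / tauW W := by
    rw [← hS, hmain, hval]
  rw [hfin]
  rfl
end

section
/- If the transition matrix of a Markov chain on a connected weighted undirected graph G is T = I - τ·L̃ with 0 < τ ≤ (max_i Σ_j w_ij)^{-1}, then the commute time matrix C satisfies C = (n/τ)·Ω, where Ω is the matrix of effective resistances of G. -/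
open Finset Relation Matrix
open scoped Classical

/-! The hitting times `m(·, j)` solve the linear system `τ (L̃ m(·, j))ᵢ = 1` for `i ≠ j`,
`m(j, j) = 0`. This system has at most one solution: the difference `d` of two solutions
has Dirichlet energy `d ⬝ᵥ L̃ d = ½ ∑ᵢₖ wᵢₖ (dᵢ - dₖ)²` equal to `∑ᵢ dᵢ (L̃ d)ᵢ = 0`, so `d` is
constant on the connected graph, hence zero. The same energy argument shows that the
kernel of `L̃` consists of the constants, whence `L̃ Y = I - J / n`, and then
`(n / τ) (Y_jj - Y_ij)` solves the system. Adding `m(i, j)` and `m(j, i)` gives `(n / τ) Ω(i, j)`. -/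

section Laplacian

variable {n : ℕ} {W : Matrix (Fin n) (Fin n) ℝ}

lemma lap_mulVec_apply (W : Matrix (Fin n) (Fin n) ℝ) (v : Fin n → ℝ) (i : Fin n) :
    (lap W *ᵥ v) i = ∑ k, W i k * (v i - v k) := by
  rw [lap, sub_mulVec, Pi.sub_apply, mulVec_diagonal]
  simp [mulVec, dotProduct, mul_sub, sum_mul]

lemma sum_lap_apply_left (hsym : ∀ i j, W i j = W j i) (k : Fin n) : ∑ i, lap W i k = 0 := by
  simp [lap, diagonal_apply, hsym k, sum_sub_distrib]

lemma two_mul_dotProduct_lap_mulVec (hsym : ∀ i j, W i j = W j i) (v : Fin n → ℝ) :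
    2 * (v ⬝ᵥ lap W *ᵥ v) = ∑ i, ∑ k, W i k * (v i - v k) ^ 2 := by
  have hswap : ∑ i, v i * ∑ k, W i k * (v i - v k) = ∑ i, ∑ k, W i k * (v k * (v k - v i)) := by
    rw [sum_comm]
    simp_rw [mul_sum, hsym]
    exact sum_congr rfl fun _ _ => sum_congr rfl fun _ _ => by ring
  simp only [dotProduct, lap_mulVec_apply]
  rw [two_mul]
  nth_rewrite 2 [hswap]
  simp_rw [mul_sum, ← sum_add_distrib]
  exact sum_congr rfl fun _ _ => sum_congr rfl fun _ _ => by ring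

lemma eq_of_dotProduct_lap_mulVec_eq_zero (hsym : ∀ i j, W i j = W j i)
    (hnn : ∀ i j, 0 ≤ W i j) (hconn : IsConnectedW W) {v : Fin n → ℝ}
    (hv : v ⬝ᵥ lap W *ᵥ v = 0) (a b : Fin n) : v a = v b := by
  have hterm_nonneg : ∀ i k, 0 ≤ W i k * (v i - v k) ^ 2 := fun i k =>
    mul_nonneg (hnn i k) (sq_nonneg _)
  have henergy : ∑ i, ∑ k, W i k * (v i - v k) ^ 2 = 0 := by
    rw [← two_mul_dotProduct_lap_mulVec hsym, hv, mul_zero]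
  have hterm : ∀ i k, W i k * (v i - v k) ^ 2 = 0 := fun i k => by
    have hrow := (Fintype.sum_eq_zero_iff_of_nonneg fun i =>
      sum_nonneg fun k _ => hterm_nonneg i k).mp henergy
    exact congrFun ((Fintype.sum_eq_zero_iff_of_nonneg (hterm_nonneg i)).mp
      (congrFun hrow i)) k
  induction hconn a b with
  | refl => rfl
  | tail _ hpos ih =>
    rw [ih, ← sub_eq_zero, ← sq_eq_zero_iff]
    exact (mul_eq_zero.mp (hterm _ _)).resolve_left hpos.ne'

lemma eq_zero_of_lap_mulVec_eq_zero_of_ne (hsym : ∀ i j, W i j = W j i)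
    (hnn : ∀ i j, 0 ≤ W i j) (hconn : IsConnectedW W) {v : Fin n → ℝ} {j : Fin n}
    (hvj : v j = 0) (hLv : ∀ i, i ≠ j → (lap W *ᵥ v) i = 0) (i : Fin n) : v i = 0 := by
  have hv : v ⬝ᵥ lap W *ᵥ v = 0 := sum_eq_zero fun k _ => by
    rcases eq_or_ne k j with rfl | hkj
    · rw [hvj, zero_mul]
    · rw [hLv k hkj, mul_zero]
  rw [eq_of_dotProduct_lap_mulVec_eq_zero hsym hnn hconn hv i j, hvj]

lemma lap_mul_apply_of_isGroupInverse (hsym : ∀ i j, W i j = W j i)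
    (hnn : ∀ i j, 0 ≤ W i j) (hconn : IsConnectedW W) {Y : Matrix (Fin n) (Fin n) ℝ}
    (hY : IsGroupInverse (lap W) Y) (i j : Fin n) :
    (lap W * Y) i j = (1 : Matrix (Fin n) (Fin n) ℝ) i j - (n : ℝ)⁻¹ := by
  obtain ⟨hLYL, -, hcomm⟩ := hY
  set K : Matrix (Fin n) (Fin n) ℝ := 1 - lap W * Y with hK
  have hLK : lap W * K = 0 := by
    rw [hK, mul_sub, mul_one, hcomm, ← mul_assoc, hLYL, sub_self]
  have hconst : ∀ a, K a j = K i j := fun a =>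
    eq_of_dotProduct_lap_mulVec_eq_zero (v := fun a => K a j) hsym hnn hconn
      (by simp [mulVec, dotProduct, ← mul_apply, hLK]) a i
  have hsum : ∑ a, (lap W * Y) a j = 0 := by
    simp_rw [mul_apply]
    rw [sum_comm]
    simp [← sum_mul, sum_lap_apply_left hsym]
  have hn : (n : ℝ) ≠ 0 := Nat.cast_ne_zero.mpr (Fin.pos i).ne'
  have hKij : K i j = (n : ℝ)⁻¹ := by
    have hcolsum : ∑ a, K a j = 1 := by
      simp [hK, Matrix.sub_apply, one_apply, sum_sub_distrib, hsum]
    simp only [hconst, sum_const, card_univ, Fintype.card_fin, nsmul_eq_mul] at hcolsum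
    exact eq_inv_of_mul_eq_one_right hcolsum
  rw [hK, Matrix.sub_apply] at hKij
  linarith

lemma IsHittingTime.mulVec_apply_eq_inv {L : Matrix (Fin n) (Fin n) ℝ} {τ : ℝ} (hτ : τ ≠ 0)
    {m : Fin n → Fin n → ℝ} (hm : IsHittingTime (1 - τ • L) m) {i j : Fin n} (hij : i ≠ j) :
    (L *ᵥ fun k => m k j) i = τ⁻¹ := by
  have h := hm.2 i j hij
  change m i j = 1 + ((1 - τ • L) *ᵥ fun k => m k j) i at h
  rw [sub_mulVec, one_mulVec, smul_mulVec] at h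
  simp only [Pi.sub_apply, Pi.smul_apply, smul_eq_mul] at h
  field_simp
  linarith

lemma IsHittingTime.apply_eq_of_isGroupInverse (hsym : ∀ i j, W i j = W j i) (hnn : ∀ i j, 0 ≤ W i j)
    (hconn : IsConnectedW W) {τ : ℝ} (hτ : τ ≠ 0) {m : Fin n → Fin n → ℝ}
    (hm : IsHittingTime (1 - τ • lap W) m) {Y : Matrix (Fin n) (Fin n) ℝ}
    (hY : IsGroupInverse (lap W) Y) (i j : Fin n) :
    m i j = (n / τ) * (Y j j - Y i j) := by
  set d : Fin n → ℝ := fun k => m k j - (n / τ) * (Y j j - Y k j) with hd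
  have hLd : ∀ k, k ≠ j → (lap W *ᵥ d) k = 0 := fun k hkj => by
    have hm' := hm.mulVec_apply_eq_inv hτ hkj
    have hY' : (lap W *ᵥ fun l => Y l j) k = -(n : ℝ)⁻¹ := by
      rw [← zero_sub, ← one_apply_ne hkj]
      exact lap_mul_apply_of_isGroupInverse hsym hnn hconn hY k j
    rw [lap_mulVec_apply] at hm' hY' ⊢
    have hn : (n : ℝ) ≠ 0 := Nat.cast_ne_zero.mpr (Fin.pos k).ne'
    calc ∑ l, W k l * (d k - d l)
        = ∑ l, W k l * (m k j - m l j) + n / τ * ∑ l, W k l * (Y k j - Y l j) := by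
          rw [mul_sum, ← sum_add_distrib]
          exact sum_congr rfl fun l _ => by rw [hd]; ring
      _ = 0 := by rw [hm', hY']; field_simp; ring
  have := eq_zero_of_lap_mulVec_eq_zero_of_ne hsym hnn hconn (by simp [hd, hm.1]) hLd i
  rw [hd] at this
  linarith

end Laplacian

theorem stmt8_general {n : ℕ} (W : Matrix (Fin n) (Fin n) ℝ)
    (hsym : ∀ i j, W i j = W j i) (hnn : ∀ i j, 0 ≤ W i j)
    (hconn : IsConnectedW W)
    (tau : ℝ) (htau0 : 0 < tau)
    (m : Fin n → Fin n → ℝ) (hm : IsHittingTime (1 - tau • lap W) m)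
    (Y : Matrix (Fin n) (Fin n) ℝ) (hY : IsGroupInverse (lap W) Y) :
    ∀ i j, m i j + m j i = ((n : ℝ) / tau) * (Y i i + Y j j - Y i j - Y j i) := by
  intro i j
  rw [hm.apply_eq_of_isGroupInverse hsym hnn hconn htau0.ne' hY i j,
    hm.apply_eq_of_isGroupInverse hsym hnn hconn htau0.ne' hY j i]
  ring

/-- for the chain with transition matrix `T = I - τ·L̃`,
`0 < τ ≤ (max_i Σ_j w_ij)⁻¹`, the commute times satisfy `C = (n/τ)·Ω`. -/
theorem stmt8 {n : ℕ} (hn : 0 < n) (W : Matrix (Fin n) (Fin n) ℝ)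
    (hsym : ∀ i j, W i j = W j i) (hnn : ∀ i j, 0 ≤ W i j) (h0 : ∀ i, W i i = 0)
    (hconn : IsConnectedW W)
    (tau : ℝ) (htau0 : 0 < tau)
    (htau1 : tau ≤ (Finset.univ.sup' (Finset.univ_nonempty_iff.mpr ⟨⟨0, hn⟩⟩)
      (fun i => ∑ j, W i j))⁻¹)
    (m : Fin n → Fin n → ℝ) (hm : IsHittingTime (1 - tau • lap W) m)
    (Y : Matrix (Fin n) (Fin n) ℝ) (hY : IsGroupInverse (lap W) Y) :
    ∀ i j, m i j + m j i = ((n : ℝ) / tau) * (Y i i + Y j j - Y i j - Y j i) :=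
  stmt8_general W hsym hnn hconn tau htau0 m hm Y hY
end
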